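/- arXiv:2604.09276 — 7 statements merged into one kernel-verified Lean document; each statement's English description precedes it below -/
import Mathlib

section
/- Let C : ℝ^d → ℝ^d be a δ-contractive compressor with δ ∈ (0,1] and let L ≥ 1 be an integer. For every x ∈ ℝ^d, the output of L rounds of fast compressed communication satisfies E[‖FCC(x, C, L) − x‖²] ≤ (1 − δ)^L ‖x‖². -/
open MeasureTheory Real
open scoped ENNReal NNReal BigOperators RealInnerProductSpace

/-- Let `C : ℝ^d → ℝ^d` be a `δ`-contractive compressor (`δ ∈ (0,1]`) and
`L ≥ 1`. For every `x`, the output of `L` rounds of fast compressed communication (FCC),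
i.e. `r¹ = 0`, `r^{k+1} = r^k + C(x - r^k)` for `k = 1, …, L`, satisfies
`E[‖r^{L+1} - x‖²] ≤ (1 - δ)^L ‖x‖²`.

The randomness of the compressor is modelled by a probability space `Ω`; `c k` is the (random)
output of the `k`-th invocation `C(x - r^k)`, and `δ`-contractiveness together with the
independence of the `k`-th invocation from the past is encoded by the expected contraction
hypothesis `hC`. -/
theorem fcc_error_bound
    {d : ℕ} {Ω : Type*} [MeasurableSpace Ω] (μ : Measure Ω) [IsProbabilityMeasure μ]
    (δ : ℝ) (hδ0 : 0 < δ) (hδ1 : δ ≤ 1) (L : ℕ) (hL : 1 ≤ L)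
    (x : EuclideanSpace ℝ (Fin d))
    (r c : ℕ → Ω → EuclideanSpace ℝ (Fin d))
    (hr1 : r 1 = fun _ => 0)
    (hrec : ∀ k, 1 ≤ k → k ≤ L → ∀ ω, r (k + 1) ω = r k ω + c k ω)
    (hC : ∀ k, 1 ≤ k → k ≤ L →
      ∫⁻ ω, (‖c k ω - (x - r k ω)‖₊ : ℝ≥0∞) ^ 2 ∂μ
        ≤ ENNReal.ofReal (1 - δ) * ∫⁻ ω, (‖x - r k ω‖₊ : ℝ≥0∞) ^ 2 ∂μ) :
    ∫⁻ ω, (‖r (L + 1) ω - x‖₊ : ℝ≥0∞) ^ 2 ∂μ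
      ≤ ENNReal.ofReal ((1 - δ) ^ L * ‖x‖ ^ 2) := by

  have h1δ : (0:ℝ) ≤ 1 - δ := by linarith
  have key : ∀ k, k ≤ L →
      ∫⁻ ω, (‖r (k + 1) ω - x‖₊ : ℝ≥0∞) ^ 2 ∂μ
        ≤ ENNReal.ofReal ((1 - δ) ^ k * ‖x‖ ^ 2) := by
    intro k
    induction k with
    | zero =>
      intro _
      have heq : ∫⁻ ω, (‖r (0 + 1) ω - x‖₊ : ℝ≥0∞) ^ 2 ∂μ
          = ∫⁻ _ω, ENNReal.ofReal (‖x‖ ^ 2) ∂μ := by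
        refine lintegral_congr fun ω => ?_
        simp only [hr1]
        rw [zero_sub, nnnorm_neg, ← enorm_eq_nnnorm, ← ofReal_norm,
          ← ENNReal.ofReal_pow (norm_nonneg x)]
      rw [heq, lintegral_const, measure_univ, mul_one]
      simp
    | succ k ih =>
      intro hk
      have hk1 : 1 ≤ k + 1 := Nat.succ_le_succ (Nat.zero_le k)
      have heq : ∀ ω, r (k + 1 + 1) ω - x = c (k + 1) ω - (x - r (k + 1) ω) := by
        intro ω
        rw [hrec (k + 1) hk1 hk ω]
        abel
      calc ∫⁻ ω, (‖r (k + 1 + 1) ω - x‖₊ : ℝ≥0∞) ^ 2 ∂μ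
          = ∫⁻ ω, (‖c (k + 1) ω - (x - r (k + 1) ω)‖₊ : ℝ≥0∞) ^ 2 ∂μ := by
            simp only [heq]
        _ ≤ ENNReal.ofReal (1 - δ) * ∫⁻ ω, (‖x - r (k + 1) ω‖₊ : ℝ≥0∞) ^ 2 ∂μ :=
            hC (k + 1) hk1 hk
        _ = ENNReal.ofReal (1 - δ) * ∫⁻ ω, (‖r (k + 1) ω - x‖₊ : ℝ≥0∞) ^ 2 ∂μ := by
            congr 1; refine lintegral_congr fun ω => ?_
            rw [← nnnorm_neg, neg_sub]
        _ ≤ ENNReal.ofReal (1 - δ) * ENNReal.ofReal ((1 - δ) ^ k * ‖x‖ ^ 2) :=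
            mul_le_mul_right (ih (le_of_lt (Nat.lt_of_succ_le hk))) _
        _ = ENNReal.ofReal ((1 - δ) ^ (k + 1) * ‖x‖ ^ 2) := by
            rw [← ENNReal.ofReal_mul h1δ]
            ring_nf
  exact key L le_rfl
end

section
/- Let W ⊆ ℝ^d be a compact convex set with 0 ∈ W and ‖x − y‖ ≤ D for all x, y ∈ W, let g¹, …, g^T ∈ ℝ^d satisfy ‖g^t‖ ≤ G for all t, and let η > 0. Define ŵ¹ = 0 and ŵ^{t+1} = argmin_{w ∈ W} ⟨Σ_{k=1}^t g^k, w⟩ + (1/η)‖w‖² for t ≥ 1. Then for every w ∈ W, Σ_{t=1}^T ⟨g^t, ŵ^t − w⟩ ≤ ηG²T/2 + D²/η. -/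
/-!
Write `F_t(u) = ⟨g¹ + ⋯ + gᵗ, u⟩ + ‖u‖²/η`, so that `ŵᵗ⁺¹` minimizes `F_t` on `W`. Summing
`⟨gᵗ, ŵᵗ⟩ = F_t(ŵᵗ) - F_{t-1}(ŵᵗ)` telescopes the minimal values `F_t(ŵᵗ⁺¹)`, which gives the
FTRL lemma: the regret against `w` is at most `‖w‖²/η - ‖ŵ¹‖²/η + Σ_t (F_t(ŵᵗ) - F_t(ŵᵗ⁺¹))`.
Since `F_{t-1}` is `(1/η)`-strongly convex and minimized at `ŵᵗ`, each summand is at most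
`G r - r²/(2η) ≤ ηG²/2` with `r = ‖ŵᵗ - ŵᵗ⁺¹‖`, and `‖w‖ ≤ D` because `0 ∈ W`.
-/

open scoped RealInnerProductSpace

namespace FTRL

open Finset

variable {E : Type*}

def objective (ℓ : ℕ → E → ℝ) (R : E → ℝ) (t : ℕ) (u : E) : ℝ :=
  ∑ k ∈ Icc 1 t, ℓ k u + R u

theorem objective_zero (ℓ : ℕ → E → ℝ) (R : E → ℝ) (u : E) : objective ℓ R 0 u = R u := by
  simp [objective]

theorem objective_succ (ℓ : ℕ → E → ℝ) (R : E → ℝ) (t : ℕ) (u : E) :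
    objective ℓ R (t + 1) u = objective ℓ R t u + ℓ (t + 1) u := by
  simp only [objective, sum_Icc_succ_top (Nat.le_add_left 1 t)]
  ring

theorem sum_loss_eq (ℓ : ℕ → E → ℝ) (R : E → ℝ) (x : ℕ → E) (T : ℕ) :
    ∑ t ∈ Icc 1 T, ℓ t (x t) =
      ∑ t ∈ Icc 1 T, (objective ℓ R t (x t) - objective ℓ R t (x (t + 1)))
        + objective ℓ R T (x (T + 1)) - R (x 1) := by
  induction T with
  | zero => simp [objective_zero]
  | succ T ih =>
    rw [sum_Icc_succ_top (Nat.le_add_left 1 T), sum_Icc_succ_top (Nat.le_add_left 1 T), ih,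
      objective_succ ℓ R T (x (T + 1))]
    ring

theorem regret_le (ℓ : ℕ → E → ℝ) (R : E → ℝ) (x : ℕ → E) (T : ℕ) {W : Set E}
    (hmin : IsMinOn (objective ℓ R T) W (x (T + 1))) {w : E} (hw : w ∈ W) :
    ∑ t ∈ Icc 1 T, (ℓ t (x t) - ℓ t w) ≤ R w - R (x 1) +
      ∑ t ∈ Icc 1 T, (objective ℓ R t (x t) - objective ℓ R t (x (t + 1))) := by
  have hlast : objective ℓ R T (x (T + 1)) ≤ ∑ t ∈ Icc 1 T, ℓ t w + R w := hmin hw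
  rw [sum_sub_distrib, sum_loss_eq ℓ R x T]
  linarith

theorem objective_linear [NormedAddCommGroup E] [InnerProductSpace ℝ E] (g : ℕ → E)
    (R : E → ℝ) (t : ℕ) :
    objective (fun k v ↦ ⟪g k, v⟫) R t = fun u ↦ ⟪∑ k ∈ Icc 1 t, g k, u⟫ + R u := by
  ext u
  simp [objective, sum_inner]

end FTRL

theorem mul_sub_sq_div_le {η : ℝ} (hη : 0 < η) (a r : ℝ) :
    a * r - r ^ 2 / (2 * η) ≤ η * a ^ 2 / 2 := by
  have hsq : η * a ^ 2 / 2 - (a * r - r ^ 2 / (2 * η)) = (r - η * a) ^ 2 / (2 * η) := by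
    field_simp
    ring
  have : 0 ≤ (r - η * a) ^ 2 / (2 * η) := by positivity
  linarith

section QuadraticRegularizer

variable {E : Type*} [NormedAddCommGroup E] [InnerProductSpace ℝ E] {W : Set E} {x y : E}

theorem norm_midpoint_sq (x y : E) :
    ‖(1 / 2 : ℝ) • x + (1 / 2 : ℝ) • y‖ ^ 2 =
      ‖x‖ ^ 2 / 2 + ‖y‖ ^ 2 / 2 - ‖x - y‖ ^ 2 / 4 := by
  rw [← smul_add, norm_smul, mul_pow, norm_add_sq_real, norm_sub_sq_real]
  norm_num
  ring

/-- Comparing the minimum with the value at the midpoint of `x` and `y`. -/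
theorem IsMinOn.inner_add_mul_norm_sq_add_le {L : E} {c : ℝ} (hW : Convex ℝ W)
    (hmin : IsMinOn (fun u ↦ ⟪L, u⟫ + c * ‖u‖ ^ 2) W x) (hx : x ∈ W) (hy : y ∈ W) :
    ⟪L, x⟫ + c * ‖x‖ ^ 2 + c / 2 * ‖x - y‖ ^ 2 ≤ ⟪L, y⟫ + c * ‖y‖ ^ 2 := by
  have hmid : (1 / 2 : ℝ) • x + (1 / 2 : ℝ) • y ∈ W :=
    hW hx hy (by norm_num) (by norm_num) (by norm_num)
  replace hmid := hmin hmid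
  simp only [Set.mem_ofPred_eq, inner_add_right, real_inner_smul_right,
    norm_midpoint_sq] at hmid
  linarith

theorem FTRL.objective_succ_sub_le {η : ℝ} (hη : 0 < η) (hW : Convex ℝ W) (g : ℕ → E) (t : ℕ)
    (hmin : IsMinOn (FTRL.objective (fun k v ↦ ⟪g k, v⟫) (fun v ↦ 1 / η * ‖v‖ ^ 2) t) W x)
    (hx : x ∈ W) (hy : y ∈ W) :
    FTRL.objective (fun k v ↦ ⟪g k, v⟫) (fun v ↦ 1 / η * ‖v‖ ^ 2) (t + 1) x -
        FTRL.objective (fun k v ↦ ⟪g k, v⟫) (fun v ↦ 1 / η * ‖v‖ ^ 2) (t + 1) y ≤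
      η * ‖g (t + 1)‖ ^ 2 / 2 := by
  rw [FTRL.objective_linear] at hmin
  have hstrong := hmin.inner_add_mul_norm_sq_add_le hW hx hy
  have hcs : ⟪g (t + 1), x - y⟫ ≤ ‖g (t + 1)‖ * ‖x - y‖ := real_inner_le_norm _ _
  have hscalar := mul_sub_sq_div_le hη ‖g (t + 1)‖ ‖x - y‖
  have hcoeff : 1 / η / 2 * ‖x - y‖ ^ 2 = ‖x - y‖ ^ 2 / (2 * η) := by ring
  simp only [FTRL.objective_succ, FTRL.objective_linear]
  rw [inner_sub_right] at hcs
  linarith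

end QuadraticRegularizer

theorem ftrl_linear_regret_general
    {d T : ℕ} (W : Set (EuclideanSpace ℝ (Fin d)))
    (hWconv : Convex ℝ W)
    (hW0 : (0 : EuclideanSpace ℝ (Fin d)) ∈ W)
    (D G η : ℝ) (hη : 0 < η)
    (hdiam : ∀ x ∈ W, ∀ y ∈ W, ‖x - y‖ ≤ D)
    (g : ℕ → EuclideanSpace ℝ (Fin d))
    (hG : ∀ t ∈ Finset.Icc 1 T, ‖g t‖ ≤ G)
    (wh : ℕ → EuclideanSpace ℝ (Fin d)) (hwh1 : wh 1 = 0)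
    (hwhW : ∀ t ∈ Finset.Icc 1 T, wh (t + 1) ∈ W)
    (hwh : ∀ t ∈ Finset.Icc 1 T, ∀ u ∈ W,
      ⟪∑ k ∈ Finset.Icc 1 t, g k, wh (t + 1)⟫ + (1 / η) * ‖wh (t + 1)‖ ^ 2
        ≤ ⟪∑ k ∈ Finset.Icc 1 t, g k, u⟫ + (1 / η) * ‖u‖ ^ 2) :
    ∀ w ∈ W, ∑ t ∈ Finset.Icc 1 T, ⟪g t, wh t - w⟫ ≤ η * G ^ 2 * T / 2 + D ^ 2 / η := by
  intro w hw
  set F := FTRL.objective (fun t u ↦ ⟪g t, u⟫) (fun u ↦ 1 / η * ‖u‖ ^ 2)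
  have hmin : ∀ t ≤ T, IsMinOn (F t) W (wh (t + 1)) := by
    rintro (_ | t) ht u hu
    · simp only [Set.mem_ofPred_eq, F, FTRL.objective_zero, hwh1, norm_zero]
      gcongr
      exact norm_nonneg u
    · simp only [F, FTRL.objective_linear]
      exact hwh (t + 1) (Finset.mem_Icc.2 ⟨by omega, ht⟩) u hu
  have hmem : ∀ t ≤ T, wh (t + 1) ∈ W := by
    rintro (_ | t) ht
    · simpa [hwh1] using hW0
    · exact hwhW (t + 1) (Finset.mem_Icc.2 ⟨by omega, ht⟩)
  have hstep : ∀ t ∈ Finset.Icc 1 T, F t (wh t) - F t (wh (t + 1)) ≤ η * G ^ 2 / 2 := by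
    rintro (_ | t) ht
    · simp at ht
    obtain ⟨-, htT⟩ := Finset.mem_Icc.1 ht
    calc F (t + 1) (wh (t + 1)) - F (t + 1) (wh (t + 1 + 1))
        ≤ η * ‖g (t + 1)‖ ^ 2 / 2 :=
          FTRL.objective_succ_sub_le hη hWconv g t (hmin t (by omega)) (hmem t (by omega))
            (hmem (t + 1) htT)
      _ ≤ η * G ^ 2 / 2 := by gcongr; exact hG (t + 1) ht
  have hwD : 1 / η * ‖w‖ ^ 2 ≤ D ^ 2 / η := by
    have : ‖w‖ ≤ D := by simpa using hdiam w hw 0 hW0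
    rw [one_div_mul_eq_div]
    gcongr
  calc ∑ t ∈ Finset.Icc 1 T, ⟪g t, wh t - w⟫
      = ∑ t ∈ Finset.Icc 1 T, (⟪g t, wh t⟫ - ⟪g t, w⟫) := by simp only [inner_sub_right]
    _ ≤ 1 / η * ‖w‖ ^ 2 - 1 / η * ‖wh 1‖ ^ 2
          + ∑ t ∈ Finset.Icc 1 T, (F t (wh t) - F t (wh (t + 1))) :=
      FTRL.regret_le _ _ wh T (hmin T le_rfl) hw
    _ ≤ D ^ 2 / η + ∑ _t ∈ Finset.Icc 1 T, η * G ^ 2 / 2 := by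
      rw [hwh1, norm_zero]
      exact add_le_add (by linarith) (Finset.sum_le_sum hstep)
    _ = η * G ^ 2 * T / 2 + D ^ 2 / η := by
      rw [Finset.sum_const, Nat.card_Icc, Nat.add_sub_cancel, nsmul_eq_mul]
      ring

/-- FTRL with quadratic regularizer, linear losses. Let `W ⊆ ℝ^d` be a
compact convex set with `0 ∈ W` and `‖x − y‖ ≤ D` on `W`, let `‖g^t‖ ≤ G`, `η > 0`, and let
`wh¹ = 0`, `wh^{t+1} = argmin_{w ∈ W} ⟨Σ_{k=1}^t g^k, w⟩ + (1/η)‖w‖²`. Then for every `w ∈ W`,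
`Σ_{t=1}^T ⟨g^t, wh^t − w⟩ ≤ ηG²T/2 + D²/η`. -/
theorem ftrl_linear_regret
    {d T : ℕ} (W : Set (EuclideanSpace ℝ (Fin d)))
    (hWcpt : IsCompact W) (hWconv : Convex ℝ W)
    (hW0 : (0 : EuclideanSpace ℝ (Fin d)) ∈ W)
    (D G η : ℝ) (hη : 0 < η)
    (hdiam : ∀ x ∈ W, ∀ y ∈ W, ‖x - y‖ ≤ D)
    (g : ℕ → EuclideanSpace ℝ (Fin d))
    (hG : ∀ t ∈ Finset.Icc 1 T, ‖g t‖ ≤ G)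
    (wh : ℕ → EuclideanSpace ℝ (Fin d)) (hwh1 : wh 1 = 0)
    (hwhW : ∀ t ∈ Finset.Icc 1 T, wh (t + 1) ∈ W)
    (hwh : ∀ t ∈ Finset.Icc 1 T, ∀ u ∈ W,
      ⟪∑ k ∈ Finset.Icc 1 t, g k, wh (t + 1)⟫ + (1 / η) * ‖wh (t + 1)‖ ^ 2
        ≤ ⟪∑ k ∈ Finset.Icc 1 t, g k, u⟫ + (1 / η) * ‖u‖ ^ 2) :
    ∀ w ∈ W, ∑ t ∈ Finset.Icc 1 T, ⟪g t, wh t - w⟫ ≤ η * G ^ 2 * T / 2 + D ^ 2 / η :=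
  ftrl_linear_regret_general W hWconv hW0 D G η hη hdiam g hG wh hwh1 hwhW hwh
end

section
/- Let C : ℝ^d → ℝ^d be a δ-contractive compressor and let g_i^t ∈ ℝ^d (i ∈ {1,…,n}, t ≥ 1) be random vectors with ‖g_i^t‖ ≤ G almost surely, where g_i^t may depend only on compressor invocations from rounds before t. Define e_i¹ = 0 and e_i^{t+1} = e_i^t + g_i^t − C(e_i^t + g_i^t). Then for every t ≥ 1, (1/n) Σ_{i=1}^n E[‖e_i^{t+1}‖²] ≤ 4(1 − δ)G²/δ², and consequently E[‖(1/n) Σ_{i=1}^n e_i^{t+1}‖²] ≤ 4(1 − δ)G²/δ². -/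
open MeasureTheory Real
open scoped ENNReal NNReal BigOperators RealInnerProductSpace

private lemma young_norm_sq {E : Type*} [NormedAddCommGroup E] (β : ℝ) (hβ : 0 < β)
    (x y : E) : ‖x + y‖ ^ 2 ≤ (1 + β) * ‖x‖ ^ 2 + (1 + 1/β) * ‖y‖ ^ 2 := by
  have h1 : ‖x + y‖ ≤ ‖x‖ + ‖y‖ := norm_add_le _ _
  have h2 : ‖x + y‖ ^ 2 ≤ (‖x‖ + ‖y‖) ^ 2 := by
    nlinarith [norm_nonneg (x + y), norm_nonneg x, norm_nonneg y]
  have h3 : β * (1/β) = 1 := mul_one_div_cancel hβ.ne'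
  nlinarith [mul_nonneg (one_div_pos.mpr hβ).le (sq_nonneg (β * ‖x‖ - ‖y‖)), h3,
    sq_nonneg (β * ‖x‖ - ‖y‖), mul_pos hβ hβ]

private lemma nnnorm_sq_eq_ofReal {E : Type*} [NormedAddCommGroup E] (x : E) :
    (‖x‖₊ : ℝ≥0∞) ^ 2 = ENNReal.ofReal (‖x‖ ^ 2) := by
  rw [ENNReal.ofReal_pow (norm_nonneg _), ofReal_norm, enorm_eq_nnnorm]

/-- learner-side error-feedback bound for D-FTCL. Let `C` be a
`δ`-contractive compressor and `g_i^t` random vectors with `‖g_i^t‖ ≤ G` a.s. With the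
error-feedback recursion `e_i¹ = 0`, `e_i^{t+1} = e_i^t + g_i^t − C(e_i^t + g_i^t)`, one has
for every `t ≥ 1` that `(1/n) Σ_i E[‖e_i^{t+1}‖²] ≤ 4(1−δ)G²/δ²`, and consequently
`E[‖(1/n) Σ_i e_i^{t+1}‖²] ≤ 4(1−δ)G²/δ²`.

The compressor output `C(e_i^t + g_i^t)` is the random vector `v i t`; `δ`-contractiveness
of `C` together with the independence of the fresh randomness of each invocation from the
past (so that `g_i^t` may depend only on invocations from rounds before `t`) is encoded by
the expected contraction hypothesis `hC`. -/
theorem dftcl_learner_error_bound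
    {d n : ℕ} (hn : 1 ≤ n)
    {Ω : Type*} [MeasurableSpace Ω] (μ : Measure Ω) [IsProbabilityMeasure μ]
    (δ G : ℝ) (hδ0 : 0 < δ) (hδ1 : δ ≤ 1)
    (g v e : ℕ → ℕ → Ω → EuclideanSpace ℝ (Fin d))
    (hmg : ∀ i t, Measurable (g i t)) (hmv : ∀ i t, Measurable (v i t))
    (hG : ∀ i ∈ Finset.Icc 1 n, ∀ t, 1 ≤ t → ∀ᵐ ω ∂μ, ‖g i t ω‖ ≤ G)
    (he1 : ∀ i, e i 1 = fun _ => 0)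
    (herec : ∀ i, ∀ t, 1 ≤ t → ∀ ω, e i (t + 1) ω = e i t ω + g i t ω - v i t ω)
    (hC : ∀ i ∈ Finset.Icc 1 n, ∀ t, 1 ≤ t →
      ∫⁻ ω, (‖v i t ω - (e i t ω + g i t ω)‖₊ : ℝ≥0∞) ^ 2 ∂μ
        ≤ ENNReal.ofReal (1 - δ) * ∫⁻ ω, (‖e i t ω + g i t ω‖₊ : ℝ≥0∞) ^ 2 ∂μ) :
    ∀ t, 1 ≤ t →
      (n : ℝ≥0∞)⁻¹ * ∑ i ∈ Finset.Icc 1 n, ∫⁻ ω, (‖e i (t + 1) ω‖₊ : ℝ≥0∞) ^ 2 ∂μ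
          ≤ ENNReal.ofReal (4 * (1 - δ) * G ^ 2 / δ ^ 2) ∧
        ∫⁻ ω, (‖(n : ℝ)⁻¹ • ∑ i ∈ Finset.Icc 1 n, e i (t + 1) ω‖₊ : ℝ≥0∞) ^ 2 ∂μ
          ≤ ENNReal.ofReal (4 * (1 - δ) * G ^ 2 / δ ^ 2) := by
  classical
  set K : ℝ := 4 * (1 - δ) * G ^ 2 / δ ^ 2 with hKdef
  have hG0 : 0 ≤ G := by
    obtain ⟨ω, hω⟩ := (hG 1 (Finset.mem_Icc.mpr ⟨le_rfl, hn⟩) 1 le_rfl).exists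
    exact (norm_nonneg _).trans hω
  -- measurability of the errors
  have hme : ∀ i, ∀ t, 1 ≤ t → Measurable (e i t) := by
    intro i t
    induction t with
    | zero => omega
    | succ s ih =>
      intro _
      rcases Nat.eq_zero_or_pos s with hs | hs
      · subst hs; rw [he1]; exact measurable_const
      · have : e i (s + 1) = fun ω => e i s ω + g i s ω - v i s ω :=
          funext (herec i s hs)
        rw [this]
        exact ((ih hs).add (hmg i s)).sub (hmv i s)
  -- second moment bound for the gradients
  have hgI : ∀ i ∈ Finset.Icc 1 n, ∀ t, 1 ≤ t →
      ∫⁻ ω, (‖g i t ω‖₊ : ℝ≥0∞) ^ 2 ∂μ ≤ ENNReal.ofReal (G ^ 2) := by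
    intro i hi t ht
    calc ∫⁻ ω, (‖g i t ω‖₊ : ℝ≥0∞) ^ 2 ∂μ
        ≤ ∫⁻ _, ENNReal.ofReal (G ^ 2) ∂μ := by
          refine lintegral_mono_ae ((hG i hi t ht).mono fun ω hω => ?_)
          rw [nnnorm_sq_eq_ofReal]
          exact ENNReal.ofReal_le_ofReal (by nlinarith [norm_nonneg (g i t ω)])
      _ = ENNReal.ofReal (G ^ 2) := by simp
  -- the per-agent key bound
  have key : ∀ t, 1 ≤ t → ∀ i ∈ Finset.Icc 1 n,
      ∫⁻ ω, (‖e i t ω‖₊ : ℝ≥0∞) ^ 2 ∂μ ≤ ENNReal.ofReal K := by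
    intro t ht
    induction t, ht using Nat.le_induction with
    | base =>
      intro i _
      rw [he1]
      simp
    | succ t ht ih =>
      intro i hi
      have hstep1 : ∫⁻ ω, (‖e i (t + 1) ω‖₊ : ℝ≥0∞) ^ 2 ∂μ
          = ∫⁻ ω, (‖v i t ω - (e i t ω + g i t ω)‖₊ : ℝ≥0∞) ^ 2 ∂μ := by
        refine lintegral_congr fun ω => ?_
        rw [herec i t ht ω,
          show e i t ω + g i t ω - v i t ω = -(v i t ω - (e i t ω + g i t ω)) by abel,
          nnnorm_neg]
      rcases eq_or_lt_of_le hδ1 with hδe | hδl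
      · calc ∫⁻ ω, (‖e i (t + 1) ω‖₊ : ℝ≥0∞) ^ 2 ∂μ
            = ∫⁻ ω, (‖v i t ω - (e i t ω + g i t ω)‖₊ : ℝ≥0∞) ^ 2 ∂μ := hstep1
          _ ≤ ENNReal.ofReal (1 - δ) * ∫⁻ ω, (‖e i t ω + g i t ω‖₊ : ℝ≥0∞) ^ 2 ∂μ :=
              hC i hi t ht
          _ = 0 := by rw [hδe]; simp
          _ ≤ ENNReal.ofReal K := by positivity
      · set β : ℝ := δ / (2 * (1 - δ)) with hβdef
        have h1δ : 0 < 1 - δ := by linarith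
        have hβ : 0 < β := div_pos hδ0 (by linarith)
        have hβi : 0 < 1 + 1/β := by positivity
        have young : ∀ ω : Ω, (‖e i t ω + g i t ω‖₊ : ℝ≥0∞) ^ 2
            ≤ ENNReal.ofReal (1 + β) * (‖e i t ω‖₊ : ℝ≥0∞) ^ 2
              + ENNReal.ofReal (1 + 1/β) * (‖g i t ω‖₊ : ℝ≥0∞) ^ 2 := by
          intro ω
          rw [nnnorm_sq_eq_ofReal, nnnorm_sq_eq_ofReal, nnnorm_sq_eq_ofReal,
            ← ENNReal.ofReal_mul (by positivity), ← ENNReal.ofReal_mul hβi.le,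
            ← ENNReal.ofReal_add (by positivity) (by positivity)]
          exact ENNReal.ofReal_le_ofReal (young_norm_sq β hβ _ _)
        have hmid : ∫⁻ ω, (‖e i t ω + g i t ω‖₊ : ℝ≥0∞) ^ 2 ∂μ
            ≤ ENNReal.ofReal (1 + β) * ENNReal.ofReal K
              + ENNReal.ofReal (1 + 1/β) * ENNReal.ofReal (G ^ 2) := by
          calc ∫⁻ ω, (‖e i t ω + g i t ω‖₊ : ℝ≥0∞) ^ 2 ∂μ
              ≤ ∫⁻ ω, (ENNReal.ofReal (1 + β) * (‖e i t ω‖₊ : ℝ≥0∞) ^ 2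
                  + ENNReal.ofReal (1 + 1/β) * (‖g i t ω‖₊ : ℝ≥0∞) ^ 2) ∂μ :=
                lintegral_mono young
            _ = ENNReal.ofReal (1 + β) * ∫⁻ ω, (‖e i t ω‖₊ : ℝ≥0∞) ^ 2 ∂μ
                  + ENNReal.ofReal (1 + 1/β) * ∫⁻ ω, (‖g i t ω‖₊ : ℝ≥0∞) ^ 2 ∂μ := by
                rw [lintegral_add_left (((hme i t ht).nnnorm.coe_nnreal_ennreal.pow_const 2).const_mul _),
                  lintegral_const_mul' _ _ ENNReal.ofReal_ne_top,
                  lintegral_const_mul' _ _ ENNReal.ofReal_ne_top]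
            _ ≤ _ := add_le_add (mul_le_mul_right (ih i hi) _)
                  (mul_le_mul_right (hgI i hi t ht) _)
        have hfin : (1 - δ) * ((1 + β) * K + (1 + 1/β) * G ^ 2) ≤ K := by
          have heq : (1 - δ) * ((1 + β) * K + (1 + 1/β) * G ^ 2) = K - (1 - δ) * G ^ 2 := by
            rw [hβdef, hKdef]
            field_simp
            ring
          nlinarith [sq_nonneg G]
        calc ∫⁻ ω, (‖e i (t + 1) ω‖₊ : ℝ≥0∞) ^ 2 ∂μ
            = ∫⁻ ω, (‖v i t ω - (e i t ω + g i t ω)‖₊ : ℝ≥0∞) ^ 2 ∂μ := hstep1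
          _ ≤ ENNReal.ofReal (1 - δ) * ∫⁻ ω, (‖e i t ω + g i t ω‖₊ : ℝ≥0∞) ^ 2 ∂μ :=
              hC i hi t ht
          _ ≤ ENNReal.ofReal (1 - δ) * (ENNReal.ofReal (1 + β) * ENNReal.ofReal K
                + ENNReal.ofReal (1 + 1/β) * ENNReal.ofReal (G ^ 2)) :=
              mul_le_mul_right hmid _
          _ = ENNReal.ofReal ((1 - δ) * ((1 + β) * K + (1 + 1/β) * G ^ 2)) := by
              rw [← ENNReal.ofReal_mul (by positivity), ← ENNReal.ofReal_mul hβi.le,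
                ← ENNReal.ofReal_add (by positivity) (by positivity),
                ← ENNReal.ofReal_mul h1δ.le]
          _ ≤ ENNReal.ofReal K := ENNReal.ofReal_le_ofReal hfin
  intro t ht
  have hn0 : (n : ℝ≥0∞) ≠ 0 := Nat.cast_ne_zero.mpr (by omega)
  have hsum : ∑ i ∈ Finset.Icc 1 n, ∫⁻ ω, (‖e i (t + 1) ω‖₊ : ℝ≥0∞) ^ 2 ∂μ
      ≤ (n : ℝ≥0∞) * ENNReal.ofReal K := by
    calc ∑ i ∈ Finset.Icc 1 n, ∫⁻ ω, (‖e i (t + 1) ω‖₊ : ℝ≥0∞) ^ 2 ∂μ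
        ≤ ∑ _i ∈ Finset.Icc 1 n, ENNReal.ofReal K :=
          Finset.sum_le_sum (key (t + 1) (by omega))
      _ = (n : ℝ≥0∞) * ENNReal.ofReal K := by
          rw [Finset.sum_const, Nat.card_Icc]
          simp [nsmul_eq_mul]
  have hpart1 : (n : ℝ≥0∞)⁻¹ * ∑ i ∈ Finset.Icc 1 n,
      ∫⁻ ω, (‖e i (t + 1) ω‖₊ : ℝ≥0∞) ^ 2 ∂μ ≤ ENNReal.ofReal K := by
    calc (n : ℝ≥0∞)⁻¹ * ∑ i ∈ Finset.Icc 1 n, ∫⁻ ω, (‖e i (t + 1) ω‖₊ : ℝ≥0∞) ^ 2 ∂μ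
        ≤ (n : ℝ≥0∞)⁻¹ * ((n : ℝ≥0∞) * ENNReal.ofReal K) := mul_le_mul_right hsum _
      _ = ENNReal.ofReal K := by
          rw [← mul_assoc, ENNReal.inv_mul_cancel hn0 (ENNReal.natCast_ne_top n), one_mul]
  refine ⟨hpart1, ?_⟩
  have hnr : (0 : ℝ) < n := by exact_mod_cast (by omega : 0 < n)
  have hpt : ∀ ω : Ω, (‖(n : ℝ)⁻¹ • ∑ i ∈ Finset.Icc 1 n, e i (t + 1) ω‖₊ : ℝ≥0∞) ^ 2
      ≤ (n : ℝ≥0∞)⁻¹ * ∑ i ∈ Finset.Icc 1 n, (‖e i (t + 1) ω‖₊ : ℝ≥0∞) ^ 2 := by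
    intro ω
    have hreal : ‖(n : ℝ)⁻¹ • ∑ i ∈ Finset.Icc 1 n, e i (t + 1) ω‖ ^ 2
        ≤ (n : ℝ)⁻¹ * ∑ i ∈ Finset.Icc 1 n, ‖e i (t + 1) ω‖ ^ 2 := by
      have h1 : ‖∑ i ∈ Finset.Icc 1 n, e i (t + 1) ω‖
          ≤ ∑ i ∈ Finset.Icc 1 n, ‖e i (t + 1) ω‖ := norm_sum_le _ _
      have h2 : (∑ i ∈ Finset.Icc 1 n, ‖e i (t + 1) ω‖) ^ 2
          ≤ (n : ℝ) * ∑ i ∈ Finset.Icc 1 n, ‖e i (t + 1) ω‖ ^ 2 := by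
        have := sq_sum_le_card_mul_sum_sq (s := Finset.Icc 1 n)
          (f := fun i => ‖e i (t + 1) ω‖)
        simpa [Nat.card_Icc] using this
      have h3 : ‖∑ i ∈ Finset.Icc 1 n, e i (t + 1) ω‖ ^ 2
          ≤ (n : ℝ) * ∑ i ∈ Finset.Icc 1 n, ‖e i (t + 1) ω‖ ^ 2 :=
        le_trans (pow_le_pow_left₀ (norm_nonneg _) h1 2) h2
      rw [norm_smul, mul_pow, norm_inv, Real.norm_natCast]
      calc ((n : ℝ)⁻¹) ^ 2 * ‖∑ i ∈ Finset.Icc 1 n, e i (t + 1) ω‖ ^ 2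
          ≤ ((n : ℝ)⁻¹) ^ 2 * ((n : ℝ) * ∑ i ∈ Finset.Icc 1 n, ‖e i (t + 1) ω‖ ^ 2) := by
            gcongr
        _ = (n : ℝ)⁻¹ * ∑ i ∈ Finset.Icc 1 n, ‖e i (t + 1) ω‖ ^ 2 := by
            field_simp
    calc (‖(n : ℝ)⁻¹ • ∑ i ∈ Finset.Icc 1 n, e i (t + 1) ω‖₊ : ℝ≥0∞) ^ 2
        = ENNReal.ofReal (‖(n : ℝ)⁻¹ • ∑ i ∈ Finset.Icc 1 n, e i (t + 1) ω‖ ^ 2) :=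
          nnnorm_sq_eq_ofReal _
      _ ≤ ENNReal.ofReal ((n : ℝ)⁻¹ * ∑ i ∈ Finset.Icc 1 n, ‖e i (t + 1) ω‖ ^ 2) :=
          ENNReal.ofReal_le_ofReal hreal
      _ = ENNReal.ofReal ((n : ℝ)⁻¹)
            * ENNReal.ofReal (∑ i ∈ Finset.Icc 1 n, ‖e i (t + 1) ω‖ ^ 2) :=
          ENNReal.ofReal_mul (by positivity)
      _ = (n : ℝ≥0∞)⁻¹ * ∑ i ∈ Finset.Icc 1 n, (‖e i (t + 1) ω‖₊ : ℝ≥0∞) ^ 2 := by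
          rw [ENNReal.ofReal_inv_of_pos hnr, ENNReal.ofReal_natCast]
          congr 1
          rw [ENNReal.ofReal_sum_of_nonneg (fun i _ => by positivity)]
          exact Finset.sum_congr rfl fun i _ => (nnnorm_sq_eq_ofReal _).symm
  calc ∫⁻ ω, (‖(n : ℝ)⁻¹ • ∑ i ∈ Finset.Icc 1 n, e i (t + 1) ω‖₊ : ℝ≥0∞) ^ 2 ∂μ
      ≤ ∫⁻ ω, (n : ℝ≥0∞)⁻¹ * ∑ i ∈ Finset.Icc 1 n, (‖e i (t + 1) ω‖₊ : ℝ≥0∞) ^ 2 ∂μ :=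
        lintegral_mono hpt
    _ = (n : ℝ≥0∞)⁻¹ * ∑ i ∈ Finset.Icc 1 n, ∫⁻ ω, (‖e i (t + 1) ω‖₊ : ℝ≥0∞) ^ 2 ∂μ := by
        rw [lintegral_const_mul' _ _ (ENNReal.inv_ne_top.mpr hn0),
          lintegral_finset_sum _ fun i _ => (hme i (t + 1) (by omega)).nnnorm.coe_nnreal_ennreal.pow_const 2]
    _ ≤ ENNReal.ofReal K := hpart1
end

section
/- Let C : ℝ^d → ℝ^d be a δ-contractive compressor and let g_i^t ∈ ℝ^d (i ∈ {1,…,n}, t ≥ 1) satisfy ‖g_i^t‖ ≤ G almost surely, with g_i^t depending only on compressor invocations from rounds before t. Define, as in D-FTCL, e_i¹ = 0, v_i^t = C(e_i^t + g_i^t), e_i^{t+1} = e_i^t + g_i^t − v_i^t, v^t = (1/n) Σ_{i=1}^n v_i^t, ê¹ = 0, s^t = C(ê^t + v^t), and ê^{t+1} = ê^t + v^t − s^t. Then for every t ≥ 1, E[‖ê^{t+1}‖²] ≤ 160(1 − δ)G²/δ⁴. -/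
open MeasureTheory Real
open scoped ENNReal NNReal BigOperators RealInnerProductSpace

section DftclHelpers

variable {Ω : Type*} [MeasurableSpace Ω] {μ : Measure Ω}
variable {E : Type*} [NormedAddCommGroup E] [MeasurableSpace E] [OpensMeasurableSpace E]

lemma dftcl_sq_nnnorm_eq (x : E) : (‖x‖₊ : ℝ≥0∞) ^ 2 = ENNReal.ofReal (‖x‖ ^ 2) := by
  rw [ENNReal.ofReal_pow (norm_nonneg _)]
  exact congrArg (· ^ 2) (ofReal_norm x).symm

lemma dftcl_young_real (x y s : ℝ) (hs : 0 < s) :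
    (x + y) ^ 2 ≤ (1 + s) * x ^ 2 + (1 + 1 / s) * y ^ 2 := by
  have key : ((1 + s) * x ^ 2 + (1 + 1 / s) * y ^ 2 - (x + y) ^ 2) * s = (s * x - y) ^ 2 := by
    field_simp; ring
  nlinarith [sq_nonneg (s * x - y), key, hs]

lemma dftcl_young_lintegral (f h : Ω → E) (hf : Measurable f) (s : ℝ) (hs : 0 < s) :
    ∫⁻ ω, (‖f ω + h ω‖₊ : ℝ≥0∞) ^ 2 ∂μ
      ≤ ENNReal.ofReal (1 + s) * ∫⁻ ω, (‖f ω‖₊ : ℝ≥0∞) ^ 2 ∂μ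
        + ENNReal.ofReal (1 + 1 / s) * ∫⁻ ω, (‖h ω‖₊ : ℝ≥0∞) ^ 2 ∂μ := by
  have hpt : ∀ ω, (‖f ω + h ω‖₊ : ℝ≥0∞) ^ 2
      ≤ ENNReal.ofReal (1 + s) * (‖f ω‖₊ : ℝ≥0∞) ^ 2
        + ENNReal.ofReal (1 + 1 / s) * (‖h ω‖₊ : ℝ≥0∞) ^ 2 := by
    intro ω
    rw [dftcl_sq_nnnorm_eq, dftcl_sq_nnnorm_eq, dftcl_sq_nnnorm_eq,
      ← ENNReal.ofReal_mul (by positivity), ← ENNReal.ofReal_mul (by positivity),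
      ← ENNReal.ofReal_add (by positivity) (by positivity)]
    refine ENNReal.ofReal_le_ofReal ?_
    calc ‖f ω + h ω‖ ^ 2 ≤ (‖f ω‖ + ‖h ω‖) ^ 2 := by
          apply pow_le_pow_left₀ (norm_nonneg _) (norm_add_le _ _)
      _ ≤ _ := dftcl_young_real _ _ s hs
  calc ∫⁻ ω, (‖f ω + h ω‖₊ : ℝ≥0∞) ^ 2 ∂μ
      ≤ ∫⁻ ω, (ENNReal.ofReal (1 + s) * (‖f ω‖₊ : ℝ≥0∞) ^ 2
          + ENNReal.ofReal (1 + 1 / s) * (‖h ω‖₊ : ℝ≥0∞) ^ 2) ∂μ := lintegral_mono hpt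
    _ = _ := by
        rw [lintegral_add_left ((hf.nnnorm.coe_nnreal_ennreal.pow_const 2).const_mul _),
          lintegral_const_mul' _ _ ENNReal.ofReal_ne_top,
          lintegral_const_mul' _ _ ENNReal.ofReal_ne_top]

lemma dftcl_triple_lintegral (f h k : Ω → E) (hf : Measurable f) (hh : Measurable h) :
    ∫⁻ ω, (‖f ω + h ω - k ω‖₊ : ℝ≥0∞) ^ 2 ∂μ
      ≤ ENNReal.ofReal 3 * ∫⁻ ω, (‖f ω‖₊ : ℝ≥0∞) ^ 2 ∂μ
        + (ENNReal.ofReal 3 * ∫⁻ ω, (‖h ω‖₊ : ℝ≥0∞) ^ 2 ∂μ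
        + ENNReal.ofReal 3 * ∫⁻ ω, (‖k ω‖₊ : ℝ≥0∞) ^ 2 ∂μ) := by
  have hpt : ∀ ω, (‖f ω + h ω - k ω‖₊ : ℝ≥0∞) ^ 2
      ≤ ENNReal.ofReal 3 * (‖f ω‖₊ : ℝ≥0∞) ^ 2
        + (ENNReal.ofReal 3 * (‖h ω‖₊ : ℝ≥0∞) ^ 2 + ENNReal.ofReal 3 * (‖k ω‖₊ : ℝ≥0∞) ^ 2) := by
    intro ω
    rw [dftcl_sq_nnnorm_eq, dftcl_sq_nnnorm_eq, dftcl_sq_nnnorm_eq, dftcl_sq_nnnorm_eq,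
      ← ENNReal.ofReal_mul (by norm_num), ← ENNReal.ofReal_mul (by norm_num),
      ← ENNReal.ofReal_mul (by norm_num),
      ← ENNReal.ofReal_add (by positivity) (by positivity),
      ← ENNReal.ofReal_add (by positivity) (by positivity)]
    refine ENNReal.ofReal_le_ofReal ?_
    have hn : ‖f ω + h ω - k ω‖ ≤ ‖f ω‖ + ‖h ω‖ + ‖k ω‖ := by
      calc ‖f ω + h ω - k ω‖ ≤ ‖f ω + h ω‖ + ‖k ω‖ := norm_sub_le _ _
        _ ≤ ‖f ω‖ + ‖h ω‖ + ‖k ω‖ := add_le_add_left (norm_add_le _ _) _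
    calc ‖f ω + h ω - k ω‖ ^ 2 ≤ (‖f ω‖ + ‖h ω‖ + ‖k ω‖) ^ 2 := by
          apply pow_le_pow_left₀ (norm_nonneg _) hn
      _ ≤ _ := by nlinarith [sq_nonneg (‖f ω‖ - ‖h ω‖), sq_nonneg (‖f ω‖ - ‖k ω‖),
            sq_nonneg (‖h ω‖ - ‖k ω‖)]
  calc ∫⁻ ω, (‖f ω + h ω - k ω‖₊ : ℝ≥0∞) ^ 2 ∂μ
      ≤ ∫⁻ ω, (ENNReal.ofReal 3 * (‖f ω‖₊ : ℝ≥0∞) ^ 2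
          + (ENNReal.ofReal 3 * (‖h ω‖₊ : ℝ≥0∞) ^ 2
            + ENNReal.ofReal 3 * (‖k ω‖₊ : ℝ≥0∞) ^ 2)) ∂μ := lintegral_mono hpt
    _ = _ := by
        rw [lintegral_add_left ((hf.nnnorm.coe_nnreal_ennreal.pow_const 2).const_mul _),
          lintegral_add_left ((hh.nnnorm.coe_nnreal_ennreal.pow_const 2).const_mul _),
          lintegral_const_mul' _ _ ENNReal.ofReal_ne_top,
          lintegral_const_mul' _ _ ENNReal.ofReal_ne_top,
          lintegral_const_mul' _ _ ENNReal.ofReal_ne_top]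

lemma dftcl_fixedpt (A : ℕ → ℝ≥0∞) (ρ c K : ℝ≥0∞) (h1 : A 1 ≤ K)
    (hrec : ∀ t, 1 ≤ t → A (t + 1) ≤ ρ * A t + c) (hK : ρ * K + c ≤ K) :
    ∀ t, 1 ≤ t → A t ≤ K := by
  intro t ht
  induction t, ht using Nat.le_induction with
  | base => exact h1
  | succ t ht ih =>
    calc A (t + 1) ≤ ρ * A t + c := hrec t ht
      _ ≤ ρ * K + c := by gcongr
      _ ≤ K := hK

end DftclHelpers

set_option maxHeartbeats 2000000

/-- server-side error-feedback bound for D-FTCL. With the bidirectional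
error-feedback recursions of D-FTCL, `e_i¹ = 0`, `v_i^t = C(e_i^t + g_i^t)`,
`e_i^{t+1} = e_i^t + g_i^t − v_i^t`, `v^t = (1/n) Σ_i v_i^t`, `ê¹ = 0`,
`s^t = C(ê^t + v^t)`, `ê^{t+1} = ê^t + v^t − s^t`, and `‖g_i^t‖ ≤ G` a.s., one has for
every `t ≥ 1` that `E[‖ê^{t+1}‖²] ≤ 160(1−δ)G²/δ⁴`.

`δ`-contractiveness of `C` with independent fresh randomness for each invocation is encoded
by the expected contraction hypotheses `hClearner` and `hCserver`. -/
theorem dftcl_server_error_bound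
    {d n : ℕ} (hn : 1 ≤ n)
    {Ω : Type*} [MeasurableSpace Ω] (μ : Measure Ω) [IsProbabilityMeasure μ]
    (δ G : ℝ) (hδ0 : 0 < δ) (hδ1 : δ ≤ 1)
    (g v e : ℕ → ℕ → Ω → EuclideanSpace ℝ (Fin d))
    (vbar s ehat : ℕ → Ω → EuclideanSpace ℝ (Fin d))
    (hmg : ∀ i t, Measurable (g i t)) (hmv : ∀ i t, Measurable (v i t))
    (hms : ∀ t, Measurable (s t))
    (hG : ∀ i ∈ Finset.Icc 1 n, ∀ t, 1 ≤ t → ∀ᵐ ω ∂μ, ‖g i t ω‖ ≤ G)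
    (he1 : ∀ i, e i 1 = fun _ => 0)
    (herec : ∀ i, ∀ t, 1 ≤ t → ∀ ω, e i (t + 1) ω = e i t ω + g i t ω - v i t ω)
    (hvbar : ∀ t ω, vbar t ω = (n : ℝ)⁻¹ • ∑ i ∈ Finset.Icc 1 n, v i t ω)
    (hehat1 : ehat 1 = fun _ => 0)
    (hehatrec : ∀ t, 1 ≤ t → ∀ ω, ehat (t + 1) ω = ehat t ω + vbar t ω - s t ω)
    (hClearner : ∀ i ∈ Finset.Icc 1 n, ∀ t, 1 ≤ t →
      ∫⁻ ω, (‖v i t ω - (e i t ω + g i t ω)‖₊ : ℝ≥0∞) ^ 2 ∂μ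
        ≤ ENNReal.ofReal (1 - δ) * ∫⁻ ω, (‖e i t ω + g i t ω‖₊ : ℝ≥0∞) ^ 2 ∂μ)
    (hCserver : ∀ t, 1 ≤ t →
      ∫⁻ ω, (‖s t ω - (ehat t ω + vbar t ω)‖₊ : ℝ≥0∞) ^ 2 ∂μ
        ≤ ENNReal.ofReal (1 - δ) * ∫⁻ ω, (‖ehat t ω + vbar t ω‖₊ : ℝ≥0∞) ^ 2 ∂μ) :
    ∀ t, 1 ≤ t →
      ∫⁻ ω, (‖ehat (t + 1) ω‖₊ : ℝ≥0∞) ^ 2 ∂μ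
        ≤ ENNReal.ofReal (160 * (1 - δ) * G ^ 2 / δ ^ 4) := by
  classical
  have hδne : δ ≠ 0 := hδ0.ne'
  have h1δ : (0:ℝ) ≤ 1 - δ := by linarith
  have hδ2 : (0:ℝ) < δ / 2 := by linarith
  have h2δ : 1 + 1 / (δ / 2) = 1 + 2 / δ := by rw [one_div, inv_div]
  have h12δ : (0:ℝ) ≤ 1 + 2 / δ := by positivity
  have h1d2 : (0:ℝ) ≤ 1 + δ / 2 := by linarith
  have h1n : 1 ∈ Finset.Icc 1 n := Finset.mem_Icc.2 ⟨le_rfl, hn⟩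
  -- G is nonnegative
  have hG0 : 0 ≤ G := by
    haveI : Filter.NeBot (ae μ) := ae_neBot.2 (IsProbabilityMeasure.ne_zero μ)
    obtain ⟨ω, hω⟩ := (hG 1 h1n 1 le_rfl).exists
    exact le_trans (norm_nonneg _) hω
  -- measurability of e, vbar, ehat
  have hme : ∀ i, ∀ t, 1 ≤ t → Measurable (e i t) := by
    intro i t ht
    induction t, ht using Nat.le_induction with
    | base => rw [he1 i]; exact measurable_const
    | succ t ht ih =>
      have hfe : e i (t + 1) = fun ω => e i t ω + g i t ω - v i t ω := funext (herec i t ht)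
      rw [hfe]; exact (ih.add (hmg i t)).sub (hmv i t)
  have hmvbar : ∀ t, Measurable (vbar t) := by
    intro t
    have hfe : vbar t = fun ω => (n : ℝ)⁻¹ • ∑ i ∈ Finset.Icc 1 n, v i t ω := funext (hvbar t)
    rw [hfe]
    exact (Finset.measurable_sum _ fun i _ => hmv i t).const_smul ((n : ℝ)⁻¹)
  have hmehat : ∀ t, 1 ≤ t → Measurable (ehat t) := by
    intro t ht
    induction t, ht using Nat.le_induction with
    | base => rw [hehat1]; exact measurable_const
    | succ t ht ih =>
      have hfe : ehat (t + 1) = fun ω => ehat t ω + vbar t ω - s t ω := funext (hehatrec t ht)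
      rw [hfe]; exact (ih.add (hmvbar t)).sub (hms t)
  -- the gradient second moments are bounded by G²
  have hgint : ∀ i ∈ Finset.Icc 1 n, ∀ t, 1 ≤ t →
      ∫⁻ ω, (‖g i t ω‖₊ : ℝ≥0∞) ^ 2 ∂μ ≤ ENNReal.ofReal (G ^ 2) := by
    intro i hi t ht
    calc ∫⁻ ω, (‖g i t ω‖₊ : ℝ≥0∞) ^ 2 ∂μ ≤ ∫⁻ _, ENNReal.ofReal (G ^ 2) ∂μ := by
          refine lintegral_mono_ae ((hG i hi t ht).mono fun ω hω => ?_)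
          rw [dftcl_sq_nnnorm_eq]
          exact ENNReal.ofReal_le_ofReal (by nlinarith [norm_nonneg (g i t ω)])
      _ = ENNReal.ofReal (G ^ 2) := by simp
  set KL : ℝ := 4 * (1 - δ) * G ^ 2 / δ ^ 2 with hKLdef
  have hKL0 : 0 ≤ KL := by
    apply div_nonneg _ (by positivity)
    have : (0:ℝ) ≤ (1 - δ) * G ^ 2 := mul_nonneg h1δ (sq_nonneg G)
    nlinarith
  -- learner-side error bound
  have hE : ∀ i ∈ Finset.Icc 1 n, ∀ t, 1 ≤ t →
      ∫⁻ ω, (‖e i t ω‖₊ : ℝ≥0∞) ^ 2 ∂μ ≤ ENNReal.ofReal KL := by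
    intro i hi
    refine dftcl_fixedpt (fun t => ∫⁻ ω, (‖e i t ω‖₊ : ℝ≥0∞) ^ 2 ∂μ)
      (ENNReal.ofReal ((1 - δ) * (1 + δ / 2))) (ENNReal.ofReal ((1 - δ) * ((1 + 2 / δ) * G ^ 2)))
      (ENNReal.ofReal KL) ?_ ?_ ?_
    · simp [he1 i]
    · intro t ht
      have hA : ENNReal.ofReal ((1 - δ) * (1 + δ / 2))
          = ENNReal.ofReal (1 - δ) * ENNReal.ofReal (1 + δ / 2) := ENNReal.ofReal_mul h1δ
      have hB : ENNReal.ofReal ((1 - δ) * ((1 + 2 / δ) * G ^ 2))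
          = ENNReal.ofReal (1 - δ) * (ENNReal.ofReal (1 + 2 / δ) * ENNReal.ofReal (G ^ 2)) := by
        rw [ENNReal.ofReal_mul h1δ, ENNReal.ofReal_mul h12δ]
      have heq : ∀ ω, (‖e i (t + 1) ω‖₊ : ℝ≥0∞) ^ 2
          = (‖v i t ω - (e i t ω + g i t ω)‖₊ : ℝ≥0∞) ^ 2 := by
        intro ω
        rw [herec i t ht ω]
        congr 1
        rw [← nnnorm_neg]
        congr 1
        abel
      have hy := dftcl_young_lintegral (μ := μ) (e i t) (g i t) (hme i t ht) (δ / 2) hδ2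
      rw [h2δ] at hy
      calc ∫⁻ ω, (‖e i (t + 1) ω‖₊ : ℝ≥0∞) ^ 2 ∂μ
          = ∫⁻ ω, (‖v i t ω - (e i t ω + g i t ω)‖₊ : ℝ≥0∞) ^ 2 ∂μ := lintegral_congr heq
        _ ≤ ENNReal.ofReal (1 - δ) * ∫⁻ ω, (‖e i t ω + g i t ω‖₊ : ℝ≥0∞) ^ 2 ∂μ :=
            hClearner i hi t ht
        _ ≤ ENNReal.ofReal (1 - δ)
            * (ENNReal.ofReal (1 + δ / 2) * ∫⁻ ω, (‖e i t ω‖₊ : ℝ≥0∞) ^ 2 ∂μ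
              + ENNReal.ofReal (1 + 2 / δ) * ∫⁻ ω, (‖g i t ω‖₊ : ℝ≥0∞) ^ 2 ∂μ) := by
            gcongr
        _ ≤ ENNReal.ofReal (1 - δ)
            * (ENNReal.ofReal (1 + δ / 2) * ∫⁻ ω, (‖e i t ω‖₊ : ℝ≥0∞) ^ 2 ∂μ
              + ENNReal.ofReal (1 + 2 / δ) * ENNReal.ofReal (G ^ 2)) := by
            gcongr
            exact hgint i hi t ht
        _ = ENNReal.ofReal ((1 - δ) * (1 + δ / 2)) * ∫⁻ ω, (‖e i t ω‖₊ : ℝ≥0∞) ^ 2 ∂μ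
            + ENNReal.ofReal ((1 - δ) * ((1 + 2 / δ) * G ^ 2)) := by
            rw [hA, hB]; ring
    · have hmulKL : ENNReal.ofReal ((1 - δ) * (1 + δ / 2)) * ENNReal.ofReal KL
          = ENNReal.ofReal ((1 - δ) * (1 + δ / 2) * KL) :=
        (ENNReal.ofReal_mul (mul_nonneg h1δ h1d2)).symm
      rw [hmulKL, ← ENNReal.ofReal_add (mul_nonneg (mul_nonneg h1δ h1d2) hKL0)
        (mul_nonneg h1δ (mul_nonneg h12δ (sq_nonneg G)))]
      refine ENNReal.ofReal_le_ofReal ?_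
      have key : (1 - δ) * (1 + δ / 2) * KL + (1 - δ) * ((1 + 2 / δ) * G ^ 2)
          = KL - (1 - δ) * G ^ 2 := by
        rw [hKLdef]; field_simp; ring
      have : (0:ℝ) ≤ (1 - δ) * G ^ 2 := mul_nonneg h1δ (sq_nonneg G)
      linarith [key]
  -- bound on individual compressed vectors
  set Vr : ℝ := 3 * KL + (3 * G ^ 2 + 3 * KL) with hVrdef
  have hVr0 : 0 ≤ Vr := by
    have := sq_nonneg G
    rw [hVrdef]; nlinarith
  have hV : ∀ i ∈ Finset.Icc 1 n, ∀ t, 1 ≤ t →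
      ∫⁻ ω, (‖v i t ω‖₊ : ℝ≥0∞) ^ 2 ∂μ ≤ ENNReal.ofReal Vr := by
    intro i hi t ht
    have heq : ∀ ω, v i t ω = e i t ω + g i t ω - e i (t + 1) ω := by
      intro ω; rw [herec i t ht ω]; abel
    calc ∫⁻ ω, (‖v i t ω‖₊ : ℝ≥0∞) ^ 2 ∂μ
        = ∫⁻ ω, (‖e i t ω + g i t ω - e i (t + 1) ω‖₊ : ℝ≥0∞) ^ 2 ∂μ := by
          refine lintegral_congr fun ω => ?_
          rw [heq ω]
      _ ≤ ENNReal.ofReal 3 * ∫⁻ ω, (‖e i t ω‖₊ : ℝ≥0∞) ^ 2 ∂μ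
          + (ENNReal.ofReal 3 * ∫⁻ ω, (‖g i t ω‖₊ : ℝ≥0∞) ^ 2 ∂μ
          + ENNReal.ofReal 3 * ∫⁻ ω, (‖e i (t + 1) ω‖₊ : ℝ≥0∞) ^ 2 ∂μ) :=
          dftcl_triple_lintegral _ _ _ (hme i t ht) (hmg i t)
      _ ≤ ENNReal.ofReal 3 * ENNReal.ofReal KL
          + (ENNReal.ofReal 3 * ENNReal.ofReal (G ^ 2)
          + ENNReal.ofReal 3 * ENNReal.ofReal KL) := by
          gcongr
          · exact hE i hi t ht
          · exact hgint i hi t ht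
          · exact hE i hi (t + 1) (by omega)
      _ = ENNReal.ofReal Vr := by
          rw [← ENNReal.ofReal_mul (by norm_num), ← ENNReal.ofReal_mul (by norm_num),
            ← ENNReal.ofReal_add (by positivity) (by linarith [hKL0]),
            ← ENNReal.ofReal_add (by linarith [hKL0]) (by nlinarith [hKL0, sq_nonneg G]),
            hVrdef]
  -- bound on the averaged vector
  have hnR : (0:ℝ) < (n : ℝ) := by exact_mod_cast hn
  have hVbar : ∀ t, 1 ≤ t →
      ∫⁻ ω, (‖vbar t ω‖₊ : ℝ≥0∞) ^ 2 ∂μ ≤ ENNReal.ofReal Vr := by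
    intro t ht
    have hpt : ∀ ω, (‖vbar t ω‖₊ : ℝ≥0∞) ^ 2
        ≤ (n : ℝ≥0∞)⁻¹ * ∑ i ∈ Finset.Icc 1 n, (‖v i t ω‖₊ : ℝ≥0∞) ^ 2 := by
      intro ω
      have hcard : ((Finset.Icc 1 n).card : ℝ) = n := by simp
      have hr : ‖vbar t ω‖ ^ 2 ≤ (n : ℝ)⁻¹ * ∑ i ∈ Finset.Icc 1 n, ‖v i t ω‖ ^ 2 := by
        have h1 : ‖∑ i ∈ Finset.Icc 1 n, v i t ω‖ ≤ ∑ i ∈ Finset.Icc 1 n, ‖v i t ω‖ :=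
          norm_sum_le _ _
        have h2 : (∑ i ∈ Finset.Icc 1 n, ‖v i t ω‖) ^ 2
            ≤ (n : ℝ) * ∑ i ∈ Finset.Icc 1 n, ‖v i t ω‖ ^ 2 := by
          have := sq_sum_le_card_mul_sum_sq (s := Finset.Icc 1 n) (f := fun i => ‖v i t ω‖)
          rw [hcard] at this
          exact this
        calc ‖vbar t ω‖ ^ 2 = ((n : ℝ)⁻¹) ^ 2 * ‖∑ i ∈ Finset.Icc 1 n, v i t ω‖ ^ 2 := by
              rw [hvbar t ω, norm_smul, mul_pow, norm_inv, Real.norm_natCast]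
          _ ≤ ((n : ℝ)⁻¹) ^ 2 * ((n : ℝ) * ∑ i ∈ Finset.Icc 1 n, ‖v i t ω‖ ^ 2) := by
              gcongr
              calc ‖∑ i ∈ Finset.Icc 1 n, v i t ω‖ ^ 2
                  ≤ (∑ i ∈ Finset.Icc 1 n, ‖v i t ω‖) ^ 2 := by
                    apply pow_le_pow_left₀ (norm_nonneg _) h1
                _ ≤ _ := h2
          _ = (n : ℝ)⁻¹ * ∑ i ∈ Finset.Icc 1 n, ‖v i t ω‖ ^ 2 := by
              field_simp
      calc (‖vbar t ω‖₊ : ℝ≥0∞) ^ 2 = ENNReal.ofReal (‖vbar t ω‖ ^ 2) := dftcl_sq_nnnorm_eq _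
        _ ≤ ENNReal.ofReal ((n : ℝ)⁻¹ * ∑ i ∈ Finset.Icc 1 n, ‖v i t ω‖ ^ 2) :=
            ENNReal.ofReal_le_ofReal hr
        _ = (n : ℝ≥0∞)⁻¹ * ∑ i ∈ Finset.Icc 1 n, (‖v i t ω‖₊ : ℝ≥0∞) ^ 2 := by
            rw [ENNReal.ofReal_mul (by positivity), ENNReal.ofReal_inv_of_pos hnR,
              ENNReal.ofReal_natCast, ENNReal.ofReal_sum_of_nonneg (fun i _ => sq_nonneg _)]
            congr 1
            exact Finset.sum_congr rfl fun i _ => (dftcl_sq_nnnorm_eq _).symm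
    have hn0 : (n : ℝ≥0∞) ≠ 0 := Nat.cast_ne_zero.2 (by omega)
    calc ∫⁻ ω, (‖vbar t ω‖₊ : ℝ≥0∞) ^ 2 ∂μ
        ≤ ∫⁻ ω, (n : ℝ≥0∞)⁻¹ * ∑ i ∈ Finset.Icc 1 n, (‖v i t ω‖₊ : ℝ≥0∞) ^ 2 ∂μ :=
          lintegral_mono hpt
      _ = (n : ℝ≥0∞)⁻¹ * ∑ i ∈ Finset.Icc 1 n, ∫⁻ ω, (‖v i t ω‖₊ : ℝ≥0∞) ^ 2 ∂μ := by
          rw [lintegral_const_mul' _ _ (ENNReal.inv_ne_top.2 hn0),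
            lintegral_finset_sum _ (fun i _ => (hmv i t).nnnorm.coe_nnreal_ennreal.pow_const 2)]
      _ ≤ (n : ℝ≥0∞)⁻¹ * ∑ _i ∈ Finset.Icc 1 n, ENNReal.ofReal Vr := by
          gcongr with i hi
          exact hV i hi t ht
      _ = (n : ℝ≥0∞)⁻¹ * ((n : ℝ≥0∞) * ENNReal.ofReal Vr) := by
          rw [Finset.sum_const, Nat.card_Icc, nsmul_eq_mul]
          norm_num
      _ = ENNReal.ofReal Vr := by
          rw [← mul_assoc, ENNReal.inv_mul_cancel hn0 (ENNReal.natCast_ne_top n), one_mul]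
  -- server-side error bound
  set KS : ℝ := 4 * (1 - δ) * Vr / δ ^ 2 with hKSdef
  have hKS0 : 0 ≤ KS := by
    apply div_nonneg _ (by positivity)
    nlinarith [mul_nonneg h1δ hVr0]
  have hS : ∀ t, 1 ≤ t →
      ∫⁻ ω, (‖ehat t ω‖₊ : ℝ≥0∞) ^ 2 ∂μ ≤ ENNReal.ofReal KS := by
    refine dftcl_fixedpt (fun t => ∫⁻ ω, (‖ehat t ω‖₊ : ℝ≥0∞) ^ 2 ∂μ)
      (ENNReal.ofReal ((1 - δ) * (1 + δ / 2))) (ENNReal.ofReal ((1 - δ) * ((1 + 2 / δ) * Vr)))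
      (ENNReal.ofReal KS) ?_ ?_ ?_
    · simp [hehat1]
    · intro t ht
      have hA : ENNReal.ofReal ((1 - δ) * (1 + δ / 2))
          = ENNReal.ofReal (1 - δ) * ENNReal.ofReal (1 + δ / 2) := ENNReal.ofReal_mul h1δ
      have hB : ENNReal.ofReal ((1 - δ) * ((1 + 2 / δ) * Vr))
          = ENNReal.ofReal (1 - δ) * (ENNReal.ofReal (1 + 2 / δ) * ENNReal.ofReal Vr) := by
        rw [ENNReal.ofReal_mul h1δ, ENNReal.ofReal_mul h12δ]
      have heq : ∀ ω, (‖ehat (t + 1) ω‖₊ : ℝ≥0∞) ^ 2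
          = (‖s t ω - (ehat t ω + vbar t ω)‖₊ : ℝ≥0∞) ^ 2 := by
        intro ω
        rw [hehatrec t ht ω]
        congr 1
        rw [← nnnorm_neg]
        congr 1
        abel
      have hy := dftcl_young_lintegral (μ := μ) (ehat t) (vbar t) (hmehat t ht) (δ / 2) hδ2
      rw [h2δ] at hy
      calc ∫⁻ ω, (‖ehat (t + 1) ω‖₊ : ℝ≥0∞) ^ 2 ∂μ
          = ∫⁻ ω, (‖s t ω - (ehat t ω + vbar t ω)‖₊ : ℝ≥0∞) ^ 2 ∂μ := lintegral_congr heq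
        _ ≤ ENNReal.ofReal (1 - δ) * ∫⁻ ω, (‖ehat t ω + vbar t ω‖₊ : ℝ≥0∞) ^ 2 ∂μ :=
            hCserver t ht
        _ ≤ ENNReal.ofReal (1 - δ)
            * (ENNReal.ofReal (1 + δ / 2) * ∫⁻ ω, (‖ehat t ω‖₊ : ℝ≥0∞) ^ 2 ∂μ
              + ENNReal.ofReal (1 + 2 / δ) * ∫⁻ ω, (‖vbar t ω‖₊ : ℝ≥0∞) ^ 2 ∂μ) := by
            gcongr
        _ ≤ ENNReal.ofReal (1 - δ)
            * (ENNReal.ofReal (1 + δ / 2) * ∫⁻ ω, (‖ehat t ω‖₊ : ℝ≥0∞) ^ 2 ∂μ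
              + ENNReal.ofReal (1 + 2 / δ) * ENNReal.ofReal Vr) := by
            gcongr
            exact hVbar t ht
        _ = ENNReal.ofReal ((1 - δ) * (1 + δ / 2)) * ∫⁻ ω, (‖ehat t ω‖₊ : ℝ≥0∞) ^ 2 ∂μ
            + ENNReal.ofReal ((1 - δ) * ((1 + 2 / δ) * Vr)) := by
            rw [hA, hB]; ring
    · have hmulKS : ENNReal.ofReal ((1 - δ) * (1 + δ / 2)) * ENNReal.ofReal KS
          = ENNReal.ofReal ((1 - δ) * (1 + δ / 2) * KS) :=
        (ENNReal.ofReal_mul (mul_nonneg h1δ h1d2)).symm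
      rw [hmulKS, ← ENNReal.ofReal_add (mul_nonneg (mul_nonneg h1δ h1d2) hKS0)
        (mul_nonneg h1δ (mul_nonneg h12δ hVr0))]
      refine ENNReal.ofReal_le_ofReal ?_
      have key : (1 - δ) * (1 + δ / 2) * KS + (1 - δ) * ((1 + 2 / δ) * Vr)
          = KS - (1 - δ) * Vr := by
        rw [hKSdef]; field_simp; ring
      have : (0:ℝ) ≤ (1 - δ) * Vr := mul_nonneg h1δ hVr0
      rw [key]
      linarith
  -- conclude
  intro t ht
  refine le_trans (hS (t + 1) (by omega)) (ENNReal.ofReal_le_ofReal ?_)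
  have key : (160 * (1 - δ) * G ^ 2 / δ ^ 4 - KS) * δ ^ 4
      = (1 - δ) * G ^ 2 * (64 + 96 * δ - 12 * δ ^ 2) := by
    rw [hKSdef, hVrdef, hKLdef]; field_simp; ring
  have hfac : (0:ℝ) ≤ 64 + 96 * δ - 12 * δ ^ 2 := by nlinarith
  have hpos : (0:ℝ) < δ ^ 4 := by positivity
  nlinarith [key, mul_nonneg (mul_nonneg h1δ (sq_nonneg G)) hfac, hpos]
end

section
/- Let C : ℝ^d → ℝ^d be a δ-contractive compressor and let g_i^t ∈ ℝ^d (i ∈ {1,…,n}, t ≥ 1) satisfy ‖g_i^t‖ ≤ G almost surely, with g_i^t depending only on compressor invocations from rounds before t. Define e_i¹ = 0, v_i^t = C(e_i^t + g_i^t), e_i^{t+1} = e_i^t + g_i^t − v_i^t, and v^t = (1/n) Σ_{i=1}^n v_i^t. Then for every t ≥ 1, E[‖v^t‖²] ≤ 40G²/δ². -/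
open MeasureTheory Real
open scoped ENNReal NNReal BigOperators RealInnerProductSpace

section Helpers

variable {Ω : Type*} [MeasurableSpace Ω] {d : ℕ}

lemma enn_sq_ofReal (x : EuclideanSpace ℝ (Fin d)) :
    ((‖x‖₊ : ℝ≥0∞)) ^ 2 = ENNReal.ofReal (‖x‖ ^ 2) := by
  rw [← enorm_eq_nnnorm, ← ofReal_norm, ← ENNReal.ofReal_pow (norm_nonneg x)]

lemma real_sq_add (β : ℝ) (hβ : 0 < β) (a b : EuclideanSpace ℝ (Fin d)) :
    ‖a + b‖ ^ 2 ≤ (1 + β) * ‖a‖ ^ 2 + (1 + β⁻¹) * ‖b‖ ^ 2 := by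
  have h := norm_add_le a b
  have ha := norm_nonneg a
  have hb := norm_nonneg b
  have hβ' : 0 < β⁻¹ := inv_pos.mpr hβ
  have key : 2 * ‖a‖ * ‖b‖ ≤ β * ‖a‖ ^ 2 + β⁻¹ * ‖b‖ ^ 2 := by
    have h0 : 0 ≤ β⁻¹ * (β * ‖a‖ - ‖b‖) ^ 2 := by positivity
    have heq : β⁻¹ * (β * ‖a‖ - ‖b‖) ^ 2
        = β * ‖a‖ ^ 2 - 2 * ‖a‖ * ‖b‖ + β⁻¹ * ‖b‖ ^ 2 := by
      field_simp
      ring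
    linarith [heq ▸ h0]
  have h2 : ‖a + b‖ ^ 2 ≤ (‖a‖ + ‖b‖) ^ 2 := by
    nlinarith [norm_nonneg (a + b)]
  nlinarith [key, h2]

lemma lint_sq_add (μ : Measure Ω) {f g : Ω → EuclideanSpace ℝ (Fin d)}
    (hf : Measurable f) (hg : Measurable g) {β : ℝ} (hβ : 0 < β) :
    ∫⁻ ω, (‖f ω + g ω‖₊ : ℝ≥0∞) ^ 2 ∂μ
      ≤ ENNReal.ofReal (1 + β) * ∫⁻ ω, (‖f ω‖₊ : ℝ≥0∞) ^ 2 ∂μ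
        + ENNReal.ofReal (1 + β⁻¹) * ∫⁻ ω, (‖g ω‖₊ : ℝ≥0∞) ^ 2 ∂μ := by
  have hmf : Measurable fun ω => (‖f ω‖₊ : ℝ≥0∞) ^ 2 :=
    (hf.nnnorm.coe_nnreal_ennreal).pow_const 2
  have hmg : Measurable fun ω => (‖g ω‖₊ : ℝ≥0∞) ^ 2 :=
    (hg.nnnorm.coe_nnreal_ennreal).pow_const 2
  have hβ' : 0 < β⁻¹ := inv_pos.mpr hβ
  calc ∫⁻ ω, (‖f ω + g ω‖₊ : ℝ≥0∞) ^ 2 ∂μ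
      ≤ ∫⁻ ω, (ENNReal.ofReal (1 + β) * (‖f ω‖₊ : ℝ≥0∞) ^ 2
          + ENNReal.ofReal (1 + β⁻¹) * (‖g ω‖₊ : ℝ≥0∞) ^ 2) ∂μ := by
        apply lintegral_mono
        intro ω
        dsimp only
        rw [enn_sq_ofReal, enn_sq_ofReal, enn_sq_ofReal,
          ← ENNReal.ofReal_mul (by positivity), ← ENNReal.ofReal_mul (by positivity),
          ← ENNReal.ofReal_add (by positivity) (by positivity)]
        exact ENNReal.ofReal_le_ofReal (real_sq_add β hβ _ _)
    _ = _ := by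
        rw [lintegral_add_left (hmf.const_mul _),
          lintegral_const_mul _ hmf, lintegral_const_mul _ hmg]

end Helpers

/-- bound on the averaged compressed message in D-FTCL. With the
learner-side error-feedback recursion `e_i¹ = 0`, `v_i^t = C(e_i^t + g_i^t)`,
`e_i^{t+1} = e_i^t + g_i^t − v_i^t`, `v^t = (1/n) Σ_i v_i^t`, and `‖g_i^t‖ ≤ G` a.s.,
one has for every `t ≥ 1` that `E[‖v^t‖²] ≤ 40G²/δ²`.

`δ`-contractiveness of `C` with independent fresh randomness for each invocation is encoded
by the expected contraction hypothesis `hC`. -/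
theorem dftcl_compressed_message_bound
    {d n : ℕ} (hn : 1 ≤ n)
    {Ω : Type*} [MeasurableSpace Ω] (μ : Measure Ω) [IsProbabilityMeasure μ]
    (δ G : ℝ) (hδ0 : 0 < δ) (hδ1 : δ ≤ 1)
    (g v e : ℕ → ℕ → Ω → EuclideanSpace ℝ (Fin d))
    (vbar : ℕ → Ω → EuclideanSpace ℝ (Fin d))
    (hmg : ∀ i t, Measurable (g i t)) (hmv : ∀ i t, Measurable (v i t))
    (hG : ∀ i ∈ Finset.Icc 1 n, ∀ t, 1 ≤ t → ∀ᵐ ω ∂μ, ‖g i t ω‖ ≤ G)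
    (he1 : ∀ i, e i 1 = fun _ => 0)
    (herec : ∀ i, ∀ t, 1 ≤ t → ∀ ω, e i (t + 1) ω = e i t ω + g i t ω - v i t ω)
    (hvbar : ∀ t ω, vbar t ω = (n : ℝ)⁻¹ • ∑ i ∈ Finset.Icc 1 n, v i t ω)
    (hC : ∀ i ∈ Finset.Icc 1 n, ∀ t, 1 ≤ t →
      ∫⁻ ω, (‖v i t ω - (e i t ω + g i t ω)‖₊ : ℝ≥0∞) ^ 2 ∂μ
        ≤ ENNReal.ofReal (1 - δ) * ∫⁻ ω, (‖e i t ω + g i t ω‖₊ : ℝ≥0∞) ^ 2 ∂μ) :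
    ∀ t, 1 ≤ t →
      ∫⁻ ω, (‖vbar t ω‖₊ : ℝ≥0∞) ^ 2 ∂μ ≤ ENNReal.ofReal (40 * G ^ 2 / δ ^ 2) := by

  have hδ2 : (0 : ℝ) < δ ^ 2 := by positivity
  have hG2 : (0 : ℝ) ≤ G ^ 2 := sq_nonneg G
  -- measurability of the error sequence
  have hme : ∀ i t, 1 ≤ t → Measurable (e i t) := by
    intro i
    refine Nat.le_induction ?_ ?_
    · rw [he1 i]; exact measurable_const
    · intro t ht ih
      have hrw : e i (t + 1) = fun ω => e i t ω + g i t ω - v i t ω :=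
        funext (herec i t ht)
      rw [hrw]
      exact (ih.add (hmg i t)).sub (hmv i t)
  -- second moment of g is at most G²
  have hg2 : ∀ i ∈ Finset.Icc 1 n, ∀ t, 1 ≤ t →
      ∫⁻ ω, (‖g i t ω‖₊ : ℝ≥0∞) ^ 2 ∂μ ≤ ENNReal.ofReal (G ^ 2) := by
    intro i hi t ht
    calc ∫⁻ ω, (‖g i t ω‖₊ : ℝ≥0∞) ^ 2 ∂μ
        ≤ ∫⁻ _, ENNReal.ofReal (G ^ 2) ∂μ := by
          refine lintegral_mono_ae ((hG i hi t ht).mono fun ω hω => ?_)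
          rw [enn_sq_ofReal]
          exact ENNReal.ofReal_le_ofReal
            (by nlinarith [norm_nonneg (g i t ω)])
      _ = ENNReal.ofReal (G ^ 2) := by simp
  set B : ℝ := 6 * G ^ 2 / δ ^ 2 with hB
  have hB0 : 0 ≤ B := by positivity
  have hδ20 : 0 < δ / 2 := by linarith
  -- error second moment bound by induction
  have hEB : ∀ i ∈ Finset.Icc 1 n, ∀ t, 1 ≤ t →
      ∫⁻ ω, (‖e i t ω‖₊ : ℝ≥0∞) ^ 2 ∂μ ≤ ENNReal.ofReal B := by
    intro i hi
    refine Nat.le_induction ?_ ?_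
    · rw [he1 i]; simp
    · intro t ht ih
      have hnorm : ∀ ω, (‖e i (t + 1) ω‖₊ : ℝ≥0∞) = (‖v i t ω - (e i t ω + g i t ω)‖₊ : ℝ≥0∞) := by
        intro ω
        rw [herec i t ht ω, ← nnnorm_neg (v i t ω - (e i t ω + g i t ω))]
        congr 1
        abel
      have hadd := lint_sq_add μ (hme i t ht) (hmg i t) hδ20
      calc ∫⁻ ω, (‖e i (t + 1) ω‖₊ : ℝ≥0∞) ^ 2 ∂μ
          = ∫⁻ ω, (‖v i t ω - (e i t ω + g i t ω)‖₊ : ℝ≥0∞) ^ 2 ∂μ := by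
            refine lintegral_congr fun ω => ?_
            rw [hnorm ω]
        _ ≤ ENNReal.ofReal (1 - δ) * ∫⁻ ω, (‖e i t ω + g i t ω‖₊ : ℝ≥0∞) ^ 2 ∂μ :=
            hC i hi t ht
        _ ≤ ENNReal.ofReal (1 - δ) *
            (ENNReal.ofReal (1 + δ / 2) * ENNReal.ofReal B
              + ENNReal.ofReal (1 + (δ / 2)⁻¹) * ENNReal.ofReal (G ^ 2)) := by
            refine mul_le_mul_right (le_trans hadd ?_) _
            exact add_le_add (mul_le_mul_right ih _)
              (mul_le_mul_right (hg2 i hi t ht) _)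
        _ = ENNReal.ofReal ((1 - δ) * ((1 + δ / 2) * B + (1 + (δ / 2)⁻¹) * G ^ 2)) := by
            rw [← ENNReal.ofReal_mul (by positivity), ← ENNReal.ofReal_mul (by positivity),
              ← ENNReal.ofReal_add (by positivity) (by positivity),
              ← ENNReal.ofReal_mul (by linarith)]
        _ ≤ ENNReal.ofReal B := by
            refine ENNReal.ofReal_le_ofReal ?_
            rw [hB, le_div_iff₀ hδ2]
            have expand : (1 - δ) * ((1 + δ / 2) * (6 * G ^ 2 / δ ^ 2)
                + (1 + (δ / 2)⁻¹) * G ^ 2) * δ ^ 2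
                = (1 - δ) * ((6 + 3 * δ) * G ^ 2 + (δ ^ 2 + 2 * δ) * G ^ 2) := by
              field_simp
              ring
            rw [expand]
            nlinarith [hG2, hδ0.le, hδ1, mul_nonneg hG2 hδ0.le,
              mul_nonneg (mul_nonneg hG2 hδ0.le) hδ0.le,
              mul_nonneg (mul_nonneg (mul_nonneg hG2 hδ0.le) hδ0.le) hδ0.le]
  -- second moment of each compressed message
  have hv2 : ∀ i ∈ Finset.Icc 1 n, ∀ t, 1 ≤ t →
      ∫⁻ ω, (‖v i t ω‖₊ : ℝ≥0∞) ^ 2 ∂μ ≤ ENNReal.ofReal (6 * B + 4 * G ^ 2) := by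
    intro i hi t ht
    have h1 : (0:ℝ) < 1 := one_pos
    have hadd1 := lint_sq_add (f := fun ω => e i t ω + g i t ω)
      (g := fun ω => -(e i (t + 1) ω)) μ
      ((hme i t ht).add (hmg i t)) (hme i (t+1) (le_trans ht (Nat.le_succ t))).neg h1
    have hadd2 := lint_sq_add μ (hme i t ht) (hmg i t) h1
    have hveq : ∀ ω, v i t ω = (e i t ω + g i t ω) + -(e i (t + 1) ω) := by
      intro ω
      rw [herec i t ht ω]
      abel
    have hneg : ∀ ω, (‖-(e i (t + 1) ω)‖₊ : ℝ≥0∞) = (‖e i (t + 1) ω‖₊ : ℝ≥0∞) := by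
      intro ω; rw [nnnorm_neg]
    calc ∫⁻ ω, (‖v i t ω‖₊ : ℝ≥0∞) ^ 2 ∂μ
        = ∫⁻ ω, (‖(e i t ω + g i t ω) + -(e i (t + 1) ω)‖₊ : ℝ≥0∞) ^ 2 ∂μ := by
          refine lintegral_congr fun ω => ?_
          rw [← hveq ω]
      _ ≤ ENNReal.ofReal (1 + 1) * ∫⁻ ω, (‖e i t ω + g i t ω‖₊ : ℝ≥0∞) ^ 2 ∂μ
          + ENNReal.ofReal (1 + (1:ℝ)⁻¹) * ∫⁻ ω, (‖-(e i (t + 1) ω)‖₊ : ℝ≥0∞) ^ 2 ∂μ :=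
          hadd1
      _ ≤ ENNReal.ofReal (1 + 1) * (ENNReal.ofReal (1 + 1) * ENNReal.ofReal B
            + ENNReal.ofReal (1 + (1:ℝ)⁻¹) * ENNReal.ofReal (G ^ 2))
          + ENNReal.ofReal (1 + (1:ℝ)⁻¹) * ENNReal.ofReal B := by
          refine add_le_add (mul_le_mul_right (le_trans hadd2 ?_) _) (mul_le_mul_right ?_ _)
          · exact add_le_add (mul_le_mul_right (hEB i hi t ht) _)
              (mul_le_mul_right (hg2 i hi t ht) _)
          · calc ∫⁻ ω, (‖-(e i (t + 1) ω)‖₊ : ℝ≥0∞) ^ 2 ∂μ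
                = ∫⁻ ω, (‖e i (t + 1) ω‖₊ : ℝ≥0∞) ^ 2 ∂μ :=
                  lintegral_congr fun ω => by rw [hneg ω]
              _ ≤ ENNReal.ofReal B := hEB i hi (t + 1) (le_trans ht (Nat.le_succ t))
      _ = ENNReal.ofReal ((1 + 1) * ((1 + 1) * B + (1 + (1:ℝ)⁻¹) * G ^ 2)
            + (1 + (1:ℝ)⁻¹) * B) := by
          rw [← ENNReal.ofReal_mul (by norm_num), ← ENNReal.ofReal_mul (by norm_num),
            ← ENNReal.ofReal_add (by positivity) (by positivity),
            ← ENNReal.ofReal_mul (by norm_num), ← ENNReal.ofReal_mul (by norm_num),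
            ← ENNReal.ofReal_add (by positivity) (by positivity)]
      _ ≤ ENNReal.ofReal (6 * B + 4 * G ^ 2) :=
          ENNReal.ofReal_le_ofReal (by norm_num; linarith)
  -- conclusion via Jensen on the average
  intro t ht
  have hpt : ∀ ω, (‖vbar t ω‖₊ : ℝ≥0∞) ^ 2
      ≤ ENNReal.ofReal (n : ℝ)⁻¹ * ∑ i ∈ Finset.Icc 1 n, (‖v i t ω‖₊ : ℝ≥0∞) ^ 2 := by
    intro ω
    have hreal : ‖vbar t ω‖ ^ 2
        ≤ (n : ℝ)⁻¹ * ∑ i ∈ Finset.Icc 1 n, ‖v i t ω‖ ^ 2 := by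
      have hn0 : (0 : ℝ) < (n : ℝ) := by exact_mod_cast hn
      have h1 : ‖vbar t ω‖ = (n : ℝ)⁻¹ * ‖∑ i ∈ Finset.Icc 1 n, v i t ω‖ := by
        rw [hvbar t ω, norm_smul, Real.norm_eq_abs, abs_of_nonneg (by positivity)]
      have h2 : ‖∑ i ∈ Finset.Icc 1 n, v i t ω‖ ≤ ∑ i ∈ Finset.Icc 1 n, ‖v i t ω‖ :=
        norm_sum_le _ _
      have h3 : (∑ i ∈ Finset.Icc 1 n, ‖v i t ω‖) ^ 2
          ≤ (n : ℝ) * ∑ i ∈ Finset.Icc 1 n, ‖v i t ω‖ ^ 2 := by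
        have := sq_sum_le_card_mul_sum_sq (s := Finset.Icc 1 n) (f := fun i => ‖v i t ω‖)
        simpa [Nat.card_Icc] using this
      have h4 : ‖vbar t ω‖ ^ 2
          ≤ (n : ℝ)⁻¹ ^ 2 * (∑ i ∈ Finset.Icc 1 n, ‖v i t ω‖) ^ 2 := by
        rw [h1, mul_pow]
        have := pow_le_pow_left₀ (norm_nonneg _) h2 2
        exact mul_le_mul_of_nonneg_left this (by positivity)
      calc ‖vbar t ω‖ ^ 2 ≤ (n : ℝ)⁻¹ ^ 2 * ((n : ℝ) * ∑ i ∈ Finset.Icc 1 n, ‖v i t ω‖ ^ 2) :=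
            le_trans h4 (mul_le_mul_of_nonneg_left h3 (by positivity))
        _ = (n : ℝ)⁻¹ * ∑ i ∈ Finset.Icc 1 n, ‖v i t ω‖ ^ 2 := by
            field_simp
    calc (‖vbar t ω‖₊ : ℝ≥0∞) ^ 2
        = ENNReal.ofReal (‖vbar t ω‖ ^ 2) := enn_sq_ofReal _
      _ ≤ ENNReal.ofReal ((n : ℝ)⁻¹ * ∑ i ∈ Finset.Icc 1 n, ‖v i t ω‖ ^ 2) :=
          ENNReal.ofReal_le_ofReal hreal
      _ = ENNReal.ofReal (n : ℝ)⁻¹ * ∑ i ∈ Finset.Icc 1 n, (‖v i t ω‖₊ : ℝ≥0∞) ^ 2 := by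
          rw [ENNReal.ofReal_mul (by positivity),
            ENNReal.ofReal_sum_of_nonneg (fun i _ => by positivity)]
          congr 1
          exact Finset.sum_congr rfl fun i _ => (enn_sq_ofReal _).symm
  calc ∫⁻ ω, (‖vbar t ω‖₊ : ℝ≥0∞) ^ 2 ∂μ
      ≤ ∫⁻ ω, ENNReal.ofReal (n : ℝ)⁻¹ * ∑ i ∈ Finset.Icc 1 n, (‖v i t ω‖₊ : ℝ≥0∞) ^ 2 ∂μ :=
        lintegral_mono hpt
    _ = ENNReal.ofReal (n : ℝ)⁻¹ * ∑ i ∈ Finset.Icc 1 n, ∫⁻ ω, (‖v i t ω‖₊ : ℝ≥0∞) ^ 2 ∂μ := by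
        rw [lintegral_const_mul _ (Finset.measurable_sum _ fun i _ =>
          ((hmv i t).nnnorm.coe_nnreal_ennreal).pow_const 2),
          lintegral_finset_sum _ fun i _ =>
          ((hmv i t).nnnorm.coe_nnreal_ennreal).pow_const 2]
    _ ≤ ENNReal.ofReal (n : ℝ)⁻¹ * ∑ _i ∈ Finset.Icc 1 n, ENNReal.ofReal (6 * B + 4 * G ^ 2) :=
        mul_le_mul_right (Finset.sum_le_sum fun i hi => hv2 i hi t ht) _
    _ = ENNReal.ofReal (n : ℝ)⁻¹ * ((n : ℝ≥0∞) * ENNReal.ofReal (6 * B + 4 * G ^ 2)) := by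
        rw [Finset.sum_const, Nat.card_Icc]
        simp [nsmul_eq_mul]
    _ = ENNReal.ofReal (6 * B + 4 * G ^ 2) := by
        have hn0 : (0 : ℝ) < (n : ℝ) := by exact_mod_cast hn
        rw [← mul_assoc, ← ENNReal.ofReal_natCast n, ← ENNReal.ofReal_mul (by positivity),
          inv_mul_cancel₀ hn0.ne', ENNReal.ofReal_one, one_mul]
    _ ≤ ENNReal.ofReal (40 * G ^ 2 / δ ^ 2) := by
        refine ENNReal.ofReal_le_ofReal ?_
        rw [hB, le_div_iff₀ hδ2]
        have expand : (6 * (6 * G ^ 2 / δ ^ 2) + 4 * G ^ 2) * δ ^ 2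
            = 36 * G ^ 2 + 4 * G ^ 2 * δ ^ 2 := by
          field_simp
          ring
        rw [expand]
        have hδsq : δ ^ 2 ≤ 1 := by nlinarith
        nlinarith [mul_nonneg hG2 (sub_nonneg.2 hδsq)]
end

section
/- In the D-OCO setting, run D-FTCL with convex update w^{t+1} = argmin_{w ∈ W} ⟨Σ_{k=1}^t s^k, w⟩ + (1/η)‖w‖² and learning rate η = δD/(G√T). Then the expected regret over the compressor randomness satisfies E[R_T] ≤ 9 δ^{-1} D G √T. -/
open MeasureTheory Real
open scoped ENNReal NNReal BigOperators RealInnerProductSpace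

/-- Gradient inequality for a convex differentiable function. -/
lemma aux_convex_grad_ineq {d : ℕ} {W : Set (EuclideanSpace ℝ (Fin d))}
    {f : EuclideanSpace ℝ (Fin d) → ℝ} (hc : ConvexOn ℝ W f) (hd : Differentiable ℝ f)
    {x y : EuclideanSpace ℝ (Fin d)} (hx : x ∈ W) (hy : y ∈ W) :
    f x - f y ≤ ⟪gradient f x, x - y⟫ := by
  have hder : HasDerivAt (fun θ : ℝ => f (x + θ • (y - x))) ⟪gradient f x, y - x⟫ 0 := by
    have hL : HasDerivAt (fun θ : ℝ => x + θ • (y - x)) (y - x) 0 := by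
      simpa using ((hasDerivAt_id (0:ℝ)).smul_const (y - x)).const_add x
    have hg : HasGradientAt f (gradient f x) x := (hd x).hasGradientAt
    have hf : HasFDerivAt f ((InnerProductSpace.toDual ℝ _) (gradient f x)) x :=
      hg.hasFDerivAt
    have hf' : HasFDerivAt f ((InnerProductSpace.toDual ℝ _) (gradient f x)) (x + (0:ℝ) • (y - x)) := by
      simpa using hf
    have := hf'.comp_hasDerivAt (0:ℝ) hL
    simpa [InnerProductSpace.toDual_apply_apply, Function.comp_def] using this
  have hslope : ∀ θ : ℝ, θ ∈ Set.Ioc (0:ℝ) 1 →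
      slope (fun θ : ℝ => f (x + θ • (y - x))) 0 θ ≤ f y - f x := by
    intro θ hθ
    have hcomb : f ((1 - θ) • x + θ • y) ≤ (1 - θ) * f x + θ * f y :=
      hc.2 hx hy (by linarith [hθ.2]) (le_of_lt hθ.1) (by ring)
    have hpt : x + θ • (y - x) = (1 - θ) • x + θ • y := by
      simp [smul_sub, sub_smul, one_smul]; abel
    have : (f (x + θ • (y - x)) - f x) / θ ≤ f y - f x := by
      rw [div_le_iff₀ hθ.1, hpt]
      nlinarith [hcomb]
    simpa [slope_def_field, sub_zero, div_eq_inv_mul] using by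
      simpa [div_eq_inv_mul] using this
  have htend : Filter.Tendsto (slope (fun θ : ℝ => f (x + θ • (y - x))) 0)
      (nhdsWithin 0 (Set.Ioi 0)) (nhds ⟪gradient f x, y - x⟫) := by
    have := hasDerivAt_iff_tendsto_slope.mp hder
    exact this.mono_left (nhdsWithin_mono _ (fun a ha => by
      simp only [Set.mem_compl_iff, Set.mem_singleton_iff]
      exact ne_of_gt ha))
  have hle : ⟪gradient f x, y - x⟫ ≤ f y - f x := by
    refine le_of_tendsto htend ?_
    filter_upwards [Ioc_mem_nhdsGT_of_mem (by norm_num : (0:ℝ) ∈ Set.Ico (0:ℝ) 1)] with θ hθ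
    exact hslope θ hθ
  have : ⟪gradient f x, x - y⟫ = - ⟪gradient f x, y - x⟫ := by
    rw [← inner_neg_right]; congr 1; abel
  linarith [hle, this.ge, this.le]

/-- A minimizer of `⟪c,·⟫ + ‖·‖²/η` over a convex set satisfies a strong-convexity
inequality against every other point of the set. -/
lemma aux_strong_min {d : ℕ} {W : Set (EuclideanSpace ℝ (Fin d))} (hWconv : Convex ℝ W)
    {η : ℝ} (hη : 0 < η) {c p : EuclideanSpace ℝ (Fin d)} (hp : p ∈ W)
    (hmin : ∀ u ∈ W, ⟪c, p⟫ + (1/η) * ‖p‖^2 ≤ ⟪c, u⟫ + (1/η) * ‖u‖^2)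
    {u : EuclideanSpace ℝ (Fin d)} (hu : u ∈ W) :
    ⟪c, p⟫ + (1/η) * ‖p‖^2 + (1/η) * ‖u - p‖^2 ≤ ⟪c, u⟫ + (1/η) * ‖u‖^2 := by
  have key : ∀ l : ℝ, l ∈ Set.Ioo (0:ℝ) 1 →
      ⟪c, p⟫ + (1/η) * ‖p‖^2 + (1/η) * (1 - l) * ‖u - p‖^2 ≤ ⟪c, u⟫ + (1/η) * ‖u‖^2 := by
    intro l hl
    set m := (1 - l) • p + l • u with hm
    have hmW : m ∈ W := hWconv hp hu (by linarith [hl.1, hl.2]) (le_of_lt hl.1) (by ring)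
    have h1 := hmin m hmW
    have hnm : ‖m‖^2 = (1-l) * ‖p‖^2 + l * ‖u‖^2 - l * (1-l) * ‖u - p‖^2 := by
      have e1 : ‖m‖^2 = ⟪m, m⟫ := (real_inner_self_eq_norm_sq m).symm
      have e2 : ‖p‖^2 = ⟪p, p⟫ := (real_inner_self_eq_norm_sq p).symm
      have e3 : ‖u‖^2 = ⟪u, u⟫ := (real_inner_self_eq_norm_sq u).symm
      have e4 : ‖u - p‖^2 = ⟪u - p, u - p⟫ := (real_inner_self_eq_norm_sq (u-p)).symm
      rw [e1, e2, e3, e4, hm]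
      simp only [inner_add_add_self, inner_sub_sub_self, real_inner_smul_left,
        real_inner_smul_right, real_inner_comm p u]
      ring
    have hcm : ⟪c, m⟫ = (1-l) * ⟪c, p⟫ + l * ⟪c, u⟫ := by
      rw [hm, inner_add_right, real_inner_smul_right, real_inner_smul_right]
    rw [hcm, hnm] at h1
    have hl0 := hl.1
    have h2 : l * (⟪c, p⟫ + (1/η) * ‖p‖^2 + (1/η) * (1-l) * ‖u - p‖^2)
        ≤ l * (⟪c, u⟫ + (1/η) * ‖u‖^2) := by nlinarith [h1]
    exact le_of_mul_le_mul_left (by linarith [h2]) hl0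
  -- take l → 0
  have htend : Filter.Tendsto
      (fun l : ℝ => ⟪c, p⟫ + (1/η) * ‖p‖^2 + (1/η) * (1 - l) * ‖u - p‖^2)
      (nhdsWithin 0 (Set.Ioi 0))
      (nhds (⟪c, p⟫ + (1/η) * ‖p‖^2 + (1/η) * ‖u - p‖^2)) := by
    have hcont : Continuous (fun l : ℝ => ⟪c, p⟫ + (1/η) * ‖p‖^2 + (1/η) * (1 - l) * ‖u - p‖^2) := by
      continuity
    have h0' : ⟪c, p⟫ + (1/η) * ‖p‖^2 + (1/η) * (1 - (0:ℝ)) * ‖u - p‖^2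
        = ⟪c, p⟫ + (1/η) * ‖p‖^2 + (1/η) * ‖u - p‖^2 := by ring
    have h2' := hcont.tendsto 0
    simpa using h2'.mono_left nhdsWithin_le_nhds
  refine le_of_tendsto htend ?_
  filter_upwards [Ioo_mem_nhdsGT_of_mem (by norm_num : (0:ℝ) ∈ Set.Ico (0:ℝ) 1)] with l hl
  exact key l hl

/-- Distance between minimizers of two quadratically-regularized linear objectives. -/
lemma aux_argmin_dist {d : ℕ} {W : Set (EuclideanSpace ℝ (Fin d))} (hWconv : Convex ℝ W)
    {η : ℝ} (hη : 0 < η) {c c' p q : EuclideanSpace ℝ (Fin d)} (hp : p ∈ W) (hq : q ∈ W)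
    (hpmin : ∀ u ∈ W, ⟪c, p⟫ + (1/η) * ‖p‖^2 ≤ ⟪c, u⟫ + (1/η) * ‖u‖^2)
    (hqmin : ∀ u ∈ W, ⟪c', q⟫ + (1/η) * ‖q‖^2 ≤ ⟪c', u⟫ + (1/η) * ‖u‖^2) :
    ‖p - q‖ ≤ (η/2) * ‖c - c'‖ := by
  have h1 := aux_strong_min hWconv hη hp hpmin hq
  have h2 := aux_strong_min hWconv hη hq hqmin hp
  have hsym : ‖p - q‖^2 = ‖q - p‖^2 := by rw [norm_sub_rev]
  have hinner : ⟪c - c', q - p⟫ = ⟪c, q⟫ - ⟪c, p⟫ - ⟪c', q⟫ + ⟪c', p⟫ := by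
    rw [inner_sub_left, inner_sub_right, inner_sub_right]; ring
  have hcs : ⟪c - c', q - p⟫ ≤ ‖c - c'‖ * ‖q - p‖ := real_inner_le_norm _ _
  have hqp : ‖q - p‖ = ‖p - q‖ := norm_sub_rev _ _
  have h2η : (2:ℝ)/η = 2 * (1/η) := by ring
  have hkey : (2/η) * ‖p - q‖^2 ≤ ‖c - c'‖ * ‖p - q‖ := by
    rw [← hqp] at *
    rw [h2η]
    have hsym' : (1/η) * ‖p - q‖^2 = (1/η) * ‖q - p‖^2 := by rw [hsym]
    linarith [h1, h2, hinner.le, hinner.ge, hcs, hsym']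
  rcases eq_or_lt_of_le (norm_nonneg (p - q)) with h0 | h0
  · rw [← h0]; positivity
  · have h3 : ‖p-q‖ * ‖p-q‖ ≤ (η/2 * ‖c-c'‖) * ‖p-q‖ := by
      have h4 := mul_le_mul_of_nonneg_left hkey (le_of_lt (half_pos hη))
      have h5 : η/2 * ((2/η) * ‖p - q‖^2) = ‖p-q‖ * ‖p-q‖ := by
        field_simp
      nlinarith [h4, h5]
    exact le_of_mul_le_mul_right h3 h0

lemma aux_eLpNorm_two_sq {Ω : Type*} [MeasurableSpace Ω] (μ : Measure Ω) {d : ℕ}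
    (X : Ω → EuclideanSpace ℝ (Fin d)) :
    eLpNorm X 2 μ = (∫⁻ ω, (‖X ω‖₊ : ℝ≥0∞) ^ 2 ∂μ) ^ (1/2 : ℝ) := by
  rw [eLpNorm_eq_lintegral_rpow_enorm_toReal (by norm_num) (by norm_num)]
  norm_num [enorm_eq_nnnorm]

/-- Contraction step: from an expected-square contraction, deduce an `L²`-norm contraction. -/
lemma aux_contract_step {Ω : Type*} [MeasurableSpace Ω] (μ : Measure Ω) {d : ℕ}
    {δ : ℝ} (hδ1 : δ ≤ 1)
    (X Y : Ω → EuclideanSpace ℝ (Fin d))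
    (h : ∫⁻ ω, (‖Y ω‖₊ : ℝ≥0∞) ^ 2 ∂μ
        ≤ ENNReal.ofReal (1 - δ) * ∫⁻ ω, (‖X ω‖₊ : ℝ≥0∞) ^ 2 ∂μ) :
    eLpNorm Y 2 μ ≤ ENNReal.ofReal (Real.sqrt (1 - δ)) * eLpNorm X 2 μ := by
  rw [aux_eLpNorm_two_sq, aux_eLpNorm_two_sq]
  calc (∫⁻ ω, (‖Y ω‖₊ : ℝ≥0∞) ^ 2 ∂μ) ^ (1/2 : ℝ)
      ≤ (ENNReal.ofReal (1 - δ) * ∫⁻ ω, (‖X ω‖₊ : ℝ≥0∞) ^ 2 ∂μ) ^ (1/2 : ℝ) := by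
        exact ENNReal.rpow_le_rpow h (by norm_num)
    _ = ENNReal.ofReal (1 - δ) ^ (1/2 : ℝ) * (∫⁻ ω, (‖X ω‖₊ : ℝ≥0∞) ^ 2 ∂μ) ^ (1/2 : ℝ) := by
        rw [ENNReal.mul_rpow_of_nonneg _ _ (by norm_num)]
    _ = ENNReal.ofReal (Real.sqrt (1 - δ)) * (∫⁻ ω, (‖X ω‖₊ : ℝ≥0∞) ^ 2 ∂μ) ^ (1/2 : ℝ) := by
        congr 1
        rw [ENNReal.ofReal_rpow_of_nonneg (by linarith : (0:ℝ) ≤ 1 - δ) (by norm_num : (0:ℝ) ≤ 1/2)]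
        rw [← Real.sqrt_eq_rpow]

/-- A pointwise-bounded function has `L²` norm at most the bound (probability measure). -/
lemma aux_eLpNorm_le_of_bound {Ω : Type*} [MeasurableSpace Ω] (μ : Measure Ω)
    [IsProbabilityMeasure μ] {d : ℕ} {C : ℝ} (hC : 0 ≤ C)
    (X : Ω → EuclideanSpace ℝ (Fin d)) (hX : ∀ ω, ‖X ω‖ ≤ C) :
    eLpNorm X 2 μ ≤ ENNReal.ofReal C := by
  have := eLpNorm_le_of_ae_bound (f := X) (p := 2) (μ := μ)
    (Filter.Eventually.of_forall hX)
  simpa using this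
set_option maxHeartbeats 2000000 in
/-- regret of D-FTCL for convex losses. In the D-OCO setting over a compact
convex domain `W ∋ 0` of diameter at most `D`, with convex differentiable losses `f_i^t` whose
(individual and averaged) gradients are bounded by `G` on `W`, run D-FTCL with a
`δ`-contractive compressor on both learner and server sides and the convex update
`w^{t+1} = argmin_{w ∈ W} ⟨Σ_{k=1}^t s^k, w⟩ + (1/η)‖w‖²`, with `η = δD/(G√T)`. Then the
expected regret satisfies `E[R_T] ≤ 9 δ⁻¹ D G √T`, where
`R_T = (1/n) Σ_{t,i} f_i^t(w^t) − min_{w ∈ W} (1/n) Σ_{t,i} f_i^t(w)`.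

`δ`-contractiveness of the compressor (with independent fresh randomness per invocation) is
encoded by the expected contraction hypotheses `hClearner` and `hCserver`. -/
theorem dftcl_convex_regret
    {d n T : ℕ} (hn : 1 ≤ n) (hT : 1 ≤ T)
    {Ω : Type*} [MeasurableSpace Ω] (μpr : Measure Ω) [IsProbabilityMeasure μpr]
    (W : Set (EuclideanSpace ℝ (Fin d)))
    (hWcpt : IsCompact W) (hWconv : Convex ℝ W)
    (hW0 : (0 : EuclideanSpace ℝ (Fin d)) ∈ W)
    (D G δ η : ℝ) (hD : 0 < D) (hG : 0 < G) (hδ0 : 0 < δ) (hδ1 : δ ≤ 1)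
    (hdiam : ∀ x ∈ W, ∀ y ∈ W, ‖x - y‖ ≤ D)
    (f : ℕ → ℕ → EuclideanSpace ℝ (Fin d) → ℝ)
    (hconv : ∀ i ∈ Finset.Icc 1 n, ∀ t ∈ Finset.Icc 1 T, ConvexOn ℝ W (f i t))
    (hdiff : ∀ i ∈ Finset.Icc 1 n, ∀ t ∈ Finset.Icc 1 T, Differentiable ℝ (f i t))
    (hgrad : ∀ i ∈ Finset.Icc 1 n, ∀ t ∈ Finset.Icc 1 T, ∀ u ∈ W,
      ‖gradient (f i t) u‖ ≤ G)
    (hgradavg : ∀ t ∈ Finset.Icc 1 T, ∀ u ∈ W,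
      ‖(n : ℝ)⁻¹ • ∑ i ∈ Finset.Icc 1 n, gradient (f i t) u‖ ≤ G)
    (w : ℕ → Ω → EuclideanSpace ℝ (Fin d))
    (v e : ℕ → ℕ → Ω → EuclideanSpace ℝ (Fin d))
    (vbar s ehat : ℕ → Ω → EuclideanSpace ℝ (Fin d))
    (hmw : ∀ t, Measurable (w t)) (hmv : ∀ i t, Measurable (v i t))
    (hms : ∀ t, Measurable (s t))
    (hw1 : w 1 = fun _ => 0)
    (he1 : ∀ i, e i 1 = fun _ => 0)
    (hehat1 : ehat 1 = fun _ => 0)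
    (herec : ∀ i, ∀ t, 1 ≤ t → ∀ ω,
      e i (t + 1) ω = e i t ω + gradient (f i t) (w t ω) - v i t ω)
    (hvbar : ∀ t ω, vbar t ω = (n : ℝ)⁻¹ • ∑ i ∈ Finset.Icc 1 n, v i t ω)
    (hehatrec : ∀ t, 1 ≤ t → ∀ ω, ehat (t + 1) ω = ehat t ω + vbar t ω - s t ω)
    (hClearner : ∀ i ∈ Finset.Icc 1 n, ∀ t ∈ Finset.Icc 1 T,
      ∫⁻ ω, (‖v i t ω - (e i t ω + gradient (f i t) (w t ω))‖₊ : ℝ≥0∞) ^ 2 ∂μpr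
        ≤ ENNReal.ofReal (1 - δ) *
          ∫⁻ ω, (‖e i t ω + gradient (f i t) (w t ω)‖₊ : ℝ≥0∞) ^ 2 ∂μpr)
    (hCserver : ∀ t ∈ Finset.Icc 1 T,
      ∫⁻ ω, (‖s t ω - (ehat t ω + vbar t ω)‖₊ : ℝ≥0∞) ^ 2 ∂μpr
        ≤ ENNReal.ofReal (1 - δ) * ∫⁻ ω, (‖ehat t ω + vbar t ω‖₊ : ℝ≥0∞) ^ 2 ∂μpr)
    (hupdateW : ∀ t ∈ Finset.Icc 1 T, ∀ ω, w (t + 1) ω ∈ W)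
    (hupdate : ∀ t ∈ Finset.Icc 1 T, ∀ ω, ∀ u ∈ W,
      ⟪∑ k ∈ Finset.Icc 1 t, s k ω, w (t + 1) ω⟫ + (1 / η) * ‖w (t + 1) ω‖ ^ 2
        ≤ ⟪∑ k ∈ Finset.Icc 1 t, s k ω, u⟫ + (1 / η) * ‖u‖ ^ 2)
    (hη : η = δ * D / (G * Real.sqrt T)) :
    ∫⁻ ω, ENNReal.ofReal
        ((n : ℝ)⁻¹ * ∑ t ∈ Finset.Icc 1 T, ∑ i ∈ Finset.Icc 1 n, f i t (w t ω)
          - ⨅ u : W, (n : ℝ)⁻¹ * ∑ t ∈ Finset.Icc 1 T, ∑ i ∈ Finset.Icc 1 n, f i t u) ∂μpr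
      ≤ ENNReal.ofReal (9 * δ⁻¹ * D * G * Real.sqrt T) := by
  classical
  -- basic positivity facts
  have hT0 : (0:ℝ) < T := by exact_mod_cast hT
  have hsT : 0 < Real.sqrt T := Real.sqrt_pos.mpr hT0
  have hηpos : 0 < η := by
    rw [hη]; positivity
  have hn0 : (n:ℝ) ≠ 0 := by positivity
  -- iterates remain in W
  have hwW : ∀ t, 1 ≤ t → t ≤ T → ∀ ω, w t ω ∈ W := by
    intro t h1 h2 ω
    rcases eq_or_lt_of_le h1 with h | h
    · rw [← h, hw1]; exact hW0
    · have ht' : t - 1 + 1 = t := by omega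
      have := hupdateW (t-1) (Finset.mem_Icc.mpr ⟨by omega, by omega⟩) ω
      rwa [ht'] at this
  -- abbreviations
  set gbar : ℕ → Ω → EuclideanSpace ℝ (Fin d) :=
    fun t ω => (n:ℝ)⁻¹ • ∑ i ∈ Finset.Icc 1 n, gradient (f i t) (w t ω) with hgbar_def
  set ebar : ℕ → Ω → EuclideanSpace ℝ (Fin d) :=
    fun t ω => (n:ℝ)⁻¹ • ∑ i ∈ Finset.Icc 1 n, e i t ω with hebar_def
  set A : ℕ → Ω → EuclideanSpace ℝ (Fin d) := fun t ω => ehat t ω + ebar t ω with hA_def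
  set Gs : ℕ → Ω → EuclideanSpace ℝ (Fin d) :=
    fun t ω => ∑ k ∈ Finset.Icc 1 t, gbar k ω with hGs_def
  -- norm bounds on gradients
  have hgbarG : ∀ t, 1 ≤ t → t ≤ T → ∀ ω, ‖gbar t ω‖ ≤ G := by
    intro t h1 h2 ω
    exact hgradavg t (Finset.mem_Icc.mpr ⟨h1, h2⟩) (w t ω) (hwW t h1 h2 ω)
  -- measurability
  have hmg : ∀ i t, Measurable (fun ω => gradient (f i t) (w t ω)) := by
    intro i t
    have h1 : Measurable (gradient (f i t)) := by
      have heq : gradient (f i t) = fun x =>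
          (InnerProductSpace.toDual ℝ (EuclideanSpace ℝ (Fin d))).symm (fderiv ℝ (f i t) x) := rfl
      rw [heq]
      exact (LinearIsometryEquiv.continuous _).measurable.comp (measurable_fderiv ℝ (f i t))
    exact h1.comp (hmw t)
  have hme : ∀ i t, 1 ≤ t → Measurable (e i t) := by
    intro i t ht
    induction t, ht using Nat.le_induction with
    | base => rw [he1]; exact measurable_const
    | succ t ht ih =>
      have heq : e i (t+1) = fun ω => e i t ω + gradient (f i t) (w t ω) - v i t ω :=
        funext (herec i t ht)
      rw [heq]
      exact (ih.add (hmg i t)).sub (hmv i t)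
  have hmgbar : ∀ t, Measurable (gbar t) := by
    intro t
    exact (Finset.measurable_sum _ (fun i _ => hmg i t)).const_smul ((n:ℝ)⁻¹)
  have hmebar : ∀ t, 1 ≤ t → Measurable (ebar t) := by
    intro t ht
    exact (Finset.measurable_sum _ (fun i _ => hme i t ht)).const_smul ((n:ℝ)⁻¹)
  have hmvbar : ∀ t, Measurable (vbar t) := by
    intro t
    have heq : vbar t = fun ω => (n:ℝ)⁻¹ • ∑ i ∈ Finset.Icc 1 n, v i t ω := funext (hvbar t)
    rw [heq]
    exact (Finset.measurable_sum _ (fun i _ => hmv i t)).const_smul ((n:ℝ)⁻¹)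
  have hmehat : ∀ t, 1 ≤ t → Measurable (ehat t) := by
    intro t ht
    induction t, ht using Nat.le_induction with
    | base => rw [hehat1]; exact measurable_const
    | succ t ht ih =>
      have heq : ehat (t+1) = fun ω => ehat t ω + vbar t ω - s t ω := funext (hehatrec t ht)
      rw [heq]
      exact (ih.add (hmvbar t)).sub (hms t)
  have hmA : ∀ t, 1 ≤ t → Measurable (A t) := by
    intro t ht
    exact (hmehat t ht).add (hmebar t ht)
  -- identity : vbar in terms of errors
  have hvbar_id : ∀ t, 1 ≤ t → ∀ ω, vbar t ω = gbar t ω + (ebar t ω - ebar (t+1) ω) := by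
    intro t ht ω
    have hv : ∀ i ∈ Finset.Icc 1 n,
        v i t ω = e i t ω + gradient (f i t) (w t ω) - e i (t+1) ω := by
      intro i _
      rw [herec i t ht ω]; abel
    rw [hvbar t ω, Finset.sum_congr rfl hv]
    simp only [Finset.sum_add_distrib, Finset.sum_sub_distrib, smul_add, smul_sub,
      hgbar_def, hebar_def]
    abel
  -- identity : compressed prefix sums
  have hSid : ∀ t, 1 ≤ t → t ≤ T → ∀ ω,
      ∑ k ∈ Finset.Icc 1 t, s k ω = Gs t ω - A (t+1) ω := by
    intro t ht
    induction t, ht using Nat.le_induction with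
    | base =>
      intro _ ω
      have h1 : s 1 ω = ehat 1 ω + vbar 1 ω - ehat 2 ω := by
        rw [hehatrec 1 le_rfl ω]; abel
      have he0 : ebar 1 ω = 0 := by
        simp only [hebar_def, he1]
        simp
      have hGs1 : Gs 1 ω = gbar 1 ω := by simp [hGs_def]
      simp only [Finset.Icc_self, Finset.sum_singleton]
      rw [h1, hvbar_id 1 le_rfl ω, hehat1, hGs1]
      simp only [hA_def]
      rw [he0]
      simp
      abel
    | succ t ht ih =>
      intro htT ω
      have htT' : t ≤ T := by omega
      rw [Finset.sum_Icc_succ_top (by omega : 1 ≤ t+1), ih htT' ω]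
      have hs' : s (t+1) ω = ehat (t+1) ω + vbar (t+1) ω - ehat (t+2) ω := by
        rw [hehatrec (t+1) (by omega) ω]; abel
      have hGs' : Gs (t+1) ω = Gs t ω + gbar (t+1) ω := by
        simp [hGs_def, Finset.sum_Icc_succ_top (by omega : 1 ≤ t+1)]
      rw [hs', hvbar_id (t+1) (by omega) ω, hGs']
      simp only [hA_def]
      abel
  -- the comparator
  set F : EuclideanSpace ℝ (Fin d) → ℝ :=
    fun u => (n:ℝ)⁻¹ * ∑ t ∈ Finset.Icc 1 T, ∑ i ∈ Finset.Icc 1 n, f i t u with hF_def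
  have hFcont : ContinuousOn F W := by
    have : Continuous F := by
      rw [hF_def]
      exact continuous_const.mul (continuous_finset_sum _ (fun t htm => continuous_finset_sum _
        (fun i him => (hdiff i him t htm).continuous)))
    exact this.continuousOn
  haveI : Nonempty ↑W := ⟨⟨0, hW0⟩⟩
  obtain ⟨ustar, hustarW, hustarmin⟩ := hWcpt.exists_isMinOn ⟨0, hW0⟩ hFcont
  have hInfge : F ustar ≤ ⨅ u : W, F u :=
    le_ciInf (fun u => hustarmin u.2)
  have hustarD : ‖ustar‖ ≤ D := by
    have := hdiam ustar hustarW 0 hW0; simpa using this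
  -- virtual (uncompressed) FTRL iterates
  have hmin_ex : ∀ c : EuclideanSpace ℝ (Fin d), ∃ p, p ∈ W ∧ ∀ u ∈ W,
      ⟪c, p⟫ + (1/η) * ‖p‖^2 ≤ ⟪c, u⟫ + (1/η) * ‖u‖^2 := by
    intro c
    have hcont : ContinuousOn (fun u : EuclideanSpace ℝ (Fin d) =>
        ⟪c, u⟫ + (1/η) * ‖u‖^2) W := by
      refine Continuous.continuousOn ?_
      exact ((continuous_const.inner continuous_id).add
        (continuous_const.mul (continuous_norm.pow 2)))
    obtain ⟨p, hpW, hpmin⟩ := hWcpt.exists_isMinOn ⟨0, hW0⟩ hcont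
    exact ⟨p, hpW, fun u hu => hpmin hu⟩
  choose minOf hminW hminspec using hmin_ex
  set wt : ℕ → Ω → EuclideanSpace ℝ (Fin d) :=
    fun t ω => if t = 1 then 0 else minOf (Gs (t-1) ω) with hwt_def
  have hwtW : ∀ t, ∀ ω, wt t ω ∈ W := by
    intro t ω
    by_cases h : t = 1
    · simp [hwt_def, h]; exact hW0
    · simp [hwt_def, h]; exact hminW _
  have hwt1 : ∀ ω, wt 1 ω = 0 := by intro ω; simp [hwt_def]
  have hwtmin : ∀ t, 1 ≤ t → ∀ ω, ∀ u ∈ W,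
      ⟪Gs (t-1) ω, wt t ω⟫ + (1/η) * ‖wt t ω‖^2
        ≤ ⟪Gs (t-1) ω, u⟫ + (1/η) * ‖u‖^2 := by
    intro t h1 ω u hu
    by_cases h : t = 1
    · subst h
      have : Gs 0 ω = 0 := by simp [hGs_def]
      rw [this, hwt1 ω]
      simp only [inner_zero_left]
      have : (0:ℝ) ≤ (1/η) * ‖u‖^2 := by positivity
      simpa using this
    · simp only [hwt_def, if_neg h]
      exact hminspec (Gs (t-1) ω) u hu
  -- the pointwise (per-sample) regret bound
  set C1 : ℝ := D^2/η + η*T*G^2/2 with hC1_def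
  have hkey : ∀ ω,
      (n : ℝ)⁻¹ * ∑ t ∈ Finset.Icc 1 T, ∑ i ∈ Finset.Icc 1 n, f i t (w t ω) - F ustar
        ≤ C1 + (η*G/2) * ∑ t ∈ Finset.Icc 1 T, ‖A t ω‖ := by
    intro ω
    -- convexity step
    have hinner_eq : ∀ t, ⟪gbar t ω, w t ω - ustar⟫
        = (n:ℝ)⁻¹ * ∑ i ∈ Finset.Icc 1 n, ⟪gradient (f i t) (w t ω), w t ω - ustar⟫ := by
      intro t
      simp only [hgbar_def]
      rw [real_inner_smul_left, sum_inner]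
    have hstep1 : (n : ℝ)⁻¹ * ∑ t ∈ Finset.Icc 1 T, ∑ i ∈ Finset.Icc 1 n, f i t (w t ω)
        - F ustar ≤ ∑ t ∈ Finset.Icc 1 T, ⟪gbar t ω, w t ω - ustar⟫ := by
      have hsplit : (n : ℝ)⁻¹ * ∑ t ∈ Finset.Icc 1 T, ∑ i ∈ Finset.Icc 1 n, f i t (w t ω)
          - F ustar = ∑ t ∈ Finset.Icc 1 T, (n:ℝ)⁻¹ *
            ((∑ i ∈ Finset.Icc 1 n, f i t (w t ω)) - ∑ i ∈ Finset.Icc 1 n, f i t ustar) := by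
        simp only [hF_def]
        rw [← mul_sub, ← Finset.sum_sub_distrib, Finset.mul_sum]
      rw [hsplit]
      refine Finset.sum_le_sum (fun t htm => ?_)
      rw [hinner_eq t]
      refine mul_le_mul_of_nonneg_left ?_ (by positivity)
      rw [← Finset.sum_sub_distrib]
      refine Finset.sum_le_sum (fun i him => ?_)
      obtain ⟨h1, h2⟩ := Finset.mem_Icc.mp htm
      exact aux_convex_grad_ineq (hconv i him t htm) (hdiff i him t htm)
        (hwW t h1 h2 ω) hustarW
    -- decomposition
    have hdecomp : ∑ t ∈ Finset.Icc 1 T, ⟪gbar t ω, w t ω - ustar⟫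
        = (∑ t ∈ Finset.Icc 1 T, ⟪gbar t ω, wt t ω - ustar⟫)
          + ∑ t ∈ Finset.Icc 1 T, ⟪gbar t ω, w t ω - wt t ω⟫ := by
      rw [← Finset.sum_add_distrib]
      refine Finset.sum_congr rfl (fun t _ => ?_)
      rw [← inner_add_right]
      congr 1
      abel
    -- be-the-leader
    have hBTL : ∀ t : ℕ, ∑ k ∈ Finset.Icc 1 t, ⟪gbar k ω, wt (k+1) ω⟫
        ≤ ⟪Gs t ω, wt (t+1) ω⟫ + (1/η) * ‖wt (t+1) ω‖^2 := by
      intro t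
      induction t with
      | zero =>
        have : Gs 0 ω = 0 := by simp [hGs_def]
        rw [this, hwt1 ω]
        simp
      | succ t ih =>
        rw [Finset.sum_Icc_succ_top (by omega : 1 ≤ t+1)]
        have hmin := hwtmin (t+1) (by omega) ω (wt (t+1+1) ω) (hwtW (t+1+1) ω)
        simp only [Nat.add_sub_cancel] at hmin
        have hGs' : Gs (t+1) ω = Gs t ω + gbar (t+1) ω := by
          simp [hGs_def, Finset.sum_Icc_succ_top (by omega : 1 ≤ t+1)]
        have heq : ⟪Gs (t+1) ω, wt (t+1+1) ω⟫
            = ⟪Gs t ω, wt (t+1+1) ω⟫ + ⟪gbar (t+1) ω, wt (t+1+1) ω⟫ := by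
          rw [hGs', inner_add_left]
        linarith [ih, hmin, heq.le, heq.ge]
    -- FTRL regret of the virtual iterates
    have hreg : ∑ t ∈ Finset.Icc 1 T, ⟪gbar t ω, wt t ω - ustar⟫
        ≤ (1/η) * ‖ustar‖^2
          + ∑ t ∈ Finset.Icc 1 T, ⟪gbar t ω, wt t ω - wt (t+1) ω⟫ := by
      have h1 := hBTL T
      have h2 := hwtmin (T+1) (by omega) ω ustar hustarW
      simp only [Nat.add_sub_cancel] at h2
      have h3 : ⟪Gs T ω, ustar⟫ = ∑ k ∈ Finset.Icc 1 T, ⟪gbar k ω, ustar⟫ := by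
        simp only [hGs_def]
        rw [sum_inner]
      have h5 : ∀ t, ⟪gbar t ω, wt t ω - ustar⟫
          = ⟪gbar t ω, wt t ω - wt (t+1) ω⟫ + ⟪gbar t ω, wt (t+1) ω⟫
            - ⟪gbar t ω, ustar⟫ := by
        intro t
        simp only [inner_sub_right]
        ring
      rw [Finset.sum_congr rfl (fun t _ => h5 t), Finset.sum_sub_distrib,
        Finset.sum_add_distrib]
      have h4 : ∑ k ∈ Finset.Icc 1 T, ⟪gbar k ω, wt (k+1) ω⟫
          ≤ ∑ k ∈ Finset.Icc 1 T, ⟪gbar k ω, ustar⟫ + (1/η) * ‖ustar‖^2 := by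
        rw [← h3]
        linarith [h1, h2]
      linarith [h4]
    -- stability of virtual iterates
    have hstab : ∀ t ∈ Finset.Icc 1 T, ⟪gbar t ω, wt t ω - wt (t+1) ω⟫ ≤ G * (η/2 * G) := by
      intro t htm
      obtain ⟨ht1, htT⟩ := Finset.mem_Icc.mp htm
      obtain ⟨t', rfl⟩ : ∃ t', t = t'+1 := ⟨t-1, by omega⟩
      have hmin1 := hwtmin (t'+1) (by omega) ω
      have hmin2 := hwtmin (t'+1+1) (by omega) ω
      simp only [Nat.add_sub_cancel] at hmin1 hmin2
      have hdist := aux_argmin_dist hWconv hηpos (hwtW (t'+1) ω) (hwtW (t'+1+1) ω)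
        hmin1 hmin2
      have hGs' : Gs (t'+1) ω = Gs t' ω + gbar (t'+1) ω := by
        simp [hGs_def, Finset.sum_Icc_succ_top (by omega : 1 ≤ t'+1)]
      have hdd : Gs t' ω - Gs (t'+1) ω = -(gbar (t'+1) ω) := by rw [hGs']; abel
      rw [hdd, norm_neg] at hdist
      have hg := hgbarG (t'+1) ht1 htT ω
      have hd2 : ‖wt (t'+1) ω - wt (t'+1+1) ω‖ ≤ η/2 * G := by
        refine le_trans hdist ?_
        exact mul_le_mul_of_nonneg_left hg (by positivity)
      calc ⟪gbar (t'+1) ω, wt (t'+1) ω - wt (t'+1+1) ω⟫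
          ≤ ‖gbar (t'+1) ω‖ * ‖wt (t'+1) ω - wt (t'+1+1) ω‖ := real_inner_le_norm _ _
        _ ≤ G * (η/2 * G) := mul_le_mul hg hd2 (norm_nonneg _) hG.le
    -- comparison of real and virtual iterates
    have hcomp : ∀ t ∈ Finset.Icc 1 T,
        ⟪gbar t ω, w t ω - wt t ω⟫ ≤ G * (η/2 * ‖A t ω‖) := by
      intro t htm
      obtain ⟨ht1, htT⟩ := Finset.mem_Icc.mp htm
      have hdist : ‖w t ω - wt t ω‖ ≤ η/2 * ‖A t ω‖ := by
        rcases eq_or_lt_of_le ht1 with h | h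
        · have hw1' : w t ω = 0 := by rw [← h, hw1]
          have hwt1' : wt t ω = 0 := by rw [← h]; exact hwt1 ω
          rw [hw1', hwt1']
          simp
          positivity
        · obtain ⟨t', rfl⟩ : ∃ t', t = t'+1 := ⟨t-1, by omega⟩
          have ht'1 : 1 ≤ t' := by omega
          have ht'T : t' ≤ T := by omega
          have hup : ∀ u ∈ W,
              ⟪∑ k ∈ Finset.Icc 1 t', s k ω, w (t'+1) ω⟫ + (1/η) * ‖w (t'+1) ω‖^2
                ≤ ⟪∑ k ∈ Finset.Icc 1 t', s k ω, u⟫ + (1/η) * ‖u‖^2 := by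
            intro u hu
            have := hupdate t' (Finset.mem_Icc.mpr ⟨ht'1, ht'T⟩) ω u hu
            simpa [one_div] using this
          have hmin2 := hwtmin (t'+1) (by omega) ω
          simp only [Nat.add_sub_cancel] at hmin2
          have hdd := aux_argmin_dist hWconv hηpos
            (hupdateW t' (Finset.mem_Icc.mpr ⟨ht'1, ht'T⟩) ω) (hwtW (t'+1) ω) hup hmin2
          rw [hSid t' ht'1 ht'T ω] at hdd
          have he2 : Gs t' ω - A (t'+1) ω - Gs t' ω = -(A (t'+1) ω) := by abel
          rw [he2, norm_neg] at hdd
          exact hdd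
      have hg := hgbarG t ht1 htT ω
      calc ⟪gbar t ω, w t ω - wt t ω⟫
          ≤ ‖gbar t ω‖ * ‖w t ω - wt t ω‖ := real_inner_le_norm _ _
        _ ≤ G * (η/2 * ‖A t ω‖) := mul_le_mul hg hdist (norm_nonneg _) hG.le
    -- put the pieces together
    have hsum1 : ∑ t ∈ Finset.Icc 1 T, ⟪gbar t ω, wt t ω - wt (t+1) ω⟫
        ≤ T * (G * (η/2 * G)) := by
      refine le_trans (Finset.sum_le_sum hstab) ?_
      rw [Finset.sum_const, Nat.card_Icc]
      simp [nsmul_eq_mul]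
    have hsum2 : ∑ t ∈ Finset.Icc 1 T, ⟪gbar t ω, w t ω - wt t ω⟫
        ≤ (η*G/2) * ∑ t ∈ Finset.Icc 1 T, ‖A t ω‖ := by
      refine le_trans (Finset.sum_le_sum hcomp) ?_
      rw [Finset.mul_sum]
      refine Finset.sum_le_sum (fun t _ => ?_)
      exact le_of_eq (by ring)
    have hust : (1/η) * ‖ustar‖^2 ≤ D^2/η := by
      have h1 : ‖ustar‖^2 ≤ D^2 := pow_le_pow_left₀ (norm_nonneg _) hustarD 2
      have h2 : (0:ℝ) ≤ 1/η := by positivity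
      calc (1/η) * ‖ustar‖^2 ≤ (1/η) * D^2 := mul_le_mul_of_nonneg_left h1 h2
        _ = D^2/η := by ring
    have hTG : (T:ℝ) * (G * (η/2 * G)) = η*T*G^2/2 := by ring
    rw [hC1_def]
    linarith [hstep1, hdecomp.le, hdecomp.ge, hreg, hsum1, hsum2, hust]
  -- second-moment bounds on the compression errors
  have heps : ∀ t, 1 ≤ t → t ≤ T+1 → ∀ i, 1 ≤ i → i ≤ n →
      eLpNorm (e i t) 2 μpr ≤ ENNReal.ofReal (2*G/δ) := by
    have hreal : Real.sqrt (1-δ) * (2*G/δ + G) ≤ 2*G/δ := by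
      have hs := Real.sq_sqrt (by linarith : (0:ℝ) ≤ 1-δ)
      have hsn := Real.sqrt_nonneg (1-δ)
      have h1 : Real.sqrt (1-δ) * (2+δ) ≤ 2 := by
        have hb : (Real.sqrt (1-δ) * (2+δ))^2 ≤ 2^2 := by nlinarith [hs, hδ0, hδ1, sq_nonneg δ]
        exact (pow_le_pow_iff_left₀ (mul_nonneg hsn (by linarith)) (by norm_num)
          (by norm_num)).mp hb
      have h2 : Real.sqrt (1-δ) * (2*G/δ + G) = (G/δ) * (Real.sqrt (1-δ) * (2+δ)) := by
        field_simp
      rw [h2]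
      calc (G/δ) * (Real.sqrt (1-δ) * (2+δ)) ≤ (G/δ) * 2 :=
            mul_le_mul_of_nonneg_left h1 (by positivity)
        _ = 2*G/δ := by ring
    intro t ht
    induction t, ht using Nat.le_induction with
    | base =>
      intro _ i _ _
      rw [he1 i]
      simp [eLpNorm_zero']
    | succ t ht ih =>
      intro ht1 i hi1 hin
      have htT : t ≤ T := by omega
      have himem : i ∈ Finset.Icc 1 n := Finset.mem_Icc.mpr ⟨hi1, hin⟩
      have htmem : t ∈ Finset.Icc 1 T := Finset.mem_Icc.mpr ⟨ht, htT⟩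
      have hrec : e i (t+1)
          = -(fun ω => v i t ω - (e i t ω + gradient (f i t) (w t ω))) := by
        funext ω
        show e i (t+1) ω = -(v i t ω - (e i t ω + gradient (f i t) (w t ω)))
        rw [herec i t ht ω]; abel
      have hcon := aux_contract_step μpr hδ1
        (fun ω => e i t ω + gradient (f i t) (w t ω))
        (fun ω => v i t ω - (e i t ω + gradient (f i t) (w t ω)))
        (hClearner i himem t htmem)
      rw [hrec, eLpNorm_neg]
      refine le_trans hcon ?_
      have htri : eLpNorm (fun ω => e i t ω + gradient (f i t) (w t ω)) 2 μpr
          ≤ ENNReal.ofReal (2*G/δ) + ENNReal.ofReal G := by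
        refine le_trans (eLpNorm_add_le (hme i t ht).aestronglyMeasurable
          (hmg i t).aestronglyMeasurable (by norm_num)) ?_
        refine add_le_add (ih (by omega) i hi1 hin) ?_
        exact aux_eLpNorm_le_of_bound μpr hG.le _
          (fun ω => hgrad i himem t htmem (w t ω) (hwW t ht htT ω))
      calc ENNReal.ofReal (Real.sqrt (1-δ))
            * eLpNorm (fun ω => e i t ω + gradient (f i t) (w t ω)) 2 μpr
          ≤ ENNReal.ofReal (Real.sqrt (1-δ)) * (ENNReal.ofReal (2*G/δ) + ENNReal.ofReal G) :=
            mul_le_mul_right htri _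
        _ = ENNReal.ofReal (Real.sqrt (1-δ) * (2*G/δ + G)) := by
            rw [← ENNReal.ofReal_add (by positivity) hG.le,
              ← ENNReal.ofReal_mul (Real.sqrt_nonneg _)]
        _ ≤ ENNReal.ofReal (2*G/δ) := ENNReal.ofReal_le_ofReal hreal
  have hebar2 : ∀ t, 1 ≤ t → t ≤ T+1 →
      eLpNorm (ebar t) 2 μpr ≤ ENNReal.ofReal (2*G/δ) := by
    intro t h1 h2
    have hne : ((n:ℝ≥0∞)) ≠ 0 := by exact_mod_cast Nat.cast_ne_zero.mpr (by omega)
    have heq : ebar t = (n:ℝ)⁻¹ • ∑ i ∈ Finset.Icc 1 n, e i t := by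
      funext ω
      simp [hebar_def, Finset.sum_apply]
    rw [heq, eLpNorm_const_smul]
    have hsum : eLpNorm (∑ i ∈ Finset.Icc 1 n, e i t) 2 μpr
        ≤ (n : ℝ≥0∞) * ENNReal.ofReal (2*G/δ) := by
      refine le_trans (eLpNorm_sum_le (fun i _ => (hme i t h1).aestronglyMeasurable)
        (by norm_num)) ?_
      calc ∑ i ∈ Finset.Icc 1 n, eLpNorm (e i t) 2 μpr
          ≤ ∑ _i ∈ Finset.Icc 1 n, ENNReal.ofReal (2*G/δ) :=
            Finset.sum_le_sum (fun i him => heps t h1 h2 i (Finset.mem_Icc.mp him).1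
              (Finset.mem_Icc.mp him).2)
        _ = (n : ℝ≥0∞) * ENNReal.ofReal (2*G/δ) := by
            rw [Finset.sum_const, Nat.card_Icc]
            simp [nsmul_eq_mul]
    have hnn : ((‖(n:ℝ)⁻¹‖₊ : ℝ≥0∞)) = ((n:ℝ≥0∞))⁻¹ := by
      rw [nnnorm_inv]
      norm_num
      rw [ENNReal.coe_inv (by exact_mod_cast Nat.cast_ne_zero.mpr (by omega))]
      norm_num
    calc (‖(n:ℝ)⁻¹‖₊ : ℝ≥0∞) * eLpNorm (∑ i ∈ Finset.Icc 1 n, e i t) 2 μpr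
        ≤ (‖(n:ℝ)⁻¹‖₊ : ℝ≥0∞) * ((n : ℝ≥0∞) * ENNReal.ofReal (2*G/δ)) :=
          mul_le_mul_right hsum _
      _ = ENNReal.ofReal (2*G/δ) := by
          rw [hnn, ← mul_assoc, ENNReal.inv_mul_cancel hne (by simp), one_mul]
  have hvb2 : ∀ t, 1 ≤ t → t ≤ T →
      eLpNorm (vbar t) 2 μpr ≤ ENNReal.ofReal (5*G/δ) := by
    intro t h1 h2
    have hveq : vbar t = fun ω => gbar t ω + (ebar t ω - ebar (t+1) ω) :=
      funext (hvbar_id t h1)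
    rw [hveq]
    have hmsub : Measurable (fun ω => ebar t ω - ebar (t+1) ω) :=
      (hmebar t h1).sub (hmebar (t+1) (by omega))
    refine le_trans (eLpNorm_add_le (hmgbar t).aestronglyMeasurable
      hmsub.aestronglyMeasurable (by norm_num)) ?_
    have hgb : eLpNorm (gbar t) 2 μpr ≤ ENNReal.ofReal G :=
      aux_eLpNorm_le_of_bound μpr hG.le _ (fun ω => hgbarG t h1 h2 ω)
    have hsub : eLpNorm (fun ω => ebar t ω - ebar (t+1) ω) 2 μpr
        ≤ ENNReal.ofReal (2*G/δ) + ENNReal.ofReal (2*G/δ) := by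
      refine le_trans (eLpNorm_sub_le (hmebar t h1).aestronglyMeasurable
        (hmebar (t+1) (by omega)).aestronglyMeasurable (by norm_num)) ?_
      exact add_le_add (hebar2 t h1 (by omega)) (hebar2 (t+1) (by omega) (by omega))
    calc eLpNorm (gbar t) 2 μpr + eLpNorm (fun ω => ebar t ω - ebar (t+1) ω) 2 μpr
        ≤ ENNReal.ofReal G + (ENNReal.ofReal (2*G/δ) + ENNReal.ofReal (2*G/δ)) :=
          add_le_add hgb hsub
      _ = ENNReal.ofReal (G + (2*G/δ + 2*G/δ)) := by
          rw [← ENNReal.ofReal_add (by positivity) (by positivity),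
            ← ENNReal.ofReal_add hG.le (by positivity)]
      _ ≤ ENNReal.ofReal (5*G/δ) := by
          refine ENNReal.ofReal_le_ofReal ?_
          have hGd : G ≤ G/δ := by
            rw [le_div_iff₀ hδ0]
            nlinarith [hG, hδ1]
          have e1 : 2*G/δ + 2*G/δ = 4*(G/δ) := by ring
          have e2 : 5*G/δ = 5*(G/δ) := by ring
          linarith [hGd]
  have hchi : ∀ t, 1 ≤ t → t ≤ T+1 →
      eLpNorm (ehat t) 2 μpr ≤ ENNReal.ofReal (10*G/δ^2) := by
    have hreal : Real.sqrt (1-δ) * (10*G/δ^2 + 5*G/δ) ≤ 10*G/δ^2 := by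
      have hs := Real.sq_sqrt (by linarith : (0:ℝ) ≤ 1-δ)
      have hsn := Real.sqrt_nonneg (1-δ)
      have h1 : Real.sqrt (1-δ) * (10+5*δ) ≤ 10 := by
        have hb : (Real.sqrt (1-δ) * (10+5*δ))^2 ≤ 10^2 := by
          nlinarith [hs, hδ0, hδ1, sq_nonneg δ]
        exact (pow_le_pow_iff_left₀ (mul_nonneg hsn (by linarith)) (by norm_num)
          (by norm_num)).mp hb
      have h2 : Real.sqrt (1-δ) * (10*G/δ^2 + 5*G/δ)
          = (G/δ^2) * (Real.sqrt (1-δ) * (10+5*δ)) := by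
        field_simp
      rw [h2]
      calc (G/δ^2) * (Real.sqrt (1-δ) * (10+5*δ)) ≤ (G/δ^2) * 10 :=
            mul_le_mul_of_nonneg_left h1 (by positivity)
        _ = 10*G/δ^2 := by ring
    intro t ht
    induction t, ht using Nat.le_induction with
    | base =>
      intro _
      rw [hehat1]
      simp [eLpNorm_zero']
    | succ t ht ih =>
      intro ht1
      have htT : t ≤ T := by omega
      have htmem : t ∈ Finset.Icc 1 T := Finset.mem_Icc.mpr ⟨ht, htT⟩
      have hrec : ehat (t+1) = -(fun ω => s t ω - (ehat t ω + vbar t ω)) := by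
        funext ω
        show ehat (t+1) ω = -(s t ω - (ehat t ω + vbar t ω))
        rw [hehatrec t ht ω]; abel
      have hcon := aux_contract_step μpr hδ1
        (fun ω => ehat t ω + vbar t ω)
        (fun ω => s t ω - (ehat t ω + vbar t ω))
        (hCserver t htmem)
      rw [hrec, eLpNorm_neg]
      refine le_trans hcon ?_
      have htri : eLpNorm (fun ω => ehat t ω + vbar t ω) 2 μpr
          ≤ ENNReal.ofReal (10*G/δ^2) + ENNReal.ofReal (5*G/δ) := by
        refine le_trans (eLpNorm_add_le (hmehat t ht).aestronglyMeasurable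
          (hmvbar t).aestronglyMeasurable (by norm_num)) ?_
        exact add_le_add (ih (by omega)) (hvb2 t ht htT)
      calc ENNReal.ofReal (Real.sqrt (1-δ)) * eLpNorm (fun ω => ehat t ω + vbar t ω) 2 μpr
          ≤ ENNReal.ofReal (Real.sqrt (1-δ))
              * (ENNReal.ofReal (10*G/δ^2) + ENNReal.ofReal (5*G/δ)) :=
            mul_le_mul_right htri _
        _ = ENNReal.ofReal (Real.sqrt (1-δ) * (10*G/δ^2 + 5*G/δ)) := by
            rw [← ENNReal.ofReal_add (by positivity) (by positivity),
              ← ENNReal.ofReal_mul (Real.sqrt_nonneg _)]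
        _ ≤ ENNReal.ofReal (10*G/δ^2) := ENNReal.ofReal_le_ofReal hreal
  have hA2 : ∀ t, 1 ≤ t → t ≤ T →
      (∫⁻ ω, ENNReal.ofReal ‖A t ω‖ ∂μpr) ≤ ENNReal.ofReal (12*G/δ^2) := by
    intro t h1 h2
    have hAeq : (∫⁻ ω, ENNReal.ofReal ‖A t ω‖ ∂μpr) = eLpNorm (A t) 1 μpr := by
      rw [eLpNorm_one_eq_lintegral_enorm]
      refine lintegral_congr (fun ω => ?_)
      rw [ofReal_norm]
    rw [hAeq]
    refine le_trans (eLpNorm_le_eLpNorm_of_exponent_le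
      (by exact one_le_two : (1:ℝ≥0∞) ≤ 2) (hmA t h1).aestronglyMeasurable) ?_
    have hA_add : A t = ehat t + ebar t := by
      funext ω
      simp [hA_def]
    rw [hA_add]
    refine le_trans (eLpNorm_add_le (hmehat t h1).aestronglyMeasurable
      (hmebar t h1).aestronglyMeasurable (by norm_num)) ?_
    calc eLpNorm (ehat t) 2 μpr + eLpNorm (ebar t) 2 μpr
        ≤ ENNReal.ofReal (10*G/δ^2) + ENNReal.ofReal (2*G/δ) :=
          add_le_add (hchi t h1 (by omega)) (hebar2 t h1 (by omega))
      _ = ENNReal.ofReal (10*G/δ^2 + 2*G/δ) := by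
          rw [← ENNReal.ofReal_add (by positivity) (by positivity)]
      _ ≤ ENNReal.ofReal (12*G/δ^2) := by
          refine ENNReal.ofReal_le_ofReal ?_
          have hdd : 2*G/δ ≤ 2*G/δ^2 := by
            refine div_le_div_of_nonneg_left (by positivity) (by positivity) ?_
            nlinarith [hδ0, hδ1]
          calc 10*G/δ^2 + 2*G/δ ≤ 10*G/δ^2 + 2*G/δ^2 := by
                exact add_le_add_right hdd _
            _ = 12*G/δ^2 := by ring
  -- putting everything together
  have hmA' : ∀ t ∈ Finset.Icc 1 T, Measurable (fun ω => ENNReal.ofReal ‖A t ω‖) := by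
    intro t htm
    exact ((hmA t (Finset.mem_Icc.mp htm).1).norm).ennreal_ofReal
  have hc2 : (0:ℝ) ≤ η*G/2 := by positivity
  have hC1nn : (0:ℝ) ≤ C1 := by rw [hC1_def]; positivity
  have hS2 : Real.sqrt T ^ 2 = (T:ℝ) := Real.sq_sqrt hT0.le
  have hδne : δ ≠ 0 := ne_of_gt hδ0
  have hDne : D ≠ 0 := ne_of_gt hD
  have hGne : G ≠ 0 := ne_of_gt hG
  have hSne : Real.sqrt T ≠ 0 := ne_of_gt hsT
  have hfinal : C1 + (η*G/2) * (T * (12*G/δ^2)) ≤ 9 * δ⁻¹ * D * G * Real.sqrt T := by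
    set S := Real.sqrt (T:ℝ) with hSdef
    have heq : C1 + (η*G/2) * ((T:ℝ) * (12*G/δ^2))
        = D*G*S/δ + δ*(D*G*S)/2 + 6*(D*G*S)/δ := by
      rw [hC1_def, hη, ← hS2]
      field_simp
      ring
    have hDGS : (0:ℝ) ≤ D*G*S := by positivity
    have hδ2 : δ*δ ≤ 1 := mul_le_one₀ hδ1 hδ0.le hδ1
    have h1 : δ*(D*G*S)/2 ≤ 2*(D*G*S)/δ := by
      rw [div_le_div_iff₀ (by norm_num) hδ0]
      nlinarith [mul_le_mul_of_nonneg_right hδ2 hDGS, hDGS]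
    have hpoly : D*G*S/δ + δ*(D*G*S)/2 + 6*(D*G*S)/δ ≤ 9*δ⁻¹*D*G*S := by
      have e4 : 9*δ⁻¹*D*G*S = 9*(D*G*S)/δ := by rw [inv_eq_one_div]; ring
      rw [e4]
      ring_nf
      ring_nf at h1
      linarith
    linarith [heq.le, heq.ge, hpoly]
  have hstep : ∀ ω, ENNReal.ofReal
      ((n : ℝ)⁻¹ * ∑ t ∈ Finset.Icc 1 T, ∑ i ∈ Finset.Icc 1 n, f i t (w t ω)
        - ⨅ u : W, (n : ℝ)⁻¹ * ∑ t ∈ Finset.Icc 1 T, ∑ i ∈ Finset.Icc 1 n, f i t u)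
      ≤ ENNReal.ofReal C1
        + ENNReal.ofReal (η*G/2) * ∑ t ∈ Finset.Icc 1 T, ENNReal.ofReal ‖A t ω‖ := by
    intro ω
    have hInfge' : F ustar
        ≤ ⨅ u : W, (n : ℝ)⁻¹ * ∑ t ∈ Finset.Icc 1 T, ∑ i ∈ Finset.Icc 1 n, f i t u :=
      hInfge
    have h1 := hkey ω
    have h2 : ((n : ℝ)⁻¹ * ∑ t ∈ Finset.Icc 1 T, ∑ i ∈ Finset.Icc 1 n, f i t (w t ω)
          - ⨅ u : W, (n : ℝ)⁻¹ * ∑ t ∈ Finset.Icc 1 T, ∑ i ∈ Finset.Icc 1 n, f i t u)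
        ≤ C1 + (η*G/2) * ∑ t ∈ Finset.Icc 1 T, ‖A t ω‖ := by
      linarith [h1, hInfge']
    refine le_trans (ENNReal.ofReal_le_ofReal h2) ?_
    refine le_trans ENNReal.ofReal_add_le ?_
    rw [ENNReal.ofReal_mul hc2, ENNReal.ofReal_sum_of_nonneg (fun t _ => norm_nonneg _)]
  refine le_trans (lintegral_mono hstep) ?_
  rw [lintegral_add_left measurable_const, lintegral_const, measure_univ, mul_one,
    lintegral_const_mul _ (Finset.measurable_sum _ hmA'), lintegral_finset_sum _ hmA']
  calc ENNReal.ofReal C1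
      + ENNReal.ofReal (η*G/2) * ∑ t ∈ Finset.Icc 1 T, ∫⁻ ω, ENNReal.ofReal ‖A t ω‖ ∂μpr
      ≤ ENNReal.ofReal C1
        + ENNReal.ofReal (η*G/2) * ∑ _t ∈ Finset.Icc 1 T, ENNReal.ofReal (12*G/δ^2) := by
        refine add_le_add_right (mul_le_mul_right (Finset.sum_le_sum (fun t htm =>
          hA2 t (Finset.mem_Icc.mp htm).1 (Finset.mem_Icc.mp htm).2)) _) _
    _ = ENNReal.ofReal C1
        + ENNReal.ofReal (η*G/2) * ((T:ℝ≥0∞) * ENNReal.ofReal (12*G/δ^2)) := by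
        rw [Finset.sum_const, Nat.card_Icc]
        simp [nsmul_eq_mul]
    _ = ENNReal.ofReal (C1 + (η*G/2) * (T * (12*G/δ^2))) := by
        rw [ENNReal.ofReal_add hC1nn (by positivity), ENNReal.ofReal_mul hc2,
          ENNReal.ofReal_mul (by positivity : (0:ℝ) ≤ (T:ℝ)), ENNReal.ofReal_natCast]
    _ ≤ ENNReal.ofReal (9 * δ⁻¹ * D * G * Real.sqrt T) :=
        ENNReal.ofReal_le_ofReal hfinal
end

section
/- In the D-OCO setting with every loss f_i^t additionally μ-strongly convex on W (μ > 0), run D-FTCL with strongly convex update w^{t+1} = argmin_{w ∈ W} ⟨Σ_{k=1}^t s^k, w⟩ + (μ/2) Σ_{k=1}^t ‖w − w^k‖². Then the expected regret over the compressor randomness satisfies E[R_T] ≤ 17 (G + μD)² (1 + log T) / (μ δ²). -/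
open MeasureTheory Real
open scoped ENNReal NNReal BigOperators RealInnerProductSpace

section Helpers

lemma midpt {E : Type*} [NormedAddCommGroup E] [InnerProductSpace ℝ E] (x u c : E) :
    ‖(2:ℝ)⁻¹ • (x + u) - c‖^2 = (‖x-c‖^2 + ‖u-c‖^2)/2 - ‖x-u‖^2/4 := by
  have hpar := parallelogram_law_with_norm ℝ (x - c) (u - c)
  have h1 : (2:ℝ)⁻¹ • (x + u) - c = (2:ℝ)⁻¹ • ((x - c) + (u - c)) := by
    rw [smul_add]; module
  have h2 : (x - c) - (u - c) = x - u := by abel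
  rw [h1, norm_smul]
  rw [h2] at hpar
  simp only [norm_inv, Real.norm_ofNat]
  nlinarith [norm_nonneg ((x-c) + (u-c))]

lemma quarter_min {E : Type*} [NormedAddCommGroup E] [InnerProductSpace ℝ E]
    {W : Set E} (hWconv : Convex ℝ W) {μ : ℝ} (hμ : 0 ≤ μ)
    (b : E) (K : Finset ℕ) (c : ℕ → E) {x u : E} (hx : x ∈ W) (hu : u ∈ W)
    (hmin : ∀ z ∈ W, ⟪b, x⟫ + μ/2 * ∑ k ∈ K, ‖x - c k‖^2
      ≤ ⟪b, z⟫ + μ/2 * ∑ k ∈ K, ‖z - c k‖^2) :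
    ⟪b, x⟫ + μ/2 * ∑ k ∈ K, ‖x - c k‖^2 + (K.card : ℝ) * μ/4 * ‖u - x‖^2
      ≤ ⟪b, u⟫ + μ/2 * ∑ k ∈ K, ‖u - c k‖^2 := by
  set m := (2:ℝ)⁻¹ • (x + u) with hm
  have hmW : m ∈ W := by
    have := hWconv hx hu (by norm_num : (0:ℝ) ≤ (2:ℝ)⁻¹) (by norm_num : (0:ℝ) ≤ (2:ℝ)⁻¹)
      (by norm_num)
    simpa [hm, smul_add] using this
  have hinner : ⟪b, m⟫ = (⟪b, x⟫ + ⟪b, u⟫)/2 := by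
    rw [hm, real_inner_smul_right, inner_add_right]; ring
  have hsum : ∑ k ∈ K, ‖m - c k‖^2
      = (∑ k ∈ K, ‖x - c k‖^2 + ∑ k ∈ K, ‖u - c k‖^2)/2 - (K.card : ℝ) * ‖x - u‖^2/4 := by
    rw [Finset.sum_congr rfl (fun k _ => midpt x u (c k))]
    rw [Finset.sum_sub_distrib, ← Finset.sum_div, Finset.sum_add_distrib, Finset.sum_const]
    ring
  have h := hmin m hmW
  rw [hinner, hsum] at h
  have hux : ‖u - x‖ = ‖x - u‖ := by rw [norm_sub_rev]
  rw [hux]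
  nlinarith [h]

lemma eLpNorm_two_eq {Ω : Type*} [MeasurableSpace Ω] {μpr : Measure Ω}
    {E : Type*} [NormedAddCommGroup E] (Z : Ω → E) :
    eLpNorm Z 2 μpr = (∫⁻ ω, (‖Z ω‖₊ : ℝ≥0∞) ^ 2 ∂μpr) ^ (1/2 : ℝ) := by
  rw [eLpNorm_eq_lintegral_rpow_enorm_toReal (by norm_num) (by norm_num)]
  simp only [ENNReal.toReal_ofNat]
  congr 1
  refine lintegral_congr fun ω => ?_
  rw [show (2:ℝ) = ((2:ℕ):ℝ) by norm_num, ENNReal.rpow_natCast, enorm_eq_nnnorm]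

lemma contract_step {Ω : Type*} [MeasurableSpace Ω] {μpr : Measure Ω}
    {E : Type*} [NormedAddCommGroup E]
    (X Y : Ω → E) {c : ℝ} (hc : 0 ≤ c)
    (h : ∫⁻ ω, (‖Y ω‖₊ : ℝ≥0∞) ^ 2 ∂μpr ≤ ENNReal.ofReal c * ∫⁻ ω, (‖X ω‖₊ : ℝ≥0∞) ^ 2 ∂μpr) :
    eLpNorm Y 2 μpr ≤ ENNReal.ofReal (Real.sqrt c) * eLpNorm X 2 μpr := by
  rw [eLpNorm_two_eq, eLpNorm_two_eq]
  calc (∫⁻ ω, (‖Y ω‖₊ : ℝ≥0∞) ^ 2 ∂μpr) ^ (1/2 : ℝ)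
      ≤ (ENNReal.ofReal c * ∫⁻ ω, (‖X ω‖₊ : ℝ≥0∞) ^ 2 ∂μpr) ^ (1/2 : ℝ) :=
        ENNReal.rpow_le_rpow h (by norm_num)
    _ = (ENNReal.ofReal c) ^ (1/2 : ℝ) * (∫⁻ ω, (‖X ω‖₊ : ℝ≥0∞) ^ 2 ∂μpr) ^ (1/2 : ℝ) :=
        ENNReal.mul_rpow_of_nonneg _ _ (by norm_num)
    _ = ENNReal.ofReal (Real.sqrt c) * (∫⁻ ω, (‖X ω‖₊ : ℝ≥0∞) ^ 2 ∂μpr) ^ (1/2 : ℝ) := by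
        congr 1
        rw [ENNReal.ofReal_rpow_of_nonneg hc (by norm_num), Real.sqrt_eq_rpow]

lemma avg_eLpNorm_le {Ω : Type*} [MeasurableSpace Ω] {μpr : Measure Ω}
    {E : Type*} [NormedAddCommGroup E] [NormedSpace ℝ E]
    {n : ℕ} (hn : 1 ≤ n) (F : ℕ → Ω → E)
    (hmeas : ∀ i ∈ Finset.Icc 1 n, AEStronglyMeasurable (F i) μpr)
    {B : ℝ≥0∞} (hB : ∀ i ∈ Finset.Icc 1 n, eLpNorm (F i) 2 μpr ≤ B) :
    eLpNorm (fun ω => (n:ℝ)⁻¹ • ∑ i ∈ Finset.Icc 1 n, F i ω) 2 μpr ≤ B := by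
  have hne : (n:ℝ≥0∞) ≠ 0 := by
    simpa using Nat.one_le_iff_ne_zero.mp hn
  have hsum : eLpNorm (∑ i ∈ Finset.Icc 1 n, F i) 2 μpr ≤ (n : ℝ≥0∞) * B := by
    refine (eLpNorm_sum_le hmeas (by norm_num)).trans ?_
    calc ∑ i ∈ Finset.Icc 1 n, eLpNorm (F i) 2 μpr ≤ ∑ i ∈ Finset.Icc 1 n, B :=
          Finset.sum_le_sum hB
      _ = (n : ℝ≥0∞) * B := by
          rw [Finset.sum_const, Nat.card_Icc, Nat.add_sub_cancel, nsmul_eq_mul]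
  have heq : (fun ω => (n:ℝ)⁻¹ • ∑ i ∈ Finset.Icc 1 n, F i ω)
      = (n:ℝ)⁻¹ • (∑ i ∈ Finset.Icc 1 n, F i) := by
    funext ω; simp [Finset.sum_apply]
  rw [heq, eLpNorm_const_smul]
  have hnn : ((‖(n:ℝ)⁻¹‖₊ : ℝ≥0) : ℝ≥0∞) = ((n : ℝ≥0∞))⁻¹ := by
    rw [nnnorm_inv]
    rw [ENNReal.coe_inv (by simp [Nat.one_le_iff_ne_zero.mp hn])]
    congr 1
    simp
  rw [show ‖(n:ℝ)⁻¹‖ₑ * eLpNorm (∑ i ∈ Finset.Icc 1 n, F i) 2 μpr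
      = ((n : ℝ≥0∞))⁻¹ * eLpNorm (∑ i ∈ Finset.Icc 1 n, F i) 2 μpr by rw [enorm_eq_nnnorm, hnn]]
  calc ((n : ℝ≥0∞))⁻¹ * eLpNorm (∑ i ∈ Finset.Icc 1 n, F i) 2 μpr
      ≤ ((n : ℝ≥0∞))⁻¹ * ((n : ℝ≥0∞) * B) := by gcongr
    _ = B := by
        rw [← mul_assoc, ENNReal.inv_mul_cancel hne (by simp), one_mul]

lemma harmonic_le_log : ∀ T : ℕ, 1 ≤ T → ∑ t ∈ Finset.Icc 1 T, (1:ℝ)/t ≤ 1 + Real.log T := by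
  intro T hT
  induction T, hT using Nat.le_induction with
  | base => simp
  | succ T hT ih =>
    rw [Finset.sum_Icc_succ_top (by omega : 1 ≤ T+1)]
    have hTpos : (0:ℝ) < T := by exact_mod_cast hT
    have hT1pos : (0:ℝ) < (T:ℝ)+1 := by linarith
    have hlog : Real.log T - Real.log ((T:ℝ)+1) ≤ (T:ℝ)/((T:ℝ)+1) - 1 := by
      have h1 : Real.log ((T:ℝ)/((T:ℝ)+1)) ≤ (T:ℝ)/((T:ℝ)+1) - 1 :=
        Real.log_le_sub_one_of_pos (by positivity)
      rw [Real.log_div (ne_of_gt hTpos) (ne_of_gt hT1pos)] at h1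
      exact h1
    have hfrac : (T:ℝ)/((T:ℝ)+1) - 1 = -(1/((T:ℝ)+1)) := by field_simp; ring
    push_cast
    nlinarith [hlog, hfrac ▸ hlog, ih]

lemma alpha_poly {α : ℝ} (h0 : 0 ≤ α) (h1 : α ≤ 1) :
    4*(1-α^2)^2 + 4*α*(1+α)^2 ≤ 16 := by
  have key : 4*(1-α^2)^2 + 4*α*(1+α)^2 = 16 - 4*((1-α) + (1-α^3) + (1-α^4)) := by ring
  rw [key]
  have h3 : α^3 ≤ 1 := pow_le_one₀ h0 h1
  have h4 : α^4 ≤ 1 := pow_le_one₀ h0 h1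
  linarith

set_option maxHeartbeats 1600000 in
lemma det_bound {E : Type*} [NormedAddCommGroup E] [InnerProductSpace ℝ E]
    {W : Set E} (hWcpt : IsCompact W) (hWconv : Convex ℝ W) (hW0 : (0:E) ∈ W)
    {D G μ : ℝ} (hG : 0 ≤ G) (hμ : 0 < μ) (hD : 0 ≤ D)
    (hdiam : ∀ x ∈ W, ∀ y ∈ W, ‖x - y‖ ≤ D)
    {T : ℕ} (hT : 1 ≤ T)
    (w g s a : ℕ → E) (L : ℕ → E → ℝ)
    (hwW : ∀ t ∈ Finset.Icc 1 (T+1), w t ∈ W)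
    (hw1 : w 1 = 0)
    (hgG : ∀ t ∈ Finset.Icc 1 T, ‖g t‖ ≤ G)
    (hs : ∀ t ∈ Finset.Icc 1 T, ∑ k ∈ Finset.Icc 1 t, s k = (∑ k ∈ Finset.Icc 1 t, g k) - a (t+1))
    (hL : ∀ t ∈ Finset.Icc 1 T, ∀ u ∈ W,
       L t (w t) - L t u ≤ ⟪g t, w t - u⟫ - μ/2 * ‖u - w t‖^2)
    (hupdate : ∀ t ∈ Finset.Icc 1 T, ∀ u ∈ W,
       ⟪∑ k ∈ Finset.Icc 1 t, s k, w (t+1)⟫ + μ/2 * ∑ k ∈ Finset.Icc 1 t, ‖w (t+1) - w k‖^2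
       ≤ ⟪∑ k ∈ Finset.Icc 1 t, s k, u⟫ + μ/2 * ∑ k ∈ Finset.Icc 1 t, ‖u - w k‖^2)
    (u : E) (hu : u ∈ W) :
    ∑ t ∈ Finset.Icc 1 T, (L t (w t) - L t u)
      ≤ ∑ t ∈ Finset.Icc 1 T, 4*G*(G+μ*D)/(μ*t)
        + ∑ t ∈ Finset.Icc 2 T, 2*G*‖a t‖/(μ*((t:ℝ)-1)) := by
  classical
  obtain ⟨Φ, hΦ⟩ : ∃ Φ : ℕ → E → ℝ, Φ = fun t z =>
    ⟪∑ k ∈ Finset.Icc 1 t, g k, z⟫ + μ/2 * ∑ k ∈ Finset.Icc 1 t, ‖z - w k‖^2 := ⟨_, rfl⟩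
  obtain ⟨F, hF⟩ : ∃ F : ℕ → E → ℝ, F = fun t z =>
    ⟪∑ k ∈ Finset.Icc 1 t, s k, z⟫ + μ/2 * ∑ k ∈ Finset.Icc 1 t, ‖z - w k‖^2 := ⟨_, rfl⟩
  obtain ⟨l, hl⟩ : ∃ l : ℕ → E → ℝ, l = fun t z =>
    ⟪g t, z⟫ + μ/2 * ‖z - w t‖^2 := ⟨_, rfl⟩
  have hΦ0 : ∀ z, Φ 0 z = 0 := by
    intro z; simp [hΦ, Finset.Icc_eq_empty (by omega : ¬ (1:ℕ) ≤ 0)]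
  have hΦsucc : ∀ t z, Φ (t+1) z = Φ t z + l (t+1) z := by
    intro t z
    simp only [hΦ, hl, Finset.sum_Icc_succ_top (by omega : 1 ≤ t+1)]
    rw [inner_add_left]; ring
  have hcont : ∀ t, Continuous (Φ t) := by
    intro t
    simp only [hΦ]
    apply Continuous.add
    · exact (innerSL ℝ (∑ k ∈ Finset.Icc 1 t, g k)).continuous
    · exact continuous_const.mul (continuous_finset_sum _ fun k _ =>
        ((continuous_id.sub continuous_const).norm.pow 2))
  have hminex : ∀ t, ∃ x, x ∈ W ∧ ∀ z ∈ W, Φ t x ≤ Φ t z := by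
    intro t
    obtain ⟨x, hxW, hx⟩ := hWcpt.exists_isMinOn ⟨0, hW0⟩ (hcont t).continuousOn
    exact ⟨x, hxW, fun z hz => hx hz⟩
  choose w0 hw0W hw0min using hminex
  obtain ⟨wh, hwh⟩ : ∃ wh : ℕ → E, wh = fun t => if t = 0 then 0 else w0 t := ⟨_, rfl⟩
  have hwhW : ∀ t, wh t ∈ W := by
    intro t; by_cases h : t = 0 <;> simp [hwh, h, hW0, hw0W t]
  have hwhmin : ∀ t, ∀ z ∈ W, Φ t (wh t) ≤ Φ t z := by
    intro t z hz
    by_cases h : t = 0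
    · subst h; simp only [hΦ0]; exact le_rfl
    · simpa [hwh, h] using hw0min t z hz
  -- quarter-strong minimality for Φ
  have hΦq : ∀ t, ∀ u' ∈ W, Φ t (wh t) + (t:ℝ)*μ/4 * ‖u' - wh t‖^2 ≤ Φ t u' := by
    intro t u' hu'
    have hq := quarter_min hWconv hμ.le (∑ k ∈ Finset.Icc 1 t, g k) (Finset.Icc 1 t) w
      (hwhW t) hu' (fun z hz => by simpa only [hΦ] using hwhmin t z hz)
    have hcard : ((Finset.Icc 1 t).card : ℝ) = (t:ℝ) := by
      rw [Nat.card_Icc]; push_cast [Nat.add_sub_cancel]; ring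
    rw [hcard] at hq
    simpa only [hΦ] using hq
  have hFq : ∀ t ∈ Finset.Icc 1 T, ∀ u' ∈ W,
      F t (w (t+1)) + (t:ℝ)*μ/4 * ‖u' - w (t+1)‖^2 ≤ F t u' := by
    intro t ht u' hu'
    have hwt1W : w (t+1) ∈ W := by
      apply hwW; simp only [Finset.mem_Icc] at ht ⊢; omega
    have hq := quarter_min hWconv hμ.le (∑ k ∈ Finset.Icc 1 t, s k) (Finset.Icc 1 t) w
      hwt1W hu' (fun z hz => hupdate t ht z hz)
    have hcard : ((Finset.Icc 1 t).card : ℝ) = (t:ℝ) := by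
      rw [Nat.card_Icc]; push_cast [Nat.add_sub_cancel]; ring
    rw [hcard] at hq
    simpa only [hF] using hq
  have hΦF : ∀ t ∈ Finset.Icc 1 T, ∀ z, Φ t z = F t z + ⟪a (t+1), z⟫ := by
    intro t ht z
    simp only [hΦ, hF, hs t ht, inner_sub_left]
    ring
  -- step 2 : distance between true iterate and idealized iterate
  have hstep2 : ∀ t ∈ Finset.Icc 1 T, ‖w (t+1) - wh t‖ ≤ 2*‖a (t+1)‖/(μ*t) := by
    intro t ht
    have htpos : (1:ℝ) ≤ (t:ℝ) := by
      simp only [Finset.mem_Icc] at ht; exact_mod_cast ht.1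
    have hwt1W : w (t+1) ∈ W := by
      apply hwW; simp only [Finset.mem_Icc] at ht ⊢; omega
    have h1 := hFq t ht (wh t) (hwhW t)
    have h2 := hΦq t (w (t+1)) hwt1W
    rw [hΦF t ht (w (t+1)), hΦF t ht (wh t)] at h2
    have hnorm : ‖wh t - w (t+1)‖ = ‖w (t+1) - wh t‖ := norm_sub_rev _ _
    rw [hnorm] at h1
    have hCS : ⟪a (t+1), w (t+1) - wh t⟫ ≤ ‖a (t+1)‖ * ‖w (t+1) - wh t‖ :=
      real_inner_le_norm _ _
    have hinner : ⟪a (t+1), w (t+1)⟫ - ⟪a (t+1), wh t⟫ = ⟪a (t+1), w (t+1) - wh t⟫ := by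
      rw [inner_sub_right]
    have hdnn : (0:ℝ) ≤ ‖w (t+1) - wh t‖ := norm_nonneg _
    have hkey : (t:ℝ)*μ/2 * ‖w (t+1) - wh t‖^2 ≤ ‖a (t+1)‖ * ‖w (t+1) - wh t‖ := by
      nlinarith [h1, h2, hCS, hinner]
    rcases eq_or_lt_of_le hdnn with h0 | hpos
    · rw [← h0]; positivity
    · rw [le_div_iff₀ (by positivity : (0:ℝ) < μ*(t:ℝ))]
      have h4 : ((t:ℝ)*μ/2 * ‖w (t+1) - wh t‖) * ‖w (t+1) - wh t‖
          ≤ ‖a (t+1)‖ * ‖w (t+1) - wh t‖ := by linarith [hkey]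
      have h5 : (t:ℝ)*μ/2 * ‖w (t+1) - wh t‖ ≤ ‖a (t+1)‖ := le_of_mul_le_mul_right h4 hpos
      linarith [h5]
  -- step 3 : stability of idealized iterates
  have hstep3 : ∀ t ∈ Finset.Icc 1 T, ‖wh t - wh (t-1)‖ ≤ 4*(G+μ*D)/(μ*t) := by
    intro t ht
    simp only [Finset.mem_Icc] at ht
    obtain ⟨m, rfl⟩ : ∃ m, t = m + 1 := ⟨t-1, by omega⟩
    simp only [Nat.add_sub_cancel]
    have hm1 : m + 1 ∈ Finset.Icc 1 T := by simp only [Finset.mem_Icc]; omega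
    have h1 := hΦq m (wh (m+1)) (hwhW (m+1))
    have h2 := hΦq (m+1) (wh m) (hwhW m)
    rw [hΦsucc m (wh (m+1)), hΦsucc m (wh m)] at h2
    have hnorm : ‖wh m - wh (m+1)‖ = ‖wh (m+1) - wh m‖ := norm_sub_rev _ _
    rw [hnorm] at h2
    -- Lipschitz bound on l (m+1)
    have hwmW : w (m+1) ∈ W := hwW (m+1) (by simp only [Finset.mem_Icc] at hm1 ⊢; omega)
    have hlip : l (m+1) (wh m) - l (m+1) (wh (m+1)) ≤ (G + μ*D) * ‖wh (m+1) - wh m‖ := by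
      have hgb : ‖g (m+1)‖ ≤ G := hgG (m+1) hm1
      have hCS : ⟪g (m+1), wh m - wh (m+1)⟫ ≤ ‖g (m+1)‖ * ‖wh (m+1) - wh m‖ := by
        rw [← hnorm]; exact real_inner_le_norm _ _
      have hinner : ⟪g (m+1), wh m⟫ - ⟪g (m+1), wh (m+1)⟫ = ⟪g (m+1), wh m - wh (m+1)⟫ := by
        rw [inner_sub_right]
      have haD : ‖wh m - w (m+1)‖ ≤ D := hdiam _ (hwhW m) _ hwmW
      have hbD : ‖wh (m+1) - w (m+1)‖ ≤ D := hdiam _ (hwhW (m+1)) _ hwmW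
      have htri : ‖wh m - w (m+1)‖ - ‖wh (m+1) - w (m+1)‖ ≤ ‖wh (m+1) - wh m‖ := by
        rw [← hnorm]
        calc ‖wh m - w (m+1)‖ - ‖wh (m+1) - w (m+1)‖
            ≤ ‖(wh m - w (m+1)) - (wh (m+1) - w (m+1))‖ := norm_sub_norm_le _ _
          _ = ‖wh m - wh (m+1)‖ := by congr 1; abel
      have htri' : ‖wh (m+1) - w (m+1)‖ - ‖wh m - w (m+1)‖ ≤ ‖wh (m+1) - wh m‖ := by
        calc ‖wh (m+1) - w (m+1)‖ - ‖wh m - w (m+1)‖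
            ≤ ‖(wh (m+1) - w (m+1)) - (wh m - w (m+1))‖ := norm_sub_norm_le _ _
          _ = ‖wh (m+1) - wh m‖ := by congr 1; abel
      have hrnn : (0:ℝ) ≤ ‖wh (m+1) - wh m‖ := norm_nonneg _
      have hna : (0:ℝ) ≤ ‖wh m - w (m+1)‖ := norm_nonneg _
      have hnb : (0:ℝ) ≤ ‖wh (m+1) - w (m+1)‖ := norm_nonneg _
      have hab : ‖wh m - w (m+1)‖^2 - ‖wh (m+1) - w (m+1)‖^2 ≤ 2*D*‖wh (m+1) - wh m‖ := by
        nlinarith [mul_nonneg (add_nonneg hna hnb) (sub_nonneg.2 htri),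
          mul_nonneg (sub_nonneg.2 (add_le_add haD hbD)) hrnn]
      have hmuab : μ/2 * (‖wh m - w (m+1)‖^2 - ‖wh (m+1) - w (m+1)‖^2)
          ≤ μ/2 * (2*D*‖wh (m+1) - wh m‖) :=
        mul_le_mul_of_nonneg_left hab (by positivity)
      have hinn2 : ⟪g (m+1), wh m⟫ - ⟪g (m+1), wh (m+1)⟫ ≤ G * ‖wh (m+1) - wh m‖ := by
        rw [hinner]
        exact hCS.trans (mul_le_mul_of_nonneg_right hgb hrnn)
      simp only [hl]
      linarith [hmuab, hinn2]
    have hrnn : (0:ℝ) ≤ ‖wh (m+1) - wh m‖ := norm_nonneg _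
    have hmc : (0:ℝ) ≤ (m:ℝ) := by positivity
    push_cast at h2
    have hkey : ((m:ℝ)+1)*μ/4 * ‖wh (m+1) - wh m‖^2 ≤ (G + μ*D) * ‖wh (m+1) - wh m‖ := by
      linarith [h1, h2, hlip, mul_nonneg (mul_nonneg hmc hμ.le) (sq_nonneg ‖wh (m+1) - wh m‖)]
    have hGD : (0:ℝ) ≤ G + μ*D := by positivity
    rcases eq_or_lt_of_le hrnn with h0 | hpos
    · rw [← h0]
      have : (0:ℝ) < μ*((m:ℝ)+1) := by positivity
      positivity
    · have hgoal : (0:ℝ) < μ*((m:ℝ)+1) := by positivity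
      have : (((m:ℕ)+1 : ℕ) : ℝ) = (m:ℝ)+1 := by push_cast; ring
      rw [this, le_div_iff₀ hgoal]
      have h4 : (((m:ℝ)+1)*μ/4 * ‖wh (m+1) - wh m‖) * ‖wh (m+1) - wh m‖
          ≤ (G + μ*D) * ‖wh (m+1) - wh m‖ := by linarith [hkey]
      have h5 : ((m:ℝ)+1)*μ/4 * ‖wh (m+1) - wh m‖ ≤ G + μ*D := le_of_mul_le_mul_right h4 hpos
      linarith [h5]
  -- be-the-leader
  have hBTL : ∀ m : ℕ, ∑ t ∈ Finset.Icc 1 m, l t (wh t) ≤ Φ m (wh m) := by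
    intro m
    induction m with
    | zero => simp [hΦ0, Finset.Icc_eq_empty (by omega : ¬ (1:ℕ) ≤ 0)]
    | succ m ih =>
      rw [Finset.sum_Icc_succ_top (by omega : 1 ≤ m+1), hΦsucc m (wh (m+1))]
      have := hwhmin m (wh (m+1)) (hwhW (m+1))
      linarith
  have hΦu : Φ T u = ∑ t ∈ Finset.Icc 1 T, l t u := by
    simp only [hΦ, hl]
    rw [sum_inner, Finset.mul_sum, ← Finset.sum_add_distrib]
  -- combine
  have hmain : ∑ t ∈ Finset.Icc 1 T, (L t (w t) - L t u)
      ≤ ∑ t ∈ Finset.Icc 1 T, (l t (w t) - l t (wh t)) := by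
    have h1 : ∑ t ∈ Finset.Icc 1 T, (L t (w t) - L t u)
        ≤ ∑ t ∈ Finset.Icc 1 T, (l t (w t) - l t u) := by
      apply Finset.sum_le_sum
      intro t ht
      have := hL t ht u hu
      have hlid : l t (w t) - l t u = ⟪g t, w t - u⟫ - μ/2 * ‖u - w t‖^2 := by
        simp only [hl, inner_sub_right, sub_self, norm_zero]
        ring
      rw [hlid]
      exact this
    have h2 : ∑ t ∈ Finset.Icc 1 T, l t (wh t) ≤ ∑ t ∈ Finset.Icc 1 T, l t u := by
      calc ∑ t ∈ Finset.Icc 1 T, l t (wh t) ≤ Φ T (wh T) := hBTL T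
        _ ≤ Φ T u := hwhmin T u hu
        _ = ∑ t ∈ Finset.Icc 1 T, l t u := hΦu
    simp only [Finset.sum_sub_distrib] at h1 h2 ⊢
    linarith
  -- per-round bound
  have hper : ∀ t ∈ Finset.Icc 1 T, l t (w t) - l t (wh t)
      ≤ 4*G*(G+μ*D)/(μ*t) + (if 2 ≤ t then 2*G*‖a t‖/(μ*((t:ℝ)-1)) else 0) := by
    intro t ht
    simp only [Finset.mem_Icc] at ht
    have hwtW : w t ∈ W := hwW t (by simp only [Finset.mem_Icc]; omega)
    have hgb : ‖g t‖ ≤ G := hgG t (by simp only [Finset.mem_Icc]; omega)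
    have hl1 : l t (w t) - l t (wh t) ≤ G * ‖w t - wh t‖ := by
      simp only [hl, sub_self, norm_zero]
      have hCS : ⟪g t, w t - wh t⟫ ≤ ‖g t‖ * ‖w t - wh t‖ := real_inner_le_norm _ _
      have hinner : ⟪g t, w t⟫ - ⟪g t, wh t⟫ = ⟪g t, w t - wh t⟫ := by rw [inner_sub_right]
      have h2 : (0:ℝ) ≤ μ/2 * ‖wh t - w t‖^2 := by positivity
      have h3 : ⟪g t, w t⟫ - ⟪g t, wh t⟫ ≤ G * ‖w t - wh t‖ := by
        rw [hinner]; exact hCS.trans (mul_le_mul_of_nonneg_right hgb (norm_nonneg _))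
      linarith [h3, h2]
    have htri : ‖w t - wh t‖ ≤ ‖w t - wh (t-1)‖ + ‖wh t - wh (t-1)‖ := by
      calc ‖w t - wh t‖ = ‖(w t - wh (t-1)) - (wh t - wh (t-1))‖ := by congr 1; abel
        _ ≤ ‖w t - wh (t-1)‖ + ‖wh t - wh (t-1)‖ := norm_sub_le _ _
    have hstep3t : ‖wh t - wh (t-1)‖ ≤ 4*(G+μ*D)/(μ*t) :=
      hstep3 t (by simp only [Finset.mem_Icc]; omega)
    have hfirst : ‖w t - wh (t-1)‖ ≤ (if 2 ≤ t then 2*‖a t‖/(μ*((t:ℝ)-1)) else 0) := by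
      by_cases h2t : 2 ≤ t
      · simp only [h2t, if_true]
        obtain ⟨m, rfl⟩ : ∃ m, t = m + 1 := ⟨t-1, by omega⟩
        simp only [Nat.add_sub_cancel]
        have := hstep2 m (by simp only [Finset.mem_Icc]; omega)
        have hc : ((m:ℝ)+1) - 1 = (m:ℝ) := by ring
        push_cast
        rw [hc]
        exact this
      · have h1t : t = 1 := by omega
        subst h1t
        simp only [if_neg h2t]
        have : wh (1-1) = 0 := by norm_num [hwh]
        rw [hw1, this]
        simp
    have hGnn : (0:ℝ) ≤ ‖w t - wh (t-1)‖ := norm_nonneg _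
    have hfin : G * ‖w t - wh t‖ ≤ 4*G*(G+μ*D)/(μ*t)
        + (if 2 ≤ t then 2*G*‖a t‖/(μ*((t:ℝ)-1)) else 0) := by
      have hb : G * ‖w t - wh t‖ ≤ G * (‖w t - wh (t-1)‖ + ‖wh t - wh (t-1)‖) :=
        mul_le_mul_of_nonneg_left htri hG
      have hc : G * (‖w t - wh (t-1)‖ + ‖wh t - wh (t-1)‖)
          ≤ G * ((if 2 ≤ t then 2*‖a t‖/(μ*((t:ℝ)-1)) else 0) + 4*(G+μ*D)/(μ*t)) := by
        apply mul_le_mul_of_nonneg_left _ hG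
        linarith [hfirst, hstep3t]
      have hd : G * ((if 2 ≤ t then 2*‖a t‖/(μ*((t:ℝ)-1)) else 0) + 4*(G+μ*D)/(μ*t))
          = (if 2 ≤ t then 2*G*‖a t‖/(μ*((t:ℝ)-1)) else 0) + 4*G*(G+μ*D)/(μ*t) := by
        by_cases h2t : 2 ≤ t <;> simp [h2t] <;> ring
      linarith [hb.trans (hc.trans_eq hd)]
    linarith [hl1, hfin]
  calc ∑ t ∈ Finset.Icc 1 T, (L t (w t) - L t u)
      ≤ ∑ t ∈ Finset.Icc 1 T, (l t (w t) - l t (wh t)) := hmain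
    _ ≤ ∑ t ∈ Finset.Icc 1 T, (4*G*(G+μ*D)/(μ*t)
        + (if 2 ≤ t then 2*G*‖a t‖/(μ*((t:ℝ)-1)) else 0)) := Finset.sum_le_sum hper
    _ = ∑ t ∈ Finset.Icc 1 T, 4*G*(G+μ*D)/(μ*t)
        + ∑ t ∈ Finset.Icc 2 T, 2*G*‖a t‖/(μ*((t:ℝ)-1)) := by
      rw [Finset.sum_add_distrib]
      congr 1
      have hfil : Finset.Icc 2 T = (Finset.Icc 1 T).filter (fun t => 2 ≤ t) := by
        ext x; simp only [Finset.mem_filter, Finset.mem_Icc]; omega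
      rw [hfil, Finset.sum_filter]

end Helpers

set_option maxHeartbeats 3200000 in
/-- regret of D-FTCL for strongly convex losses. In the D-OCO setting over
a compact convex domain `W ∋ 0` of diameter at most `D`, with `μ`-strongly convex
differentiable losses `f_i^t` whose (individual and averaged) gradients are bounded by `G` on
`W`, run D-FTCL with a `δ`-contractive compressor on both learner and server sides and the
strongly convex update
`w^{t+1} = argmin_{w ∈ W} ⟨Σ_{k=1}^t s^k, w⟩ + (μ/2) Σ_{k=1}^t ‖w − w^k‖²`. Then the
expected regret satisfies `E[R_T] ≤ 17 (G + μD)² (1 + log T) / (μ δ²)`.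

`δ`-contractiveness of the compressor (with independent fresh randomness per invocation) is
encoded by the expected contraction hypotheses `hClearner` and `hCserver`. -/
theorem dftcl_strongly_convex_regret
    {d n T : ℕ} (hn : 1 ≤ n) (hT : 1 ≤ T)
    {Ω : Type*} [MeasurableSpace Ω] (μpr : Measure Ω) [IsProbabilityMeasure μpr]
    (W : Set (EuclideanSpace ℝ (Fin d)))
    (hWcpt : IsCompact W) (hWconv : Convex ℝ W)
    (hW0 : (0 : EuclideanSpace ℝ (Fin d)) ∈ W)
    (D G δ μ : ℝ) (hD : 0 < D) (hG : 0 < G) (hδ0 : 0 < δ) (hδ1 : δ ≤ 1) (hμ : 0 < μ)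
    (hdiam : ∀ x ∈ W, ∀ y ∈ W, ‖x - y‖ ≤ D)
    (f : ℕ → ℕ → EuclideanSpace ℝ (Fin d) → ℝ)
    (hdiff : ∀ i ∈ Finset.Icc 1 n, ∀ t ∈ Finset.Icc 1 T, Differentiable ℝ (f i t))
    (hsc : ∀ i ∈ Finset.Icc 1 n, ∀ t ∈ Finset.Icc 1 T, ∀ x ∈ W, ∀ y ∈ W,
      f i t x + ⟪gradient (f i t) x, y - x⟫ + μ / 2 * ‖y - x‖ ^ 2 ≤ f i t y)
    (hgrad : ∀ i ∈ Finset.Icc 1 n, ∀ t ∈ Finset.Icc 1 T, ∀ u ∈ W,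
      ‖gradient (f i t) u‖ ≤ G)
    (hgradavg : ∀ t ∈ Finset.Icc 1 T, ∀ u ∈ W,
      ‖(n : ℝ)⁻¹ • ∑ i ∈ Finset.Icc 1 n, gradient (f i t) u‖ ≤ G)
    (w : ℕ → Ω → EuclideanSpace ℝ (Fin d))
    (v e : ℕ → ℕ → Ω → EuclideanSpace ℝ (Fin d))
    (vbar s ehat : ℕ → Ω → EuclideanSpace ℝ (Fin d))
    (hmw : ∀ t, Measurable (w t)) (hmv : ∀ i t, Measurable (v i t))
    (hms : ∀ t, Measurable (s t))
    (hw1 : w 1 = fun _ => 0)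
    (he1 : ∀ i, e i 1 = fun _ => 0)
    (hehat1 : ehat 1 = fun _ => 0)
    (herec : ∀ i, ∀ t, 1 ≤ t → ∀ ω,
      e i (t + 1) ω = e i t ω + gradient (f i t) (w t ω) - v i t ω)
    (hvbar : ∀ t ω, vbar t ω = (n : ℝ)⁻¹ • ∑ i ∈ Finset.Icc 1 n, v i t ω)
    (hehatrec : ∀ t, 1 ≤ t → ∀ ω, ehat (t + 1) ω = ehat t ω + vbar t ω - s t ω)
    (hClearner : ∀ i ∈ Finset.Icc 1 n, ∀ t ∈ Finset.Icc 1 T,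
      ∫⁻ ω, (‖v i t ω - (e i t ω + gradient (f i t) (w t ω))‖₊ : ℝ≥0∞) ^ 2 ∂μpr
        ≤ ENNReal.ofReal (1 - δ) *
          ∫⁻ ω, (‖e i t ω + gradient (f i t) (w t ω)‖₊ : ℝ≥0∞) ^ 2 ∂μpr)
    (hCserver : ∀ t ∈ Finset.Icc 1 T,
      ∫⁻ ω, (‖s t ω - (ehat t ω + vbar t ω)‖₊ : ℝ≥0∞) ^ 2 ∂μpr
        ≤ ENNReal.ofReal (1 - δ) * ∫⁻ ω, (‖ehat t ω + vbar t ω‖₊ : ℝ≥0∞) ^ 2 ∂μpr)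
    (hupdateW : ∀ t ∈ Finset.Icc 1 T, ∀ ω, w (t + 1) ω ∈ W)
    (hupdate : ∀ t ∈ Finset.Icc 1 T, ∀ ω, ∀ u ∈ W,
      ⟪∑ k ∈ Finset.Icc 1 t, s k ω, w (t + 1) ω⟫
          + μ / 2 * ∑ k ∈ Finset.Icc 1 t, ‖w (t + 1) ω - w k ω‖ ^ 2
        ≤ ⟪∑ k ∈ Finset.Icc 1 t, s k ω, u⟫
          + μ / 2 * ∑ k ∈ Finset.Icc 1 t, ‖u - w k ω‖ ^ 2) :
    ∫⁻ ω, ENNReal.ofReal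
        ((n : ℝ)⁻¹ * ∑ t ∈ Finset.Icc 1 T, ∑ i ∈ Finset.Icc 1 n, f i t (w t ω)
          - ⨅ u : W, (n : ℝ)⁻¹ * ∑ t ∈ Finset.Icc 1 T, ∑ i ∈ Finset.Icc 1 n, f i t u) ∂μpr
      ≤ ENNReal.ofReal (17 * (G + μ * D) ^ 2 * (1 + Real.log T) / (μ * δ ^ 2)) := by
  classical
  haveI : Nonempty W := ⟨⟨0, hW0⟩⟩
  have hn0 : ((n:ℝ)) ≠ 0 := by positivity
  -- constants
  obtain ⟨α, hα⟩ : ∃ α : ℝ, α = Real.sqrt (1 - δ) := ⟨_, rfl⟩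
  have hδnn : (0:ℝ) ≤ 1 - δ := by linarith
  have hα0 : 0 ≤ α := hα ▸ Real.sqrt_nonneg _
  have hα2 : α^2 = 1 - δ := by rw [hα]; exact Real.sq_sqrt hδnn
  have hα1 : α < 1 := by nlinarith [hα2, hα0]
  have h1α : (0:ℝ) < 1 - α := by linarith
  obtain ⟨E0, hE0⟩ : ∃ x : ℝ, x = α*G/(1-α) := ⟨_, rfl⟩
  obtain ⟨V, hV⟩ : ∃ x : ℝ, x = G + 2*E0 := ⟨_, rfl⟩
  obtain ⟨Eh0, hEh0⟩ : ∃ x : ℝ, x = α*V/(1-α) := ⟨_, rfl⟩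
  obtain ⟨A, hA⟩ : ∃ x : ℝ, x = E0 + Eh0 := ⟨_, rfl⟩
  have hE0nn : 0 ≤ E0 := hE0 ▸ div_nonneg (mul_nonneg hα0 hG.le) h1α.le
  have hVnn : 0 ≤ V := by rw [hV]; linarith [hG.le, hE0nn]
  have hEh0nn : 0 ≤ Eh0 := hEh0 ▸ div_nonneg (mul_nonneg hα0 hVnn) h1α.le
  have hAnn : 0 ≤ A := by rw [hA]; linarith
  -- abbreviations
  obtain ⟨g, hg⟩ : ∃ g : ℕ → Ω → EuclideanSpace ℝ (Fin d),
      g = fun t ω => (n:ℝ)⁻¹ • ∑ i ∈ Finset.Icc 1 n, gradient (f i t) (w t ω) := ⟨_, rfl⟩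
  obtain ⟨eb, heb⟩ : ∃ eb : ℕ → Ω → EuclideanSpace ℝ (Fin d),
      eb = fun t ω => (n:ℝ)⁻¹ • ∑ i ∈ Finset.Icc 1 n, e i t ω := ⟨_, rfl⟩
  obtain ⟨aa, haa⟩ : ∃ aa : ℕ → Ω → EuclideanSpace ℝ (Fin d),
      aa = fun t ω => ehat t ω + eb t ω := ⟨_, rfl⟩
  -- membership of iterates
  have hwtW : ∀ t ∈ Finset.Icc 1 (T+1), ∀ ω, w t ω ∈ W := by
    intro t ht ω
    simp only [Finset.mem_Icc] at ht
    rcases eq_or_lt_of_le ht.1 with h1 | h1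
    · rw [← h1, hw1]; exact hW0
    · obtain ⟨k, rfl⟩ : ∃ k, t = k+1 := ⟨t-1, by omega⟩
      exact hupdateW k (by simp only [Finset.mem_Icc]; omega) ω
  -- gradient norm bounds
  have hgG : ∀ t ∈ Finset.Icc 1 T, ∀ ω, ‖g t ω‖ ≤ G := by
    intro t ht ω
    rw [hg]
    exact hgradavg t ht _ (hwtW t (by simp only [Finset.mem_Icc] at ht ⊢; omega) ω)
  have hgradG : ∀ i ∈ Finset.Icc 1 n, ∀ t ∈ Finset.Icc 1 T, ∀ ω,
      ‖gradient (f i t) (w t ω)‖ ≤ G := by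
    intro i hi t ht ω
    exact hgrad i hi t ht _ (hwtW t (by simp only [Finset.mem_Icc] at ht ⊢; omega) ω)
  -- measurability
  have hmgrad : ∀ i t, Measurable (fun ω => gradient (f i t) (w t ω)) := by
    intro i t
    have hgm : Measurable (gradient (f i t)) := by
      unfold gradient
      exact (LinearIsometryEquiv.continuous _).measurable.comp (measurable_fderiv ℝ _)
    exact hgm.comp (hmw t)
  have hme : ∀ i t, 1 ≤ t → Measurable (e i t) := by
    intro i t ht
    induction t, ht using Nat.le_induction with
    | base => rw [he1]; exact measurable_const
    | succ t ht ih =>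
      have hrec : e i (t+1) = fun ω => e i t ω + gradient (f i t) (w t ω) - v i t ω :=
        funext (herec i t ht)
      rw [hrec]
      exact (ih.add (hmgrad i t)).sub (hmv i t)
  have hmvbar : ∀ t, Measurable (vbar t) := by
    intro t
    have hrec : vbar t = fun ω => (n:ℝ)⁻¹ • ∑ i ∈ Finset.Icc 1 n, v i t ω :=
      funext (hvbar t)
    rw [hrec]
    exact (Finset.measurable_sum _ (fun i _ => hmv i t)).const_smul ((n:ℝ)⁻¹)
  have hmehat : ∀ t, 1 ≤ t → Measurable (ehat t) := by
    intro t ht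
    induction t, ht using Nat.le_induction with
    | base => rw [hehat1]; exact measurable_const
    | succ t ht ih =>
      have hrec : ehat (t+1) = fun ω => ehat t ω + vbar t ω - s t ω :=
        funext (hehatrec t ht)
      rw [hrec]
      exact (ih.add (hmvbar t)).sub (hms t)
  have hmeb : ∀ t, 1 ≤ t → Measurable (eb t) := by
    intro t ht
    rw [heb]
    exact (Finset.measurable_sum _ (fun i _ => hme i t ht)).const_smul ((n:ℝ)⁻¹)
  have hma : ∀ t, 1 ≤ t → Measurable (aa t) := by
    intro t ht
    rw [haa]
    exact (hmehat t ht).add (hmeb t ht)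
  -- recursions for averaged quantities
  have hebrec : ∀ t, 1 ≤ t → ∀ ω, eb (t+1) ω = eb t ω + g t ω - vbar t ω := by
    intro t ht ω
    rw [heb, hg, hvbar]
    simp only
    rw [Finset.sum_congr rfl (fun i _ => herec i t ht ω)]
    rw [Finset.sum_sub_distrib, Finset.sum_add_distrib, smul_sub, smul_add]
  have haa1 : ∀ ω, aa 1 ω = 0 := by
    intro ω
    rw [haa]
    simp only
    rw [hehat1, heb]
    simp [he1]
  have haarec : ∀ t, 1 ≤ t → ∀ ω, aa (t+1) ω = aa t ω + g t ω - s t ω := by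
    intro t ht ω
    rw [haa]
    simp only
    rw [hehatrec t ht ω, hebrec t ht ω]
    abel
  have hsid : ∀ ω, ∀ t, 1 ≤ t →
      ∑ k ∈ Finset.Icc 1 t, s k ω = (∑ k ∈ Finset.Icc 1 t, g k ω) - aa (t+1) ω := by
    intro ω t ht
    induction t, ht using Nat.le_induction with
    | base =>
      simp only [Finset.Icc_self, Finset.sum_singleton]
      have h2 := haarec 1 le_rfl ω
      rw [haa1 ω] at h2
      rw [h2]; abel
    | succ t ht ih =>
      rw [Finset.sum_Icc_succ_top (by omega : 1 ≤ t+1),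
        Finset.sum_Icc_succ_top (by omega : 1 ≤ t+1), ih,
        haarec (t+1) (by omega) ω]
      abel
  -- L² bounds on learner errors
  have heL2 : ∀ i ∈ Finset.Icc 1 n, ∀ t, 1 ≤ t → t ≤ T+1 →
      eLpNorm (e i t) 2 μpr ≤ ENNReal.ofReal E0 := by
    intro i hi t ht
    induction t, ht using Nat.le_induction with
    | base =>
      intro _
      rw [he1]
      simp only [eLpNorm_zero']
      exact zero_le
    | succ t ht ih =>
      intro hle
      have htT : t ∈ Finset.Icc 1 T := by simp only [Finset.mem_Icc]; omega
      have hprev := ih (by omega)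
      have hint : ∫⁻ ω, (‖e i (t+1) ω‖₊ : ℝ≥0∞)^2 ∂μpr
          ≤ ENNReal.ofReal (1-δ)
            * ∫⁻ ω, (‖e i t ω + gradient (f i t) (w t ω)‖₊ : ℝ≥0∞)^2 ∂μpr := by
        refine le_trans (le_of_eq (lintegral_congr fun ω => ?_)) (hClearner i hi t htT)
        rw [herec i t ht ω]
        rw [show e i t ω + gradient (f i t) (w t ω) - v i t ω
            = -(v i t ω - (e i t ω + gradient (f i t) (w t ω))) from by abel, nnnorm_neg]
      have hstep := contract_step (fun ω => e i t ω + gradient (f i t) (w t ω))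
        (e i (t+1)) hδnn hint
      rw [← hα] at hstep
      have hgb2 : eLpNorm (fun ω => gradient (f i t) (w t ω)) 2 μpr ≤ ENNReal.ofReal G := by
        refine le_trans (eLpNorm_le_of_ae_bound
          (Filter.Eventually.of_forall fun ω => hgradG i hi t htT ω)) ?_
        simp [measure_univ]
      have htr : eLpNorm (fun ω => e i t ω + gradient (f i t) (w t ω)) 2 μpr
          ≤ ENNReal.ofReal E0 + ENNReal.ofReal G := by
        refine le_trans (eLpNorm_add_le (hme i t ht).aestronglyMeasurable
          (hmgrad i t).aestronglyMeasurable (by norm_num)) ?_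
        exact add_le_add hprev hgb2
      calc eLpNorm (e i (t+1)) 2 μpr
          ≤ ENNReal.ofReal α * (ENNReal.ofReal E0 + ENNReal.ofReal G) :=
            hstep.trans (mul_le_mul_right htr _)
        _ = ENNReal.ofReal (α * (E0 + G)) := by
            rw [← ENNReal.ofReal_add hE0nn hG.le, ← ENNReal.ofReal_mul hα0]
        _ = ENNReal.ofReal E0 := by
            congr 1
            rw [hE0]
            have hne : (1:ℝ)-α ≠ 0 := ne_of_gt h1α
            have hEG : α*G/(1-α) + G = G/(1-α) := by
              rw [div_add' _ _ _ hne]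
              congr 1
              ring
            rw [hEG, mul_div_assoc']
  -- L² bound on averaged learner error
  have hebL2 : ∀ t, 1 ≤ t → t ≤ T+1 → eLpNorm (eb t) 2 μpr ≤ ENNReal.ofReal E0 := by
    intro t ht hle
    rw [heb]
    exact avg_eLpNorm_le hn (fun i => e i t)
      (fun i _ => (hme i t ht).aestronglyMeasurable)
      (fun i hi => heL2 i hi t ht hle)
  -- L² bound on vbar
  have hvbarL2 : ∀ t ∈ Finset.Icc 1 T, eLpNorm (vbar t) 2 μpr ≤ ENNReal.ofReal V := by
    intro t ht
    simp only [Finset.mem_Icc] at ht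
    have hrew : vbar t = fun ω => (eb t ω + g t ω) - eb (t+1) ω := by
      funext ω
      have := hebrec t ht.1 ω
      rw [this]; abel
    rw [hrew]
    have hgbL2 : eLpNorm (g t) 2 μpr ≤ ENNReal.ofReal G := by
      refine le_trans (eLpNorm_le_of_ae_bound
        (Filter.Eventually.of_forall fun ω => hgG t (by simp only [Finset.mem_Icc]; omega) ω)) ?_
      simp [measure_univ]
    have hmg : Measurable (g t) := by
      rw [hg]
      exact (Finset.measurable_sum _ (fun i _ => hmgrad i t)).const_smul ((n:ℝ)⁻¹)
    have h1 : eLpNorm (fun ω => eb t ω + g t ω) 2 μpr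
        ≤ ENNReal.ofReal E0 + ENNReal.ofReal G := by
      refine le_trans (eLpNorm_add_le (hmeb t ht.1).aestronglyMeasurable
        hmg.aestronglyMeasurable (by norm_num)) ?_
      exact add_le_add (hebL2 t ht.1 (by omega)) hgbL2
    refine le_trans (eLpNorm_sub_le ((hmeb t ht.1).add hmg).aestronglyMeasurable
      (hmeb (t+1) (by omega)).aestronglyMeasurable (by norm_num)) ?_
    calc eLpNorm (fun ω => eb t ω + g t ω) 2 μpr + eLpNorm (eb (t+1)) 2 μpr
        ≤ (ENNReal.ofReal E0 + ENNReal.ofReal G) + ENNReal.ofReal E0 :=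
          add_le_add h1 (hebL2 (t+1) (by omega) (by omega))
      _ = ENNReal.ofReal V := by
          rw [← ENNReal.ofReal_add hE0nn hG.le, ← ENNReal.ofReal_add (by linarith) hE0nn]
          congr 1
          rw [hV]; ring
  -- L² bound on server error
  have hehatL2 : ∀ t, 1 ≤ t → t ≤ T+1 → eLpNorm (ehat t) 2 μpr ≤ ENNReal.ofReal Eh0 := by
    intro t ht
    induction t, ht using Nat.le_induction with
    | base =>
      intro _
      rw [hehat1]
      simp only [eLpNorm_zero']
      exact zero_le
    | succ t ht ih =>
      intro hle
      have htT : t ∈ Finset.Icc 1 T := by simp only [Finset.mem_Icc]; omega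
      have hprev := ih (by omega)
      have hint : ∫⁻ ω, (‖ehat (t+1) ω‖₊ : ℝ≥0∞)^2 ∂μpr
          ≤ ENNReal.ofReal (1-δ) * ∫⁻ ω, (‖ehat t ω + vbar t ω‖₊ : ℝ≥0∞)^2 ∂μpr := by
        refine le_trans (le_of_eq (lintegral_congr fun ω => ?_)) (hCserver t htT)
        rw [hehatrec t ht ω]
        rw [show ehat t ω + vbar t ω - s t ω
            = -(s t ω - (ehat t ω + vbar t ω)) from by abel, nnnorm_neg]
      have hstep := contract_step (fun ω => ehat t ω + vbar t ω)
        (ehat (t+1)) hδnn hint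
      rw [← hα] at hstep
      have htr : eLpNorm (fun ω => ehat t ω + vbar t ω) 2 μpr
          ≤ ENNReal.ofReal Eh0 + ENNReal.ofReal V := by
        refine le_trans (eLpNorm_add_le (hmehat t ht).aestronglyMeasurable
          (hmvbar t).aestronglyMeasurable (by norm_num)) ?_
        exact add_le_add hprev (hvbarL2 t htT)
      calc eLpNorm (ehat (t+1)) 2 μpr
          ≤ ENNReal.ofReal α * (ENNReal.ofReal Eh0 + ENNReal.ofReal V) :=
            hstep.trans (mul_le_mul_right htr _)
        _ = ENNReal.ofReal (α * (Eh0 + V)) := by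
            rw [← ENNReal.ofReal_add hEh0nn hVnn, ← ENNReal.ofReal_mul hα0]
        _ = ENNReal.ofReal Eh0 := by
            congr 1
            rw [hEh0]
            have hne : (1:ℝ)-α ≠ 0 := ne_of_gt h1α
            have hEG : α*V/(1-α) + V = V/(1-α) := by
              rw [div_add' _ _ _ hne]
              congr 1
              ring
            rw [hEG, mul_div_assoc']
  -- L¹ bound on total error
  have haaL1 : ∀ t, 1 ≤ t → t ≤ T+1 →
      ∫⁻ ω, ENNReal.ofReal ‖aa t ω‖ ∂μpr ≤ ENNReal.ofReal A := by
    intro t ht hle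
    have h2 : eLpNorm (aa t) 2 μpr ≤ ENNReal.ofReal A := by
      have : aa t = fun ω => ehat t ω + eb t ω := by rw [haa]
      rw [this]
      refine le_trans (eLpNorm_add_le (hmehat t ht).aestronglyMeasurable
        (hmeb t ht).aestronglyMeasurable (by norm_num)) ?_
      calc eLpNorm (ehat t) 2 μpr + eLpNorm (eb t) 2 μpr
          ≤ ENNReal.ofReal Eh0 + ENNReal.ofReal E0 :=
            add_le_add (hehatL2 t ht hle) (hebL2 t ht hle)
        _ = ENNReal.ofReal A := by
            rw [← ENNReal.ofReal_add hEh0nn hE0nn]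
            congr 1
            rw [hA]; ring
    have h1 : ∫⁻ ω, ENNReal.ofReal ‖aa t ω‖ ∂μpr = eLpNorm (aa t) 1 μpr := by
      rw [eLpNorm_one_eq_lintegral_enorm]
      exact lintegral_congr fun ω => ofReal_norm _
    rw [h1]
    exact le_trans (eLpNorm_le_eLpNorm_of_exponent_le (by norm_num)
      (hma t ht).aestronglyMeasurable) h2
  -- pointwise regret bound
  have hbound : ∀ ω, (n : ℝ)⁻¹ * ∑ t ∈ Finset.Icc 1 T, ∑ i ∈ Finset.Icc 1 n, f i t (w t ω)
      - (⨅ u : W, (n : ℝ)⁻¹ * ∑ t ∈ Finset.Icc 1 T, ∑ i ∈ Finset.Icc 1 n, f i t u)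
      ≤ (∑ t ∈ Finset.Icc 1 T, 4*G*(G+μ*D)/(μ*t))
        + ∑ t ∈ Finset.Icc 2 T, 2*G/(μ*((t:ℝ)-1)) * ‖aa t ω‖ := by
    intro ω
    obtain ⟨L, hLd⟩ : ∃ L : ℕ → EuclideanSpace ℝ (Fin d) → ℝ,
        L = fun t u => (n:ℝ)⁻¹ * ∑ i ∈ Finset.Icc 1 n, f i t u := ⟨_, rfl⟩
    have hLprop : ∀ t ∈ Finset.Icc 1 T, ∀ u ∈ W,
        L t (w t ω) - L t u ≤ ⟪g t ω, w t ω - u⟫ - μ/2 * ‖u - w t ω‖^2 := by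
      intro t ht u hu
      have hwtW' : w t ω ∈ W :=
        hwtW t (by simp only [Finset.mem_Icc] at ht ⊢; omega) ω
      have hper : ∀ i ∈ Finset.Icc 1 n, f i t (w t ω) - f i t u
          ≤ ⟪gradient (f i t) (w t ω), w t ω - u⟫ - μ/2 * ‖u - w t ω‖^2 := by
        intro i hi
        have h := hsc i hi t ht (w t ω) hwtW' u hu
        have hneg : ⟪gradient (f i t) (w t ω), u - w t ω⟫
            = -⟪gradient (f i t) (w t ω), w t ω - u⟫ := by
          rw [← inner_neg_right]
          congr 1
          abel
        rw [hneg] at h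
        linarith
      have hsum := Finset.sum_le_sum hper
      rw [Finset.sum_sub_distrib, Finset.sum_sub_distrib, Finset.sum_const,
        Nat.card_Icc, Nat.add_sub_cancel] at hsum
      have hinner : ⟪g t ω, w t ω - u⟫
          = (n:ℝ)⁻¹ * ∑ i ∈ Finset.Icc 1 n, ⟪gradient (f i t) (w t ω), w t ω - u⟫ := by
        rw [hg]
        simp only
        rw [real_inner_smul_left, sum_inner]
      have hmul := mul_le_mul_of_nonneg_left hsum (by positivity : (0:ℝ) ≤ (n:ℝ)⁻¹)
      rw [hLd]
      simp only
      rw [hinner]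
      rw [mul_sub, mul_sub] at hmul
      have hcancel : (n:ℝ)⁻¹ * ((n:ℕ) • (μ/2 * ‖u - w t ω‖^2)) = μ/2 * ‖u - w t ω‖^2 := by
        rw [nsmul_eq_mul, ← mul_assoc, ← mul_assoc]
        rw [inv_mul_cancel₀ hn0, one_mul]
      rw [hcancel] at hmul
      linarith [hmul]
    have hdet : ∀ u ∈ W,
        ∑ t ∈ Finset.Icc 1 T, (L t (w t ω) - L t u)
        ≤ ∑ t ∈ Finset.Icc 1 T, 4*G*(G+μ*D)/(μ*t)
          + ∑ t ∈ Finset.Icc 2 T, 2*G*‖aa t ω‖/(μ*((t:ℝ)-1)) := by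
      intro u hu
      exact det_bound hWcpt hWconv hW0 hG.le hμ hD.le hdiam hT
        (fun t => w t ω) (fun t => g t ω) (fun t => s t ω) (fun t => aa t ω) L
        (fun t ht => hwtW t ht ω)
        (by show w 1 ω = 0; rw [hw1])
        (fun t ht => hgG t ht ω)
        (fun t ht => hsid ω t (by simp only [Finset.mem_Icc] at ht; omega))
        hLprop
        (fun t ht u' hu' => hupdate t ht ω u' hu')
        u hu
    have hB : ∑ t ∈ Finset.Icc 2 T, 2*G*‖aa t ω‖/(μ*((t:ℝ)-1))
        = ∑ t ∈ Finset.Icc 2 T, 2*G/(μ*((t:ℝ)-1)) * ‖aa t ω‖ :=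
      Finset.sum_congr rfl fun t _ => by ring
    have hsum_eq : (n : ℝ)⁻¹ * ∑ t ∈ Finset.Icc 1 T, ∑ i ∈ Finset.Icc 1 n, f i t (w t ω)
        = ∑ t ∈ Finset.Icc 1 T, L t (w t ω) := by
      rw [Finset.mul_sum, hLd]
    have hinf : (n : ℝ)⁻¹ * ∑ t ∈ Finset.Icc 1 T, ∑ i ∈ Finset.Icc 1 n, f i t (w t ω)
        - ((∑ t ∈ Finset.Icc 1 T, 4*G*(G+μ*D)/(μ*t))
          + ∑ t ∈ Finset.Icc 2 T, 2*G/(μ*((t:ℝ)-1)) * ‖aa t ω‖)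
        ≤ ⨅ u : W, (n : ℝ)⁻¹ * ∑ t ∈ Finset.Icc 1 T, ∑ i ∈ Finset.Icc 1 n, f i t u := by
      refine le_ciInf fun u => ?_
      have h1 := hdet u.1 u.2
      rw [hB] at h1
      have h2 : (n : ℝ)⁻¹ * ∑ t ∈ Finset.Icc 1 T, ∑ i ∈ Finset.Icc 1 n, f i t u.1
          = ∑ t ∈ Finset.Icc 1 T, L t u.1 := by
        rw [Finset.mul_sum, hLd]
      rw [hsum_eq, h2]
      rw [Finset.sum_sub_distrib] at h1
      linarith
    linarith [hinf]
  -- coefficients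
  obtain ⟨C0, hC0⟩ : ∃ x : ℝ, x = ∑ t ∈ Finset.Icc 1 T, 4*G*(G+μ*D)/(μ*t) := ⟨_, rfl⟩
  obtain ⟨ct, hct⟩ : ∃ ct : ℕ → ℝ, ct = fun t : ℕ => 2*G/(μ*((t:ℝ)-1)) := ⟨_, rfl⟩
  have hC0nn : 0 ≤ C0 := by
    rw [hC0]
    refine Finset.sum_nonneg fun t ht => ?_
    have : (0:ℝ) ≤ (t:ℝ) := Nat.cast_nonneg t
    positivity
  have hctnn : ∀ t ∈ Finset.Icc 2 T, 0 ≤ ct t := by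
    intro t ht
    simp only [Finset.mem_Icc] at ht
    have h2 : (2:ℝ) ≤ (t:ℝ) := by exact_mod_cast ht.1
    rw [hct]
    have : (0:ℝ) < μ * ((t:ℝ)-1) := by nlinarith
    positivity
  -- the main integral estimate
  have hmeasaa : ∀ t ∈ Finset.Icc 2 T, Measurable fun ω => ENNReal.ofReal (ct t * ‖aa t ω‖) := by
    intro t ht
    simp only [Finset.mem_Icc] at ht
    exact (((hma t (by omega)).norm).const_mul _).ennreal_ofReal
  calc ∫⁻ ω, ENNReal.ofReal
        ((n : ℝ)⁻¹ * ∑ t ∈ Finset.Icc 1 T, ∑ i ∈ Finset.Icc 1 n, f i t (w t ω)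
          - ⨅ u : W, (n : ℝ)⁻¹ * ∑ t ∈ Finset.Icc 1 T, ∑ i ∈ Finset.Icc 1 n, f i t u) ∂μpr
      ≤ ∫⁻ ω, (ENNReal.ofReal C0
          + ∑ t ∈ Finset.Icc 2 T, ENNReal.ofReal (ct t * ‖aa t ω‖)) ∂μpr := by
        refine lintegral_mono fun ω => ?_
        have h1 := hbound ω
        rw [← hC0] at h1
        calc ENNReal.ofReal _
            ≤ ENNReal.ofReal (C0 + ∑ t ∈ Finset.Icc 2 T, ct t * ‖aa t ω‖) := by
              refine ENNReal.ofReal_le_ofReal ?_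
              refine h1.trans (le_of_eq ?_)
              congr 1
              exact Finset.sum_congr rfl fun t _ => by rw [hct]
          _ = ENNReal.ofReal C0 + ∑ t ∈ Finset.Icc 2 T, ENNReal.ofReal (ct t * ‖aa t ω‖) := by
              rw [ENNReal.ofReal_add hC0nn (Finset.sum_nonneg fun t ht =>
                mul_nonneg (hctnn t ht) (norm_nonneg _))]
              congr 1
              exact ENNReal.ofReal_sum_of_nonneg fun t ht =>
                mul_nonneg (hctnn t ht) (norm_nonneg _)
    _ = ENNReal.ofReal C0
        + ∑ t ∈ Finset.Icc 2 T, ∫⁻ ω, ENNReal.ofReal (ct t * ‖aa t ω‖) ∂μpr := by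
        rw [lintegral_add_left measurable_const]
        rw [lintegral_const, measure_univ, mul_one]
        congr 1
        exact lintegral_finset_sum _ hmeasaa
    _ ≤ ENNReal.ofReal C0 + ∑ t ∈ Finset.Icc 2 T, ENNReal.ofReal (ct t * A) := by
        refine add_le_add_right (Finset.sum_le_sum fun t ht => ?_) _
        simp only [Finset.mem_Icc] at ht
        calc ∫⁻ ω, ENNReal.ofReal (ct t * ‖aa t ω‖) ∂μpr
            = ENNReal.ofReal (ct t) * ∫⁻ ω, ENNReal.ofReal ‖aa t ω‖ ∂μpr := by
              rw [← lintegral_const_mul _ ((hma t (by omega)).norm.ennreal_ofReal)]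
              refine lintegral_congr fun ω => ?_
              rw [← ENNReal.ofReal_mul (hctnn t (by simp only [Finset.mem_Icc]; omega))]
          _ ≤ ENNReal.ofReal (ct t) * ENNReal.ofReal A :=
              mul_le_mul_right (haaL1 t (by omega) (by omega)) _
          _ = ENNReal.ofReal (ct t * A) :=
              (ENNReal.ofReal_mul (hctnn t (by simp only [Finset.mem_Icc]; omega))).symm
    _ ≤ ENNReal.ofReal (17 * (G + μ * D) ^ 2 * (1 + Real.log T) / (μ * δ ^ 2)) := by
        rw [← ENNReal.ofReal_sum_of_nonneg (fun t ht =>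
          mul_nonneg (hctnn t ht) hAnn)]
        rw [← ENNReal.ofReal_add hC0nn (Finset.sum_nonneg fun t ht =>
          mul_nonneg (hctnn t ht) hAnn)]
        refine ENNReal.ofReal_le_ofReal ?_
        -- final real-number estimate
        have hTlog : (0:ℝ) ≤ Real.log T := Real.log_nonneg (by exact_mod_cast hT)
        have hH1 : ∑ t ∈ Finset.Icc 1 T, (1:ℝ)/t ≤ 1 + Real.log T := harmonic_le_log T hT
        have hC0le : C0 ≤ (4*G*(G+μ*D)/μ) * (1 + Real.log T) := by
          rw [hC0]
          have hcong : ∀ t ∈ Finset.Icc 1 T, 4*G*(G+μ*D)/(μ*t) = (4*G*(G+μ*D)/μ) * (1/t) := by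
            intro t ht
            simp only [Finset.mem_Icc] at ht
            have ht0 : (t:ℝ) ≠ 0 := by
              have : (1:ℝ) ≤ (t:ℝ) := by exact_mod_cast ht.1
              linarith
            field_simp
          rw [Finset.sum_congr rfl hcong, ← Finset.mul_sum]
          have hcoef : (0:ℝ) ≤ 4*G*(G+μ*D)/μ := by positivity
          exact mul_le_mul_of_nonneg_left hH1 hcoef
        have hsumc : ∑ t ∈ Finset.Icc 2 T, ct t * A ≤ (2*G/μ) * A * (1 + Real.log T) := by
          have hcong : ∀ t ∈ Finset.Icc 2 T, ct t * A = ((2*G/μ) * A) * (1/((t:ℝ)-1)) := by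
            intro t ht
            simp only [Finset.mem_Icc] at ht
            have h2 : (2:ℝ) ≤ (t:ℝ) := by exact_mod_cast ht.1
            have ht1 : (t:ℝ) - 1 ≠ 0 := by linarith
            rw [hct]
            field_simp
          rw [Finset.sum_congr rfl hcong, ← Finset.mul_sum]
          have hre : ∑ t ∈ Finset.Icc 2 T, (1:ℝ)/((t:ℝ)-1) ≤ 1 + Real.log T := by
            have hmap : ∑ t ∈ Finset.Icc 2 T, (1:ℝ)/((t:ℝ)-1)
                = ∑ t ∈ Finset.Icc 1 (T-1), (1:ℝ)/t := by
              rw [show Finset.Icc 2 T = Finset.map (addRightEmbedding 1) (Finset.Icc 1 (T-1)) by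
                rw [Finset.map_add_right_Icc]
                congr 1
                omega]
              rw [Finset.sum_map]
              refine Finset.sum_congr rfl fun x hx => ?_
              simp only [addRightEmbedding_apply]
              push_cast
              norm_num
            rw [hmap]
            rcases Nat.lt_or_ge T 2 with h2 | h2
            · have : T = 1 := by omega
              subst this
              simp [hTlog]
            · have h1T : 1 ≤ T - 1 := by omega
              refine (harmonic_le_log (T-1) h1T).trans ?_
              have : Real.log ((T:ℝ)-1) ≤ Real.log T := by
                refine Real.log_le_log (by
                  have : (2:ℝ) ≤ (T:ℝ) := by exact_mod_cast h2
                  linarith) (by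
                  have : (2:ℝ) ≤ (T:ℝ) := by exact_mod_cast h2
                  linarith)
              have hcast : ((T-1:ℕ):ℝ) = (T:ℝ) - 1 := by
                push_cast [Nat.cast_sub (by omega : 1 ≤ T)]
                ring
              rw [hcast]
              linarith
          have hcoef : (0:ℝ) ≤ (2*G/μ) * A := by positivity
          exact mul_le_mul_of_nonneg_left hre hcoef
        -- algebraic inequality on coefficients
        have hkey : 4*G*(G+μ*D) + 2*G*A ≤ 17*(G+μ*D)^2/δ^2 := by
          rw [le_div_iff₀ (by positivity : (0:ℝ) < δ^2)]
          have hδα : δ = 1-α^2 := by linarith [hα2]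
          have hAd : A*δ^2 = 2*α*(1+α)^2*G := by
            have hδeq : δ = (1-α)*(1+α) := by nlinarith [hα2]
            rw [hA, hEh0, hV, hE0, hδeq]
            field_simp
            ring
          have hpoly := alpha_poly hα0 hα1.le
          have hGle : G ≤ G+μ*D := by nlinarith [hμ.le, hD.le]
          have hstep1 : (4*G*(G+μ*D) + 2*G*A)*δ^2
              = 4*G*(G+μ*D)*(1-α^2)^2 + 2*G*(A*δ^2) := by
            rw [← hδα]; ring
          rw [hstep1, hAd]
          have h1 : 4*G*(G+μ*D)*(1-α^2)^2 ≤ 4*(G+μ*D)*(G+μ*D)*(1-α^2)^2 := by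
            have hhint : (0:ℝ) ≤ (4*(G+μ*D)*(1-α^2)^2)*(μ*D) :=
              mul_nonneg (mul_nonneg (by positivity) (sq_nonneg _)) (by positivity)
            nlinarith [hhint]
          have h2 : 2*G*(2*α*(1+α)^2*G) ≤ 4*α*(1+α)^2*(G+μ*D)^2 := by
            have hfac : (0:ℝ) ≤ 4*α*(1+α)^2 := by positivity
            have hGsq : G^2 ≤ (G+μ*D)^2 := by nlinarith [hG.le, hGle]
            nlinarith [mul_le_mul_of_nonneg_left hGsq hfac]
          have h3 : 4*(G+μ*D)*(G+μ*D)*(1-α^2)^2 + 4*α*(1+α)^2*(G+μ*D)^2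
              = (G+μ*D)^2 * (4*(1-α^2)^2 + 4*α*(1+α)^2) := by ring
          have h4 : (G+μ*D)^2 * (4*(1-α^2)^2 + 4*α*(1+α)^2) ≤ (G+μ*D)^2 * 16 :=
            mul_le_mul_of_nonneg_left hpoly (by positivity)
          nlinarith [h1, h2, h3, h4, sq_nonneg (G+μ*D)]
        -- combine
        have hK : (0:ℝ) ≤ 1 + Real.log T := by linarith
        calc C0 + ∑ t ∈ Finset.Icc 2 T, ct t * A
            ≤ (4*G*(G+μ*D)/μ) * (1 + Real.log T) + (2*G/μ) * A * (1 + Real.log T) :=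
              add_le_add hC0le hsumc
          _ = ((4*G*(G+μ*D) + 2*G*A)/μ) * (1 + Real.log T) := by ring
          _ ≤ ((17*(G+μ*D)^2/δ^2)/μ) * (1 + Real.log T) := by
              refine mul_le_mul_of_nonneg_right ?_ hK
              gcongr
          _ = 17 * (G + μ * D) ^ 2 * (1 + Real.log T) / (μ * δ ^ 2) := by
              field_simp
end
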